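/- arXiv:1712.02182 — 10 statements merged into one kernel-verified Lean document; each statement's English description precedes it below -/
import Mathlib

section
/- Let h be a probability weighting function that is three times continuously differentiable on (0,1). Suppose that for every n ≥ 3, every equiprobable n-state lottery x : {1,…,n} → ℝ (nondecreasing with nonnegative values), every integer j with 0 ≤ j ≤ n − 3, and every real M > 0 such that the map D defined by D(j+1) = x(j+1) + 1/M, D(j+2) = x(j+2) − 2/M, D(j+3) = x(j+3) + 1/M, and D(i) = x(i) for all other i, is nondecreasing with nonnegative values, it holds that V_h(D) ≥ V_h(x). Then h''' ≥ 0 on (0,1). If instead V_h(D) ≤ V_h(x) always holds for this class, then h''' ≤ 0 on (0,1). -/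
open Finset

/-- Dual-theory (DT) evaluation of an equiprobable `n`-state lottery `x`
under the probability weighting function `h`. -/
noncomputable def dtValue (h : ℝ → ℝ) (n : ℕ) (x : ℕ → ℝ) : ℝ :=
  ∑ i ∈ Finset.Icc 1 n, x i * (h ((i : ℝ) / n) - h (((i : ℝ) - 1) / n))

lemma mvt_step (g g' : ℝ → ℝ) (a d : ℝ) (hd : 0 < d)
    (hg : ∀ y ∈ Set.Icc a (a + d), HasDerivAt g (g' y) y) :
    ∃ c ∈ Set.Ioo a (a + d), g (a + d) - g a = d * g' c := by
  have hab : a < a + d := by linarith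
  obtain ⟨c, hc, hc2⟩ := exists_hasDerivAt_eq_slope g g' hab
    (fun y hy => (hg y hy).continuousAt.continuousWithinAt)
    (fun y hy => hg y ⟨hy.1.le, hy.2.le⟩)
  refine ⟨c, hc, ?_⟩
  rw [hc2]
  rw [show a + d - a = d by ring]
  field_simp

lemma third_diff_eq (f f1 f2 f3 : ℝ → ℝ) (a d : ℝ) (hd : 0 < d)
    (hf : ∀ y ∈ Set.Icc a (a + 3*d), HasDerivAt f (f1 y) y)
    (hf1 : ∀ y ∈ Set.Icc a (a + 3*d), HasDerivAt f1 (f2 y) y)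
    (hf2 : ∀ y ∈ Set.Icc a (a + 3*d), HasDerivAt f2 (f3 y) y) :
    ∃ ξ ∈ Set.Ioo a (a + 3*d),
      f (a + 3*d) - 3 * f (a + 2*d) + 3 * f (a + d) - f a = d^3 * f3 ξ := by
  -- step 1
  obtain ⟨c₁, hc₁, e₁⟩ := mvt_step (fun t => f (t + 2*d) - 2 * f (t + d) + f t)
      (fun t => f1 (t + 2*d) - 2 * f1 (t + d) + f1 t) a d hd (by
    intro t ht
    have m1 : t + 2*d ∈ Set.Icc a (a + 3*d) := ⟨by linarith [ht.1], by linarith [ht.2]⟩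
    have m2 : t + d ∈ Set.Icc a (a + 3*d) := ⟨by linarith [ht.1], by linarith [ht.2]⟩
    have m3 : t ∈ Set.Icc a (a + 3*d) := ⟨ht.1, by linarith [ht.2]⟩
    have d1 : HasDerivAt (fun t => f (t + 2*d)) (f1 (t + 2*d)) t := by
      exact HasDerivAt.comp_add_const t (2*d) (hf _ m1)
    have d2 : HasDerivAt (fun t => f (t + d)) (f1 (t + d)) t := by
      exact HasDerivAt.comp_add_const t d (hf _ m2)
    exact (d1.sub (d2.const_mul 2)).add (hf _ m3))
  -- step 2
  obtain ⟨c₂, hc₂, e₂⟩ := mvt_step (fun t => f1 (t + d) - f1 t)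
      (fun t => f2 (t + d) - f2 t) c₁ d hd (by
    intro t ht
    have m1 : t + d ∈ Set.Icc a (a + 3*d) := ⟨by nlinarith [ht.1, hc₁.1], by nlinarith [ht.2, hc₁.2]⟩
    have m2 : t ∈ Set.Icc a (a + 3*d) := ⟨by nlinarith [ht.1, hc₁.1], by nlinarith [ht.2, hc₁.2]⟩
    have d1 : HasDerivAt (fun t => f1 (t + d)) (f2 (t + d)) t := by
      exact HasDerivAt.comp_add_const t d (hf1 _ m1)
    exact d1.sub (hf1 _ m2))
  -- step 3
  obtain ⟨ξ, hξ, e₃⟩ := mvt_step f2 f3 c₂ d hd (by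
    intro t ht
    exact hf2 _ ⟨by nlinarith [ht.1, hc₂.1, hc₁.1], by nlinarith [ht.2, hc₂.2, hc₁.2]⟩)
  refine ⟨ξ, ⟨by nlinarith [hξ.1, hc₂.1, hc₁.1], by nlinarith [hξ.2, hc₂.2, hc₁.2]⟩, ?_⟩
  have key1 : f (a + 3*d) - 3 * f (a + 2*d) + 3 * f (a + d) - f a
      = (f (a + d + 2*d) - 2 * f (a + d + d) + f (a + d)) - (f (a + 2*d) - 2 * f (a + d) + f a) := by
    ring_nf
  have key2 : f1 (c₁ + 2*d) - 2 * f1 (c₁ + d) + f1 c₁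
      = (f1 (c₁ + d + d) - f1 (c₁ + d)) - (f1 (c₁ + d) - f1 c₁) := by ring_nf
  rw [key1, e₁, key2, e₂, e₃]
  ring

lemma sign_of_grid (f : ℝ → ℝ) (hf : ContDiffOn ℝ 3 f (Set.Ioo 0 1))
    (q : ℝ) (hq : q ∈ Set.Ioo (0:ℝ) 1)
    (hT : ∀ n : ℕ, 3 ≤ n → ∀ j : ℕ, j + 3 ≤ n →
      0 ≤ f (((j:ℝ)+3)/n) - 3 * f (((j:ℝ)+2)/n) + 3 * f (((j:ℝ)+1)/n) - f ((j:ℝ)/n)) :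
    0 ≤ deriv (deriv (deriv f)) q := by
  have hs : IsOpen (Set.Ioo (0:ℝ) 1) := isOpen_Ioo
  rw [show (3 : WithTop ℕ∞) = 2 + 1 by norm_num] at hf
  have h1 := (contDiffOn_succ_iff_deriv_of_isOpen hs).mp hf
  rw [show (2 : WithTop ℕ∞) = 1 + 1 by norm_num] at h1
  have h2 := (contDiffOn_succ_iff_deriv_of_isOpen hs).mp h1.2.2
  rw [show (1 : WithTop ℕ∞) = 0 + 1 by norm_num] at h2
  have h3 := (contDiffOn_succ_iff_deriv_of_isOpen hs).mp h2.2.2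
  have hcont : ContinuousOn (deriv (deriv (deriv f))) (Set.Ioo 0 1) := contDiffOn_zero.mp h3.2.2
  have hder : ∀ y ∈ Set.Ioo (0:ℝ) 1, HasDerivAt f (deriv f y) y :=
    fun y hy => (h1.1.differentiableAt (hs.mem_nhds hy)).hasDerivAt
  have hder2 : ∀ y ∈ Set.Ioo (0:ℝ) 1, HasDerivAt (deriv f) (deriv (deriv f) y) y :=
    fun y hy => (h2.1.differentiableAt (hs.mem_nhds hy)).hasDerivAt
  have hder3 : ∀ y ∈ Set.Ioo (0:ℝ) 1, HasDerivAt (deriv (deriv f)) (deriv (deriv (deriv f)) y) y :=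
    fun y hy => (h3.1.differentiableAt (hs.mem_nhds hy)).hasDerivAt
  by_contra hneg
  push_neg at hneg
  -- neighborhood where third derivative is negative
  have hat : ContinuousAt (deriv (deriv (deriv f))) q := hcont.continuousAt (hs.mem_nhds hq)
  have hmem : {y | deriv (deriv (deriv f)) y < 0} ∩ Set.Ioo 0 1 ∈ nhds q := by
    refine Filter.inter_mem ?_ (hs.mem_nhds hq)
    exact hat (Iio_mem_nhds hneg)
  obtain ⟨δ, hδ, hball⟩ := Metric.mem_nhds_iff.mp hmem
  -- choose n and j
  set n : ℕ := max 3 (⌈3/δ⌉₊ + 1) with hn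
  have hn3 : 3 ≤ n := le_max_left _ _
  have hn0 : (0:ℝ) < n := by positivity
  have hnδ : 3 / (n:ℝ) < δ := by
    have h1' : (3:ℝ)/δ < n := by
      have : (⌈3/δ⌉₊ + 1 : ℕ) ≤ n := le_max_right _ _
      have := Nat.le_ceil (3/δ)
      push_cast at this ⊢
      calc (3:ℝ)/δ ≤ ⌈3/δ⌉₊ := Nat.le_ceil _
        _ < ⌈3/δ⌉₊ + 1 := by linarith
        _ ≤ n := by exact_mod_cast le_max_right 3 (⌈3/δ⌉₊ + 1)
    rw [div_lt_iff₀ hn0]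
    rw [div_lt_iff₀ hδ] at h1'
    linarith
  set j : ℕ := ⌊q * n⌋₊ with hj
  have hq0 : 0 < q := hq.1
  have hjle : (j:ℝ) ≤ q * n := Nat.floor_le (by positivity)
  have hjgt : q * n < (j:ℝ) + 1 := Nat.lt_floor_add_one _
  -- all points in [j/n, (j+3)/n] are in the ball
  have hmemball : ∀ t : ℝ, (j:ℝ)/n ≤ t → t ≤ ((j:ℝ)+3)/n → t ∈ Metric.ball q δ := by
    intro t h1t h2t
    rw [Metric.mem_ball, Real.dist_eq, abs_sub_lt_iff]
    rw [div_le_iff₀ hn0] at h1t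
    rw [le_div_iff₀ hn0] at h2t
    have hnδ' : 3 < δ * n := (div_lt_iff₀ hn0).mp hnδ
    constructor <;> nlinarith [mul_pos hδ hn0]
  have hballs : ∀ t : ℝ, (j:ℝ)/n ≤ t → t ≤ ((j:ℝ)+3)/n →
      deriv (deriv (deriv f)) t < 0 ∧ t ∈ Set.Ioo (0:ℝ) 1 :=
    fun t h1t h2t => hball (hmemball t h1t h2t)
  have hjn : j + 3 ≤ n := by
    have := (hballs (((j:ℝ)+3)/n) (by
      rw [div_le_div_iff₀ hn0 hn0]; nlinarith) le_rfl).2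
    have h2 := this.2
    rw [div_lt_one hn0] at h2
    have : (j:ℝ) + 3 < n := h2
    exact_mod_cast this.le
  -- apply MVT
  have hIcc : ∀ y ∈ Set.Icc ((j:ℝ)/n) ((j:ℝ)/n + 3*(1/n)), y ∈ Set.Ioo (0:ℝ) 1 := by
    intro y hy
    exact (hballs y hy.1 (by rw [show (j:ℝ)/n + 3*(1/n) = ((j:ℝ)+3)/n by ring] at hy; exact hy.2)).2
  obtain ⟨ξ, hξ, eξ⟩ := third_diff_eq f (deriv f) (deriv (deriv f)) (deriv (deriv (deriv f)))
    ((j:ℝ)/n) (1/n) (by positivity)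
    (fun y hy => hder y (hIcc y hy)) (fun y hy => hder2 y (hIcc y hy))
    (fun y hy => hder3 y (hIcc y hy))
  have hT' := hT n hn3 j hjn
  have e1 : (j:ℝ)/n + 3*(1/n) = ((j:ℝ)+3)/n := by ring
  have e2 : (j:ℝ)/n + 2*(1/n) = ((j:ℝ)+2)/n := by ring
  have e3 : (j:ℝ)/n + 1/n = ((j:ℝ)+1)/n := by ring
  rw [e1, e2, e3] at eξ
  have hξneg : deriv (deriv (deriv f)) ξ < 0 := by
    refine (hballs ξ hξ.1.le ?_).1
    rw [← e1]; exact hξ.2.le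
  have : (1/(n:ℝ))^3 * deriv (deriv (deriv f)) ξ < 0 := by
    apply mul_neg_of_pos_of_neg (by positivity) hξneg
  linarith [eξ ▸ hT']


lemma dtValue_perturb (h : ℝ → ℝ) (n j : ℕ) (x : ℕ → ℝ) (c₁ c₂ c₃ : ℝ) (hj : j + 3 ≤ n) :
    dtValue h n (fun i => x i + (if i = j + 1 then c₁ else 0)
        - (if i = j + 2 then c₂ else 0) + (if i = j + 3 then c₃ else 0))
      = dtValue h n x
        + c₁ * (h (((j:ℝ)+1)/n) - h ((j:ℝ)/n))
        - c₂ * (h (((j:ℝ)+2)/n) - h (((j:ℝ)+1)/n))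
        + c₃ * (h (((j:ℝ)+3)/n) - h (((j:ℝ)+2)/n)) := by
  have hsum : ∀ (k : ℕ) (c : ℝ), k ∈ Finset.Icc 1 n →
      ∑ i ∈ Finset.Icc 1 n, (if i = k then c else 0)
          * (h ((i : ℝ) / n) - h (((i : ℝ) - 1) / n))
        = c * (h ((k : ℝ) / n) - h (((k : ℝ) - 1) / n)) := by
    intro k c hk
    simp only [ite_mul, zero_mul]
    rw [Finset.sum_ite_eq' (Finset.Icc 1 n) k]
    simp [hk]
  have m1 : j + 1 ∈ Finset.Icc 1 n := by simp [Finset.mem_Icc]; omega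
  have m2 : j + 2 ∈ Finset.Icc 1 n := by simp [Finset.mem_Icc]; omega
  have m3 : j + 3 ∈ Finset.Icc 1 n := by simp [Finset.mem_Icc]; omega
  unfold dtValue
  simp only [add_mul, sub_mul]
  rw [Finset.sum_add_distrib, Finset.sum_sub_distrib, Finset.sum_add_distrib,
    hsum _ c₁ m1, hsum _ c₂ m2, hsum _ c₃ m3]
  push_cast
  rw [show ((j:ℝ) + 1 - 1) = (j:ℝ) by ring, show ((j:ℝ) + 2 - 1) = (j:ℝ) + 1 by ring,
    show ((j:ℝ) + 3 - 1) = (j:ℝ) + 2 by ring]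

lemma grid_ineq (h : ℝ → ℝ) (n j : ℕ) (hn : 3 ≤ n) (hj : j + 3 ≤ n)
    (H : ∀ x : ℕ → ℝ,
        (∀ i k, 1 ≤ i → i ≤ k → k ≤ n → x i ≤ x k) →
        (∀ i, 1 ≤ i → i ≤ n → 0 ≤ x i) →
        ∀ M : ℝ, 0 < M → ∀ D : ℕ → ℝ,
        (∀ i, D i = x i + (if i = j + 1 then 1 / M else 0)
            - (if i = j + 2 then 2 / M else 0) + (if i = j + 3 then 1 / M else 0)) →
        (∀ i k, 1 ≤ i → i ≤ k → k ≤ n → D i ≤ D k) →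
        (∀ i, 1 ≤ i → i ≤ n → 0 ≤ D i) →
        dtValue h n x ≤ dtValue h n D) :
    0 ≤ h (((j:ℝ)+3)/n) - 3 * h (((j:ℝ)+2)/n) + 3 * h (((j:ℝ)+1)/n) - h ((j:ℝ)/n) := by
  set x : ℕ → ℝ := fun i => (i:ℝ) with hx
  set D : ℕ → ℝ := fun i => x i + (if i = j + 1 then 1 / (3:ℝ) else 0)
      - (if i = j + 2 then 2 / (3:ℝ) else 0) + (if i = j + 3 then 1 / (3:ℝ) else 0) with hD
  have hDlb : ∀ i : ℕ, (i:ℝ) - 2/3 ≤ D i := by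
    intro i
    simp only [hD, hx]
    split_ifs <;> linarith
  have hDub : ∀ i : ℕ, D i ≤ (i:ℝ) + 1/3 := by
    intro i
    simp only [hD, hx]
    split_ifs with e1 e2 e3 <;> first | omega | linarith
  have hxmono : ∀ i k : ℕ, 1 ≤ i → i ≤ k → k ≤ n → x i ≤ x k :=
    fun i k _ hik _ => by simp only [hx]; exact_mod_cast hik
  have hxpos : ∀ i : ℕ, 1 ≤ i → i ≤ n → 0 ≤ x i :=
    fun i _ _ => by simp only [hx]; positivity
  have hDdef : ∀ i, D i = x i + (if i = j + 1 then 1 / (3:ℝ) else 0)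
      - (if i = j + 2 then 2 / (3:ℝ) else 0) + (if i = j + 3 then 1 / (3:ℝ) else 0) :=
    fun i => rfl
  clear_value x D
  have hle := H x hxmono hxpos 3 (by norm_num) D hDdef
    (by
      intro i k h1 hik hkn
      rcases eq_or_lt_of_le hik with rfl | hlt
      · exact le_rfl
      · have hik' : (i:ℝ) + 1 ≤ k := by exact_mod_cast hlt
        linarith [hDub i, hDlb k])
    (by
      intro i h1 _
      have h1' : (1:ℝ) ≤ i := by exact_mod_cast h1
      linarith [hDlb i])
  rw [hD, dtValue_perturb h n j x (1/3) (2/3) (1/3) hj] at hle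
  linarith

lemma grid_ineq_rev (h : ℝ → ℝ) (n j : ℕ) (hn : 3 ≤ n) (hj : j + 3 ≤ n)
    (H : ∀ x : ℕ → ℝ,
        (∀ i k, 1 ≤ i → i ≤ k → k ≤ n → x i ≤ x k) →
        (∀ i, 1 ≤ i → i ≤ n → 0 ≤ x i) →
        ∀ M : ℝ, 0 < M → ∀ D : ℕ → ℝ,
        (∀ i, D i = x i + (if i = j + 1 then 1 / M else 0)
            - (if i = j + 2 then 2 / M else 0) + (if i = j + 3 then 1 / M else 0)) →
        (∀ i k, 1 ≤ i → i ≤ k → k ≤ n → D i ≤ D k) →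
        (∀ i, 1 ≤ i → i ≤ n → 0 ≤ D i) →
        dtValue h n D ≤ dtValue h n x) :
    h (((j:ℝ)+3)/n) - 3 * h (((j:ℝ)+2)/n) + 3 * h (((j:ℝ)+1)/n) - h ((j:ℝ)/n) ≤ 0 := by
  set x : ℕ → ℝ := fun i => (i:ℝ) with hx
  set D : ℕ → ℝ := fun i => x i + (if i = j + 1 then 1 / (3:ℝ) else 0)
      - (if i = j + 2 then 2 / (3:ℝ) else 0) + (if i = j + 3 then 1 / (3:ℝ) else 0) with hD
  have hDlb : ∀ i : ℕ, (i:ℝ) - 2/3 ≤ D i := by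
    intro i
    simp only [hD, hx]
    split_ifs <;> linarith
  have hDub : ∀ i : ℕ, D i ≤ (i:ℝ) + 1/3 := by
    intro i
    simp only [hD, hx]
    split_ifs with e1 e2 e3 <;> first | omega | linarith
  have hxmono : ∀ i k : ℕ, 1 ≤ i → i ≤ k → k ≤ n → x i ≤ x k :=
    fun i k _ hik _ => by simp only [hx]; exact_mod_cast hik
  have hxpos : ∀ i : ℕ, 1 ≤ i → i ≤ n → 0 ≤ x i :=
    fun i _ _ => by simp only [hx]; positivity
  have hDdef : ∀ i, D i = x i + (if i = j + 1 then 1 / (3:ℝ) else 0)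
      - (if i = j + 2 then 2 / (3:ℝ) else 0) + (if i = j + 3 then 1 / (3:ℝ) else 0) :=
    fun i => rfl
  clear_value x D
  have hle := H x hxmono hxpos 3 (by norm_num) D hDdef
    (by
      intro i k h1 hik hkn
      rcases eq_or_lt_of_le hik with rfl | hlt
      · exact le_rfl
      · have hik' : (i:ℝ) + 1 ≤ k := by exact_mod_cast hlt
        linarith [hDub i, hDlb k])
    (by
      intro i h1 _
      have h1' : (1:ℝ) ≤ i := by exact_mod_cast h1
      linarith [hDlb i])
  rw [hD, dtValue_perturb h n j x (1/3) (2/3) (1/3) hj] at hle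
  linarith

lemma iterWithin_eq (h : ℝ → ℝ) (q : ℝ) (hq : q ∈ Set.Ioo (0:ℝ) 1) :
    iteratedDerivWithin 3 h (Set.Ioo 0 1) q = deriv (deriv (deriv h)) q := by
  rw [iteratedDerivWithin_eq_iteratedFDerivWithin,
    iteratedFDerivWithin_of_isOpen 3 isOpen_Ioo hq,
    ← iteratedDeriv_eq_iteratedFDeriv, iteratedDeriv_eq_iterate]
  rfl

/-- Theorem 2 (necessity at the third order): if a DT decision maker always (weakly)
prefers the lottery `D`, obtained from `x` by adding the increments
`(1/M, -2/M, 1/M)` at three consecutive states, to `x` itself, then `h''' ≥ 0` on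
`(0,1)`; if the preference is always reversed, then `h''' ≤ 0` on `(0,1)`. -/
theorem dual_prudence_necessary
    (h : ℝ → ℝ) (h_mono : Monotone h) (h_zero : h 0 = 0) (h_one : h 1 = 1)
    (h_smooth : ContDiffOn ℝ 3 h (Set.Ioo 0 1)) :
    ((∀ n : ℕ, 3 ≤ n → ∀ x : ℕ → ℝ,
        (∀ i j, 1 ≤ i → i ≤ j → j ≤ n → x i ≤ x j) →
        (∀ i, 1 ≤ i → i ≤ n → 0 ≤ x i) →
        ∀ j : ℕ, j + 3 ≤ n → ∀ M : ℝ, 0 < M → ∀ D : ℕ → ℝ,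
        (∀ i, D i = x i + (if i = j + 1 then 1 / M else 0)
            - (if i = j + 2 then 2 / M else 0) + (if i = j + 3 then 1 / M else 0)) →
        (∀ i k, 1 ≤ i → i ≤ k → k ≤ n → D i ≤ D k) →
        (∀ i, 1 ≤ i → i ≤ n → 0 ≤ D i) →
        dtValue h n x ≤ dtValue h n D) →
      ∀ q ∈ Set.Ioo (0:ℝ) 1, 0 ≤ iteratedDerivWithin 3 h (Set.Ioo 0 1) q) ∧
    ((∀ n : ℕ, 3 ≤ n → ∀ x : ℕ → ℝ,
        (∀ i j, 1 ≤ i → i ≤ j → j ≤ n → x i ≤ x j) →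
        (∀ i, 1 ≤ i → i ≤ n → 0 ≤ x i) →
        ∀ j : ℕ, j + 3 ≤ n → ∀ M : ℝ, 0 < M → ∀ D : ℕ → ℝ,
        (∀ i, D i = x i + (if i = j + 1 then 1 / M else 0)
            - (if i = j + 2 then 2 / M else 0) + (if i = j + 3 then 1 / M else 0)) →
        (∀ i k, 1 ≤ i → i ≤ k → k ≤ n → D i ≤ D k) →
        (∀ i, 1 ≤ i → i ≤ n → 0 ≤ D i) →
        dtValue h n D ≤ dtValue h n x) →
      ∀ q ∈ Set.Ioo (0:ℝ) 1, iteratedDerivWithin 3 h (Set.Ioo 0 1) q ≤ 0) := by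
  constructor
  · intro H q hq
    rw [iterWithin_eq h q hq]
    refine sign_of_grid h h_smooth q hq (fun n hn j hj => ?_)
    exact grid_ineq h n j hn hj
      (fun x hm hp M hM D hDdef hDm hDp => H n hn x hm hp j hj M hM D hDdef hDm hDp)
  · intro H q hq
    rw [iterWithin_eq h q hq]
    have hgrid : ∀ n : ℕ, 3 ≤ n → ∀ j : ℕ, j + 3 ≤ n →
        0 ≤ (fun y => -h y) (((j:ℝ)+3)/n) - 3 * (fun y => -h y) (((j:ℝ)+2)/n)
          + 3 * (fun y => -h y) (((j:ℝ)+1)/n) - (fun y => -h y) ((j:ℝ)/n) := by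
      intro n hn j hj
      have := grid_ineq_rev h n j hn hj
        (fun x hm hp M hM D hDdef hDm hDp => H n hn x hm hp j hj M hM D hDdef hDm hDp)
      simp only
      linarith
    have hs := sign_of_grid (fun y => -h y) h_smooth.neg q hq hgrid
    have E : deriv (deriv (deriv (fun y => -h y))) q = - deriv (deriv (deriv h)) q := by
      rw [deriv.fun_neg', deriv.fun_neg']
      exact deriv.fun_neg
    rw [E] at hs
    linarith
end

section
/- Let h be a probability weighting function that is four times continuously differentiable on (0,1). Suppose that for every n ≥ 4, every equiprobable n-state lottery x : {1,…,n} → ℝ (nondecreasing with nonnegative values), every integer j with 0 ≤ j ≤ n − 4, and every real M > 0 such that the map D defined by D(j+1) = x(j+1) + 1/M, D(j+2) = x(j+2) − 3/M, D(j+3) = x(j+3) + 3/M, D(j+4) = x(j+4) − 1/M, and D(i) = x(i) for all other i, is nondecreasing with nonnegative values, it holds that V_h(D) ≥ V_h(x). Then h'''' ≤ 0 on (0,1). If instead V_h(D) ≤ V_h(x) always holds for this class, then h'''' ≥ 0 on (0,1). -/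
set_option maxHeartbeats 1000000


open Finset

private lemma mvt_step_s3 (f f' : ℝ → ℝ) (a b : ℝ) (hab : a < b)
    (hd : ∀ x ∈ Set.Icc a b, HasDerivAt f (f' x) x) :
    ∃ ξ ∈ Set.Ioo a b, f b - f a = (b - a) * f' ξ := by
  obtain ⟨c, hc, hc2⟩ := exists_hasDerivAt_eq_slope f f' hab
    (fun x hx => (hd x hx).continuousAt.continuousWithinAt)
    (fun x hx => hd x (Set.mem_Icc_of_Ioo hx))
  refine ⟨c, hc, ?_⟩
  rw [hc2]
  rw [mul_div_cancel₀ _ (by linarith : b - a ≠ 0)]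

private lemma shift_deriv (g g' : ℝ → ℝ)
    (hg : ∀ y ∈ Set.Ioo (0:ℝ) 1, HasDerivAt g (g' y) y) (c x : ℝ)
    (h1 : 0 < x + c) (h2 : x + c < 1) :
    HasDerivAt (fun t => g (t + c)) (g' (x + c)) x := by
  have := (hg (x + c) ⟨h1, h2⟩).comp x ((hasDerivAt_id x).add_const c)
  simpa [Function.comp_def] using this

private lemma fourth_diff_mvt (f0 f1 f2 f3 f4 : ℝ → ℝ)
    (H0 : ∀ x ∈ Set.Ioo (0:ℝ) 1, HasDerivAt f0 (f1 x) x)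
    (H1 : ∀ x ∈ Set.Ioo (0:ℝ) 1, HasDerivAt f1 (f2 x) x)
    (H2 : ∀ x ∈ Set.Ioo (0:ℝ) 1, HasDerivAt f2 (f3 x) x)
    (H3 : ∀ x ∈ Set.Ioo (0:ℝ) 1, HasDerivAt f3 (f4 x) x)
    (a d : ℝ) (hd : 0 < d) (ha : 0 < a) (hb : a + 4 * d < 1) :
    ∃ ξ ∈ Set.Ioo a (a + 4 * d),
      f0 (a + 4 * d) - 4 * f0 (a + 3 * d) + 6 * f0 (a + 2 * d) - 4 * f0 (a + d) + f0 a
        = d ^ 4 * f4 ξ := by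
  -- Step 1
  obtain ⟨c1, hc1, e1⟩ := mvt_step_s3
      (fun t => f0 (t + 3 * d) - 3 * f0 (t + 2 * d) + 3 * f0 (t + d) - f0 t)
      (fun t => f1 (t + 3 * d) - 3 * f1 (t + 2 * d) + 3 * f1 (t + d) - f1 t)
      a (a + d) (by linarith)
      (by
        intro x hx
        obtain ⟨hx1, hx2⟩ := hx
        exact (((shift_deriv f0 f1 H0 (3 * d) x (by linarith) (by linarith)).sub
            ((shift_deriv f0 f1 H0 (2 * d) x (by linarith) (by linarith)).const_mul 3)).add
            ((shift_deriv f0 f1 H0 d x (by linarith) (by linarith)).const_mul 3)).sub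
            (H0 x ⟨by linarith, by linarith⟩))
  -- Step 2
  obtain ⟨c2, hc2, e2⟩ := mvt_step_s3
      (fun t => f1 (t + 2 * d) - 2 * f1 (t + d) + f1 t)
      (fun t => f2 (t + 2 * d) - 2 * f2 (t + d) + f2 t)
      c1 (c1 + d) (by linarith)
      (by
        intro x hx
        obtain ⟨hx1, hx2⟩ := hx
        obtain ⟨hb1, hb2⟩ := hc1
        exact ((shift_deriv f1 f2 H1 (2 * d) x (by linarith) (by linarith)).sub
            ((shift_deriv f1 f2 H1 d x (by linarith) (by linarith)).const_mul 2)).add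
            (H1 x ⟨by linarith, by linarith⟩))
  -- Step 3
  obtain ⟨c3, hc3, e3⟩ := mvt_step_s3
      (fun t => f2 (t + d) - f2 t)
      (fun t => f3 (t + d) - f3 t)
      c2 (c2 + d) (by linarith)
      (by
        intro x hx
        obtain ⟨hx1, hx2⟩ := hx
        obtain ⟨ha1, ha2⟩ := hc1
        obtain ⟨hb1, hb2⟩ := hc2
        exact (shift_deriv f2 f3 H2 d x (by linarith) (by linarith)).sub
            (H2 x ⟨by linarith, by linarith⟩))
  -- Step 4
  obtain ⟨c4, hc4, e4⟩ := mvt_step_s3 f3 f4 c3 (c3 + d) (by linarith)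
      (by
        intro x hx
        obtain ⟨hx1, hx2⟩ := hx
        obtain ⟨ha1, ha2⟩ := hc1
        obtain ⟨hb1, hb2⟩ := hc2
        obtain ⟨hd1, hd2⟩ := hc3
        exact H3 x ⟨by linarith, by linarith⟩)
  obtain ⟨ha1, ha2⟩ := hc1
  obtain ⟨hb1, hb2⟩ := hc2
  obtain ⟨hd1, hd2⟩ := hc3
  obtain ⟨he1, he2⟩ := hc4
  refine ⟨c4, ⟨by linarith, by linarith⟩, ?_⟩
  rw [show a + d + 3 * d = a + 4 * d by ring, show a + d + 2 * d = a + 3 * d by ring,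
    show a + d + d = a + 2 * d by ring, show a + d - a = d by ring] at e1
  rw [show c1 + d + 2 * d = c1 + 3 * d by ring, show c1 + d + d = c1 + 2 * d by ring,
    show c1 + d - c1 = d by ring] at e2
  rw [show c2 + d + d = c2 + 2 * d by ring, show c2 + d - c2 = d by ring] at e3
  rw [show c3 + d - c3 = d by ring] at e4
  linear_combination e1 + d * e2 + d ^ 2 * e3 + d ^ 3 * e4

private lemma key_le (g : ℝ → ℝ) (hg : ContDiffOn ℝ 4 g (Set.Ioo 0 1))
    (H : ∀ n j : ℕ, 1 ≤ j → j + 5 ≤ n →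
      g (((j : ℝ) + 4) / n) - 4 * g (((j : ℝ) + 3) / n) + 6 * g (((j : ℝ) + 2) / n)
        - 4 * g (((j : ℝ) + 1) / n) + g ((j : ℝ) / n) ≤ 0)
    (q : ℝ) (hq : q ∈ Set.Ioo (0 : ℝ) 1) :
    iteratedDerivWithin 4 g (Set.Ioo 0 1) q ≤ 0 := by
  have hso : IsOpen (Set.Ioo (0 : ℝ) 1) := isOpen_Ioo
  set s : Set ℝ := Set.Ioo 0 1 with hs
  -- the derivative chain
  set f1 : ℝ → ℝ := deriv g with hf1
  set f2 : ℝ → ℝ := deriv f1 with hf2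
  set f3 : ℝ → ℝ := deriv f2 with hf3
  set f4 : ℝ → ℝ := deriv f3 with hf4
  have c3 : ContDiffOn ℝ 3 f1 s := hg.deriv_of_isOpen hso (by norm_num)
  have c2 : ContDiffOn ℝ 2 f2 s := c3.deriv_of_isOpen hso (by norm_num)
  have c1 : ContDiffOn ℝ 1 f3 s := c2.deriv_of_isOpen hso (by norm_num)
  have c0 : ContDiffOn ℝ 0 f4 s := c1.deriv_of_isOpen hso (by norm_num)
  have f4cont : ContinuousOn f4 s := c0.continuousOn
  have H0 : ∀ x ∈ s, HasDerivAt g (f1 x) x := fun x hx =>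
    ((hg.differentiableOn (by norm_num)).differentiableAt (hso.mem_nhds hx)).hasDerivAt
  have H1 : ∀ x ∈ s, HasDerivAt f1 (f2 x) x := fun x hx =>
    ((c3.differentiableOn (by norm_num)).differentiableAt (hso.mem_nhds hx)).hasDerivAt
  have H2 : ∀ x ∈ s, HasDerivAt f2 (f3 x) x := fun x hx =>
    ((c2.differentiableOn (by norm_num)).differentiableAt (hso.mem_nhds hx)).hasDerivAt
  have H3 : ∀ x ∈ s, HasDerivAt f3 (f4 x) x := fun x hx =>
    ((c1.differentiableOn (by norm_num)).differentiableAt (hso.mem_nhds hx)).hasDerivAt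
  -- identify the iterated derivative
  have hiter : iteratedDerivWithin 4 g s q = f4 q := by
    rw [iteratedDerivWithin_eq_iteratedFDerivWithin, iteratedFDerivWithin_of_isOpen 4 hso hq,
      ← iteratedDeriv_eq_iteratedFDeriv]
    simp [hf4, hf3, hf2, hf1, iteratedDeriv_succ, iteratedDeriv_zero]
  rw [hiter]
  obtain ⟨hq0, hq1⟩ := hq
  -- epsilon argument
  have key : ∀ ε : ℝ, 0 < ε → f4 q ≤ ε := by
    intro ε hε
    have hcw : ContinuousWithinAt f4 s q := f4cont q ⟨hq0, hq1⟩
    rw [Metric.continuousWithinAt_iff] at hcw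
    obtain ⟨δ, hδ, hball⟩ := hcw ε hε
    obtain ⟨n, hn⟩ := exists_nat_gt (max (max (1 / q) (5 / (1 - q))) (5 / δ))
    have hn1 : 1 / q < n := lt_of_le_of_lt (le_max_left _ _) (lt_of_le_of_lt (le_max_left _ _) hn)
    have hn2 : 5 / (1 - q) < n :=
      lt_of_le_of_lt (le_max_right _ _) (lt_of_le_of_lt (le_max_left _ _) hn)
    have hn3 : 5 / δ < n := lt_of_le_of_lt (le_max_right _ _) hn
    have hnpos : (0 : ℝ) < n := lt_trans (by positivity) hn1
    have hq1n : 1 < q * n := by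
      rw [div_lt_iff₀ hq0] at hn1; linarith
    have hq2n : q * n + 5 < n := by
      rw [div_lt_iff₀ (by linarith : (0:ℝ) < 1 - q)] at hn2; nlinarith
    have hq3n : 5 < δ * n := by
      rw [div_lt_iff₀ hδ] at hn3; linarith
    set j : ℕ := ⌊q * n⌋₊ with hj
    have hjle : (j : ℝ) ≤ q * n := Nat.floor_le (by positivity)
    have hjgt : q * n < j + 1 := Nat.lt_floor_add_one _
    have hj1 : 1 ≤ j := Nat.le_floor (by exact_mod_cast hq1n.le)
    have hj5 : j + 5 ≤ n := by
      have : ((j : ℝ) + 5) < n := by linarith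
      exact_mod_cast this.le
    have hj5' : ((j : ℝ) + 5) ≤ n := by exact_mod_cast hj5
    have hd : (0 : ℝ) < 1 / n := by positivity
    have ha : (0 : ℝ) < (j : ℝ) / n := by positivity
    have harg : ∀ k : ℝ, (j : ℝ) / n + k * (1 / n) = ((j : ℝ) + k) / n := by
      intro k; field_simp
    have hb : (j : ℝ) / n + 4 * (1 / n) < 1 := by
      rw [harg 4, div_lt_one hnpos]; linarith
    obtain ⟨ξ, hξ, hξeq⟩ := fourth_diff_mvt g f1 f2 f3 f4 H0 H1 H2 H3
      ((j : ℝ) / n) (1 / n) hd ha hb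
    have hHn := H n j hj1 hj5
    rw [harg 4] at hξ
    rw [harg 4, harg 3, harg 2,
        show (j:ℝ)/n + 1/n = ((j:ℝ)+1)/n from (add_div (j:ℝ) 1 (n:ℝ)).symm] at hξeq
    have hξle : f4 ξ ≤ 0 := by
      have h4 : (0:ℝ) < (1/n)^4 := by positivity
      nlinarith [hξeq ▸ hHn]
    obtain ⟨hξa, hξb⟩ := hξ
    have hξs : ξ ∈ s := by
      constructor
      · linarith
      · have : ((j:ℝ)+4)/n < 1 := by rw [div_lt_one hnpos]; linarith
        linarith
    have hξan : (j:ℝ) < ξ * n := (div_lt_iff₀ hnpos).1 hξa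
    have hξbn : ξ * n < (j:ℝ) + 4 := (lt_div_iff₀ hnpos).1 hξb
    have hdist : dist ξ q < δ := by
      rw [Real.dist_eq, abs_sub_lt_iff]
      have hA : (ξ - q) * n < δ * n := by nlinarith
      have hB : (q - ξ) * n < δ * n := by nlinarith
      exact ⟨by nlinarith [(mul_lt_mul_iff_of_pos_right hnpos).1 hA],
        by nlinarith [(mul_lt_mul_iff_of_pos_right hnpos).1 hB]⟩
    have := hball hξs hdist
    rw [Real.dist_eq, abs_sub_lt_iff] at this
    linarith [this.2, hξle]
  by_contra hcon
  push_neg at hcon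
  have := key (f4 q / 2) (by linarith)
  linarith

private lemma key_ge (g : ℝ → ℝ) (hg : ContDiffOn ℝ 4 g (Set.Ioo 0 1))
    (H : ∀ n j : ℕ, 1 ≤ j → j + 5 ≤ n →
      0 ≤ g (((j : ℝ) + 4) / n) - 4 * g (((j : ℝ) + 3) / n) + 6 * g (((j : ℝ) + 2) / n)
        - 4 * g (((j : ℝ) + 1) / n) + g ((j : ℝ) / n))
    (q : ℝ) (hq : q ∈ Set.Ioo (0 : ℝ) 1) :
    0 ≤ iteratedDerivWithin 4 g (Set.Ioo 0 1) q := by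
  have := key_le (fun t => -g t) hg.neg
    (fun n j h1 h2 => by have := H n j h1 h2; linarith) q hq
  rw [iteratedDerivWithin_fun_neg g] at this
  linarith

private lemma dt_add (h : ℝ → ℝ) (n c : ℕ) (hc : c ∈ Finset.Icc 1 n) (v : ℝ) (y : ℕ → ℝ) :
    dtValue h n (fun i => y i + (if i = c then v else 0))
      = dtValue h n y + v * (h ((c:ℝ)/n) - h (((c:ℝ)-1)/n)) := by
  unfold dtValue
  simp only [add_mul, ite_mul, zero_mul]
  rw [Finset.sum_add_distrib, Finset.sum_ite_eq' (Finset.Icc 1 n) c, if_pos hc]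

private lemma dt_compute (h : ℝ → ℝ) (n j : ℕ) (hj : 1 ≤ j) (hjn : j + 4 ≤ n) (x : ℕ → ℝ) :
    dtValue h n (fun i => x i + (if i = j + 1 then 1 / 1 else 0)
        - (if i = j + 2 then 3 / 1 else 0) + (if i = j + 3 then 3 / 1 else 0)
        - (if i = j + 4 then 1 / 1 else 0))
      = dtValue h n x
        + (h (((j:ℝ)+1)/n) - h ((j:ℝ)/n)) - 3 * (h (((j:ℝ)+2)/n) - h (((j:ℝ)+1)/n))
        + 3 * (h (((j:ℝ)+3)/n) - h (((j:ℝ)+2)/n)) - (h (((j:ℝ)+4)/n) - h (((j:ℝ)+3)/n)) := by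
  have m1 : j + 1 ∈ Finset.Icc 1 n := by simp [Finset.mem_Icc]; omega
  have m2 : j + 2 ∈ Finset.Icc 1 n := by simp [Finset.mem_Icc]; omega
  have m3 : j + 3 ∈ Finset.Icc 1 n := by simp [Finset.mem_Icc]; omega
  have m4 : j + 4 ∈ Finset.Icc 1 n := by simp [Finset.mem_Icc]; omega
  have hfun : (fun i => x i + (if i = j + 1 then (1:ℝ) / 1 else 0)
        - (if i = j + 2 then 3 / 1 else 0) + (if i = j + 3 then 3 / 1 else 0)
        - (if i = j + 4 then 1 / 1 else 0))
      = fun i => (((x i + (if i = j + 1 then (1:ℝ) / 1 else 0))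
          + (if i = j + 2 then -(3 / 1) else 0)) + (if i = j + 3 then 3 / 1 else 0))
          + (if i = j + 4 then -(1 / 1) else 0) := by
    funext i
    split_ifs <;> ring
  rw [hfun, dt_add h n (j+4) m4, dt_add h n (j+3) m3, dt_add h n (j+2) m2, dt_add h n (j+1) m1]
  push_cast
  rw [show ((j:ℝ)+1-1) = (j:ℝ) from by ring, show ((j:ℝ)+2-1) = (j:ℝ)+1 from by ring,
    show ((j:ℝ)+3-1) = (j:ℝ)+2 from by ring, show ((j:ℝ)+4-1) = (j:ℝ)+3 from by ring]
  ring

private noncomputable def Xfun : ℕ → ℝ := fun i => 4 * i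

private noncomputable def Dfun (j : ℕ) : ℕ → ℝ := fun i =>
  Xfun i + (if i = j + 1 then 1 / 1 else 0) - (if i = j + 2 then 3 / 1 else 0)
    + (if i = j + 3 then 3 / 1 else 0) - (if i = j + 4 then 1 / 1 else 0)

private lemma Xfun_mono : ∀ i k : ℕ, i ≤ k → Xfun i ≤ Xfun k := by
  intro i k hik
  unfold Xfun
  have : (i : ℝ) ≤ k := by exact_mod_cast hik
  linarith

private lemma Xfun_nonneg : ∀ i : ℕ, 0 ≤ Xfun i := by
  intro i; unfold Xfun; positivity

private lemma Dfun_mono (j : ℕ) : Monotone (Dfun j) := by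
  apply monotone_nat_of_le_succ
  intro m
  unfold Dfun Xfun
  have : ((m + 1 : ℕ) : ℝ) = (m : ℝ) + 1 := by push_cast; ring
  rw [this]
  split_ifs <;> first | (exfalso; omega) | linarith

private lemma Dfun_nonneg (j : ℕ) : ∀ i : ℕ, 1 ≤ i → 0 ≤ Dfun j i := by
  intro i hi
  unfold Dfun Xfun
  have : (1 : ℝ) ≤ i := by exact_mod_cast hi
  split_ifs <;> first | (exfalso; omega) | linarith


/-- Theorem 4 (necessity at the fourth order): if a DT decision maker always (weakly)
prefers the lottery `D`, obtained from `x` by adding the increments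
`(1/M, -3/M, 3/M, -1/M)` at four consecutive states, to `x` itself, then `h'''' ≤ 0`
on `(0,1)`; if the preference is always reversed, then `h'''' ≥ 0` on `(0,1)`. -/
theorem dual_temperance_necessary
    (h : ℝ → ℝ) (h_mono : Monotone h) (h_zero : h 0 = 0) (h_one : h 1 = 1)
    (h_smooth : ContDiffOn ℝ 4 h (Set.Ioo 0 1)) :
    ((∀ n : ℕ, 4 ≤ n → ∀ x : ℕ → ℝ,
        (∀ i j, 1 ≤ i → i ≤ j → j ≤ n → x i ≤ x j) →
        (∀ i, 1 ≤ i → i ≤ n → 0 ≤ x i) →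
        ∀ j : ℕ, j + 4 ≤ n → ∀ M : ℝ, 0 < M → ∀ D : ℕ → ℝ,
        (∀ i, D i = x i + (if i = j + 1 then 1 / M else 0)
            - (if i = j + 2 then 3 / M else 0) + (if i = j + 3 then 3 / M else 0)
            - (if i = j + 4 then 1 / M else 0)) →
        (∀ i k, 1 ≤ i → i ≤ k → k ≤ n → D i ≤ D k) →
        (∀ i, 1 ≤ i → i ≤ n → 0 ≤ D i) →
        dtValue h n x ≤ dtValue h n D) →
      ∀ q ∈ Set.Ioo (0:ℝ) 1, iteratedDerivWithin 4 h (Set.Ioo 0 1) q ≤ 0) ∧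
    ((∀ n : ℕ, 4 ≤ n → ∀ x : ℕ → ℝ,
        (∀ i j, 1 ≤ i → i ≤ j → j ≤ n → x i ≤ x j) →
        (∀ i, 1 ≤ i → i ≤ n → 0 ≤ x i) →
        ∀ j : ℕ, j + 4 ≤ n → ∀ M : ℝ, 0 < M → ∀ D : ℕ → ℝ,
        (∀ i, D i = x i + (if i = j + 1 then 1 / M else 0)
            - (if i = j + 2 then 3 / M else 0) + (if i = j + 3 then 3 / M else 0)
            - (if i = j + 4 then 1 / M else 0)) →
        (∀ i k, 1 ≤ i → i ≤ k → k ≤ n → D i ≤ D k) →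
        (∀ i, 1 ≤ i → i ≤ n → 0 ≤ D i) →
        dtValue h n D ≤ dtValue h n x) →
      ∀ q ∈ Set.Ioo (0:ℝ) 1, 0 ≤ iteratedDerivWithin 4 h (Set.Ioo 0 1) q) := by
  constructor
  · intro hyp q hq
    apply key_le h h_smooth ?_ q hq
    intro n j hj1 hj5
    have hdt := hyp n (by omega) Xfun
      (fun i k _ hik _ => Xfun_mono i k hik)
      (fun i _ _ => Xfun_nonneg i)
      j (by omega) 1 one_pos (Dfun j) (fun i => rfl)
      (fun i k _ hik _ => Dfun_mono j hik)
      (fun i h1 _ => Dfun_nonneg j i h1)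
    have e : dtValue h n (Dfun j) = dtValue h n Xfun
        + (h (((j:ℝ)+1)/n) - h ((j:ℝ)/n)) - 3 * (h (((j:ℝ)+2)/n) - h (((j:ℝ)+1)/n))
        + 3 * (h (((j:ℝ)+3)/n) - h (((j:ℝ)+2)/n)) - (h (((j:ℝ)+4)/n) - h (((j:ℝ)+3)/n)) :=
      dt_compute h n j hj1 (by omega) Xfun
    rw [e] at hdt
    linarith
  · intro hyp q hq
    apply key_ge h h_smooth ?_ q hq
    intro n j hj1 hj5
    have hdt := hyp n (by omega) Xfun
      (fun i k _ hik _ => Xfun_mono i k hik)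
      (fun i _ _ => Xfun_nonneg i)
      j (by omega) 1 one_pos (Dfun j) (fun i => rfl)
      (fun i k _ hik _ => Dfun_mono j hik)
      (fun i h1 _ => Dfun_nonneg j i h1)
    have e : dtValue h n (Dfun j) = dtValue h n Xfun
        + (h (((j:ℝ)+1)/n) - h ((j:ℝ)/n)) - 3 * (h (((j:ℝ)+2)/n) - h (((j:ℝ)+1)/n))
        + 3 * (h (((j:ℝ)+3)/n) - h (((j:ℝ)+2)/n)) - (h (((j:ℝ)+4)/n) - h (((j:ℝ)+3)/n)) :=
      dt_compute h n j hj1 (by omega) Xfun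
    rw [e] at hdt
    linarith
end

section
/- Let m ≥ 2 and let h be a probability weighting function that is m times continuously differentiable on (0,1). Suppose that for every n ≥ m, every equiprobable n-state lottery x : {1,…,n} → ℝ (nondecreasing with nonnegative values), every integer j with 0 ≤ j ≤ n − m, and every real M > 0 such that the map D defined by D(j+1+i) = x(j+1+i) + (−1)^i·binom(m−1, i)/M for i = 0,…,m−1, and D(i) = x(i) for all other i, is nondecreasing with nonnegative values, it holds that V_h(D) ≥ V_h(x). Then (−1)^{m−1}·h^{(m)} ≥ 0 on (0,1). If instead V_h(D) ≤ V_h(x) always holds for this class, then (−1)^{m−1}·h^{(m)} ≤ 0 on (0,1). -/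
open Finset

/-- Alternating binomial sum `∑ (-1)^k C(m,k) f(a + k t)`, i.e. `(-1)^m` times the
`m`-th forward difference of `f` with step `t` at `a`. -/
noncomputable def finS (m : ℕ) (f : ℝ → ℝ) (a t : ℝ) : ℝ :=
  ∑ k ∈ Finset.range (m + 1), (-1 : ℝ) ^ k * (m.choose k : ℝ) * f (a + k * t)

lemma finS_eq (m : ℕ) (f : ℝ → ℝ) (a t : ℝ) :
    finS m f a t = (-1 : ℝ) ^ m * (fwdDiff t)^[m] f a := by
  rw [fwdDiff_iter_eq_sum_shift, Finset.mul_sum]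
  refine Finset.sum_congr rfl fun k hk => ?_
  have hk' : k ≤ m := Nat.lt_succ_iff.mp (Finset.mem_range.mp hk)
  have hsgn : (-1 : ℝ) ^ m * (-1 : ℝ) ^ (m - k) = (-1 : ℝ) ^ k := by
    rw [← pow_add, show m + (m - k) = 2 * (m - k) + k by omega, pow_add, pow_mul]
    norm_num
  rw [zsmul_eq_mul, nsmul_eq_mul]
  push_cast
  rw [← mul_assoc, ← mul_assoc, hsgn]

lemma finS_succ (m : ℕ) (f : ℝ → ℝ) (a t : ℝ) :
    finS (m + 1) f a t = finS m f a t - finS m f (a + t) t := by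
  rw [finS_eq, finS_eq, finS_eq, Function.iterate_succ_apply']
  rw [show (fwdDiff t) ((fwdDiff t)^[m] f) a = (fwdDiff t)^[m] f (a + t) - (fwdDiff t)^[m] f a
    from rfl]
  rw [pow_succ]
  ring

lemma finS_neg (m : ℕ) (f : ℝ → ℝ) (a t : ℝ) :
    finS m (fun y => -f y) a t = -finS m f a t := by
  rw [finS, finS, ← Finset.sum_neg_distrib]
  exact Finset.sum_congr rfl fun k _ => by ring

lemma finS_one (f : ℝ → ℝ) (a t : ℝ) : finS 1 f a t = f a - f (a + t) := by
  simp [finS, Finset.sum_range_succ]; ring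

lemma iterDW_open {f : ℝ → ℝ} {s : Set ℝ} (hs : IsOpen s) {x : ℝ} (hx : x ∈ s) (n : ℕ) :
    iteratedDerivWithin n f s x = iteratedDeriv n f x := by
  rw [iteratedDerivWithin_eq_iteratedFDerivWithin, iteratedDeriv_eq_iteratedFDeriv,
    iteratedFDerivWithin_of_isOpen n hs hx]

/-- Sign of the alternating binomial sum when the `m`-th derivative has a strict sign. -/
lemma finS_pos : ∀ m : ℕ, 1 ≤ m → ∀ (f : ℝ → ℝ) (u : Set ℝ), IsOpen u →
    ContDiffOn ℝ (m : ℕ) f u → ∀ a t : ℝ, 0 < t → Set.Icc a (a + m * t) ⊆ u →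
    (∀ y ∈ Set.Icc a (a + m * t), 0 < (-1 : ℝ) ^ m * iteratedDeriv m f y) →
    0 < finS m f a t := by
  intro m hm
  induction m, hm using Nat.le_induction with
  | base =>
    intro f u hu hsm a t ht hsub hpos
    simp only [Nat.cast_one, one_mul] at hsub hpos
    have anti : StrictAntiOn f (Set.Icc a (a + t)) := by
      refine strictAntiOn_of_deriv_neg (convex_Icc _ _) (hsm.continuousOn.mono hsub) ?_
      intro y hy
      rw [interior_Icc] at hy
      have hy' : y ∈ Set.Icc a (a + t) := Set.Ioo_subset_Icc_self hy
      have h0 := hpos y hy'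
      rw [pow_one, iteratedDeriv_one] at h0
      linarith
    have h1 : f (a + t) < f a :=
      anti (Set.left_mem_Icc.mpr (by linarith)) (Set.right_mem_Icc.mpr (by linarith))
        (by linarith)
    rw [finS_one]; linarith
  | succ m hm1 IH =>
    intro f u hu hsm a t ht hsub hpos
    push_cast at hsub hpos
    have hsm' : ContDiffOn ℝ ((m : WithTop ℕ∞) + 1) f u := by exact_mod_cast hsm
    obtain ⟨hdiff, -, hder⟩ := (contDiffOn_succ_iff_deriv_of_isOpen hu).mp hsm'
    have key : ∀ y ∈ Set.Icc a (a + t), finS m (deriv f) y t < 0 := by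
      intro y hy
      have h1 : Set.Icc y (y + m * t) ⊆ Set.Icc a (a + (m + 1) * t) :=
        Set.Icc_subset_Icc (by linarith [hy.1]) (by nlinarith [hy.2])
      have hIH := IH (fun z => -(deriv f z)) u hu hder.neg y t ht (h1.trans hsub) ?_
      · rw [finS_neg] at hIH; linarith
      · intro z hz
        have hz' := hpos z (h1 hz)
        have he : (-1 : ℝ) ^ m * iteratedDeriv m (fun z => -(deriv f z)) z
            = (-1 : ℝ) ^ (m + 1) * iteratedDeriv (m + 1) f z := by
          rw [iteratedDeriv_succ', iteratedDeriv_fun_neg, pow_succ]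
          ring
        rw [he]; exact hz'
    have hG : ∀ y ∈ Set.Icc a (a + t),
        HasDerivAt (fun z => finS m f z t) (finS m (deriv f) y t) y := by
      intro y hy
      have hterm : ∀ k ∈ Finset.range (m + 1),
          HasDerivAt (fun z => (-1 : ℝ) ^ k * (m.choose k : ℝ) * f (z + k * t))
            ((-1 : ℝ) ^ k * (m.choose k : ℝ) * deriv f (y + k * t)) y := by
        intro k hk
        have hk' : (k : ℝ) ≤ m := Nat.cast_le.mpr (Nat.lt_succ_iff.mp (Finset.mem_range.mp hk))
        have hkt : 0 ≤ (k : ℝ) * t := by positivity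
        have hky : y + k * t ∈ u := by
          refine hsub ⟨by linarith [hy.1], ?_⟩
          have : (k : ℝ) * t ≤ m * t := by nlinarith
          nlinarith [hy.2]
        have hdA : DifferentiableAt ℝ f (y + k * t) := hdiff.differentiableAt (hu.mem_nhds hky)
        have h1 : HasDerivAt (fun z : ℝ => z + (k : ℝ) * t) 1 y := (hasDerivAt_id y).add_const _
        have h2 : HasDerivAt (fun z : ℝ => f (z + (k : ℝ) * t)) (deriv f (y + k * t)) y := by
          simpa [Function.comp_def] using (hdA.hasDerivAt.comp y h1)
        exact h2.const_mul _
      have := HasDerivAt.fun_sum hterm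
      simpa [finS] using this
    have anti : StrictAntiOn (fun z => finS m f z t) (Set.Icc a (a + t)) := by
      refine strictAntiOn_of_deriv_neg (convex_Icc _ _)
        (fun y hy => (hG y hy).continuousAt.continuousWithinAt) ?_
      intro y hy
      rw [interior_Icc] at hy
      have hy' := Set.Ioo_subset_Icc_self hy
      rw [(hG y hy').deriv]
      exact key y hy'
    have h2 : finS m f (a + t) t < finS m f a t :=
      anti (Set.left_mem_Icc.mpr (by linarith)) (Set.right_mem_Icc.mpr (by linarith))
        (by linarith)
    rw [finS_succ]; linarith

lemma sum_eq_neg_finS (m : ℕ) (hm : 1 ≤ m) (f : ℝ → ℝ) (a t : ℝ) :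
    ∑ k ∈ Finset.range m, (-1 : ℝ) ^ k * ((m - 1).choose k : ℝ) *
      (f (a + (k + 1) * t) - f (a + k * t)) = -finS m f a t := by
  obtain ⟨m', rfl⟩ := Nat.exists_eq_add_of_le hm
  simp only [Nat.add_sub_cancel_left] at *
  rw [show 1 + m' = m' + 1 by omega]
  rw [finS_succ, neg_sub, finS, finS, ← Finset.sum_sub_distrib]
  refine Finset.sum_congr rfl fun k _ => ?_
  rw [show a + t + (k : ℝ) * t = a + ((k : ℝ) + 1) * t by ring]
  ring

/-- Construction of the pair of lotteries whose DT values differ by the `m`-th difference. -/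
lemma dt_key (m n j : ℕ) (hm : 1 ≤ m) (hjm : j + m ≤ n) (h : ℝ → ℝ) :
    ∃ x D : ℕ → ℝ,
      (∀ i k, 1 ≤ i → i ≤ k → k ≤ n → x i ≤ x k) ∧
      (∀ i, 1 ≤ i → i ≤ n → 0 ≤ x i) ∧
      (∀ i, D i = x i + ∑ k ∈ Finset.range m,
          (if i = j + 1 + k then (-1 : ℝ) ^ k * ((m - 1).choose k : ℝ) / 1 else 0)) ∧
      (∀ i k, 1 ≤ i → i ≤ k → k ≤ n → D i ≤ D k) ∧
      (∀ i, 1 ≤ i → i ≤ n → 0 ≤ D i) ∧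
      dtValue h n D - dtValue h n x = -finS m h ((j : ℝ) / n) (1 / (n : ℝ)) := by
  classical
  set B : ℝ := 2 ^ (m - 1) with hB
  set ε : ℕ → ℝ := fun i => ∑ k ∈ Finset.range m,
    (if i = j + 1 + k then (-1 : ℝ) ^ k * ((m - 1).choose k : ℝ) / 1 else 0) with hε
  have hεbd : ∀ i, |ε i| ≤ B := by
    intro i
    calc |ε i| ≤ ∑ k ∈ Finset.range m,
        |(if i = j + 1 + k then (-1 : ℝ) ^ k * ((m - 1).choose k : ℝ) / 1 else 0)| :=
          Finset.abs_sum_le_sum_abs _ _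
      _ ≤ ∑ k ∈ Finset.range m, ((m - 1).choose k : ℝ) := by
          refine Finset.sum_le_sum fun k _ => ?_
          split
          · rw [div_one, abs_mul, abs_pow, abs_neg, abs_one, one_pow, one_mul]
            exact le_of_eq (abs_of_nonneg (by positivity))
          · simp
      _ = B := by
          rw [hB, ← Nat.cast_sum]
          norm_cast
          rw [show m = (m - 1) + 1 by omega, Nat.add_sub_cancel]
          exact Nat.sum_range_choose (m - 1)
  set x : ℕ → ℝ := fun i => (i : ℝ) * (2 * B) with hx
  set D : ℕ → ℝ := fun i => x i + ε i with hD
  have hBpos : 0 < B := by positivity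
  refine ⟨x, D, ?_, ?_, fun i => rfl, ?_, ?_, ?_⟩
  · intro i k _ hik _
    have : (i : ℝ) ≤ k := Nat.cast_le.mpr hik
    simp only [hx]; nlinarith
  · intro i hi _
    have : (1 : ℝ) ≤ (i : ℝ) := by exact_mod_cast hi
    simp only [hx]; nlinarith
  · intro i k _ hik _
    rcases eq_or_lt_of_le hik with rfl | hlt
    · exact le_rfl
    · have hik' : (i : ℝ) + 1 ≤ (k : ℝ) := by exact_mod_cast hlt
      have h1 := abs_le.mp (hεbd i)
      have h2 := abs_le.mp (hεbd k)
      simp only [hD, hx]; nlinarith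
  · intro i hi _
    have : (1 : ℝ) ≤ (i : ℝ) := by exact_mod_cast hi
    have h1 := abs_le.mp (hεbd i)
    simp only [hD, hx]; nlinarith
  · have expand : dtValue h n D = dtValue h n x +
        ∑ i ∈ Finset.Icc 1 n, ε i * (h ((i : ℝ) / n) - h (((i : ℝ) - 1) / n)) := by
      rw [dtValue, dtValue, ← Finset.sum_add_distrib]
      exact Finset.sum_congr rfl fun i _ => by simp only [hD]; ring
    have hmem : ∀ k ∈ Finset.range m, j + 1 + k ∈ Finset.Icc 1 n := by
      intro k hk
      rw [Finset.mem_Icc]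
      have := Finset.mem_range.mp hk
      omega
    calc dtValue h n D - dtValue h n x
        = ∑ i ∈ Finset.Icc 1 n, ε i * (h ((i : ℝ) / n) - h (((i : ℝ) - 1) / n)) := by
          rw [expand]; ring
      _ = ∑ k ∈ Finset.range m, ∑ i ∈ Finset.Icc 1 n,
            (if i = j + 1 + k then ((-1 : ℝ) ^ k * ((m - 1).choose k : ℝ) / 1) *
              (h ((i : ℝ) / n) - h (((i : ℝ) - 1) / n)) else 0) := by
          rw [Finset.sum_comm]
          refine Finset.sum_congr rfl fun i _ => ?_
          rw [hε, Finset.sum_mul]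
          exact Finset.sum_congr rfl fun k _ => by rw [ite_mul, zero_mul]
      _ = ∑ k ∈ Finset.range m, ((-1 : ℝ) ^ k * ((m - 1).choose k : ℝ)) *
            (h (((j + 1 + k : ℕ) : ℝ) / n) - h ((((j + 1 + k : ℕ) : ℝ) - 1) / n)) := by
          refine Finset.sum_congr rfl fun k hk => ?_
          rw [Finset.sum_ite_eq' (Finset.Icc 1 n) (j + 1 + k), if_pos (hmem k hk), div_one]
      _ = ∑ k ∈ Finset.range m, (-1 : ℝ) ^ k * ((m - 1).choose k : ℝ) *
            (h ((j : ℝ) / n + ((k : ℝ) + 1) * (1 / n)) - h ((j : ℝ) / n + (k : ℝ) * (1 / n))) := by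
          refine Finset.sum_congr rfl fun k hk => ?_
          have e1 : (((j + 1 + k : ℕ) : ℝ)) / n = (j : ℝ) / n + ((k : ℝ) + 1) * (1 / n) := by
            push_cast; ring
          have e2 : ((((j + 1 + k : ℕ) : ℝ)) - 1) / n = (j : ℝ) / n + (k : ℝ) * (1 / n) := by
            push_cast; ring
          rw [e1, e2]
      _ = -finS m h ((j : ℝ) / n) (1 / (n : ℝ)) := sum_eq_neg_finS m hm h _ _

/-- Localization: a strict sign of the `m`-th derivative at a point produces an `m`-th
finite difference of the corresponding strict sign. -/
lemma main_aux (m : ℕ) (hm : 2 ≤ m) (h : ℝ → ℝ)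
    (h_smooth : ContDiffOn ℝ (m : ℕ∞) h (Set.Ioo 0 1))
    (q : ℝ) (hq : q ∈ Set.Ioo (0 : ℝ) 1)
    (hlt : 0 < (-1 : ℝ) ^ m * iteratedDerivWithin m h (Set.Ioo 0 1) q) :
    ∃ n jj : ℕ, m ≤ n ∧ jj + m ≤ n ∧ 0 < finS m h ((jj : ℝ) / n) (1 / (n : ℝ)) := by
  have hsO : IsOpen (Set.Ioo (0 : ℝ) 1) := isOpen_Ioo
  have hsm : ContDiffOn ℝ (m : ℕ) h (Set.Ioo 0 1) := by exact_mod_cast h_smooth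
  have hcW : ContinuousOn (iteratedDerivWithin m h (Set.Ioo 0 1)) (Set.Ioo 0 1) :=
    h_smooth.continuousOn_iteratedDerivWithin (by exact_mod_cast le_refl (m : ℕ∞))
      hsO.uniqueDiffOn
  have hcD : ContinuousOn (iteratedDeriv m h) (Set.Ioo 0 1) :=
    hcW.congr fun y hy => (iterDW_open hsO hy m).symm
  have hcq : ContinuousAt (fun y => (-1 : ℝ) ^ m * iteratedDeriv m h y) q :=
    continuousAt_const.mul (hcD.continuousAt (hsO.mem_nhds hq))
  rw [iterDW_open hsO hq m] at hlt
  have hev : ∀ᶠ y in nhds q, y ∈ Set.Ioo (0 : ℝ) 1 ∧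
      0 < (-1 : ℝ) ^ m * iteratedDeriv m h y :=
    (hsO.eventually_mem hq).and (hcq.eventually (eventually_gt_nhds hlt))
  obtain ⟨δ, hδ, hball⟩ := Metric.eventually_nhds_iff.mp hev
  set n : ℕ := max m (⌈(m : ℝ) / δ⌉₊ + 1) with hn
  have hnm : m ≤ n := le_max_left _ _
  have hn0 : 0 < n := lt_of_lt_of_le (by omega) hnm
  have hn0' : (0 : ℝ) < n := by exact_mod_cast hn0
  have hmn : (m : ℝ) / n < δ := by
    have h1 : (m : ℝ) / δ < n := by
      have : ((⌈(m : ℝ) / δ⌉₊ + 1 : ℕ) : ℝ) ≤ n := by exact_mod_cast le_max_right _ _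
      have h2 := Nat.le_ceil ((m : ℝ) / δ)
      push_cast at this
      linarith
    rw [div_lt_iff₀ hn0']
    rw [div_lt_iff₀ hδ] at h1
    nlinarith
  set jj : ℕ := ⌊(n : ℝ) * q⌋₊ with hjj
  set a : ℝ := (jj : ℝ) / n with ha
  set t : ℝ := 1 / (n : ℝ) with ht
  have ht0 : 0 < t := by positivity
  have hq0 : 0 < q := hq.1
  have haq : a ≤ q := by
    rw [ha, div_le_iff₀ hn0']
    have := Nat.floor_le (by positivity : (0 : ℝ) ≤ (n : ℝ) * q)
    linarith
  have hqa : q < a + t := by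
    rw [ha, ht]
    have := Nat.lt_floor_add_one ((n : ℝ) * q)
    rw [← add_div, lt_div_iff₀ hn0']
    push_cast
    linarith
  have hIccball : ∀ y ∈ Set.Icc a (a + m * t), dist y q < δ := by
    intro y hy
    rw [Real.dist_eq, abs_sub_lt_iff]
    have hmt : (m : ℝ) * t = (m : ℝ) / n := by rw [ht]; ring
    have h1m : (1 : ℝ) ≤ m := by exact_mod_cast (by omega : 1 ≤ m)
    have htm : t ≤ (m : ℝ) * t := by nlinarith
    constructor
    · have := hy.2
      rw [hmt] at this
      linarith
    · have := hy.1
      have : q - y < t := by linarith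
      have : t ≤ (m : ℝ) / n := by rw [← hmt]; exact htm
      linarith [hy.1, hqa]
  have hIcc : ∀ y ∈ Set.Icc a (a + m * t),
      y ∈ Set.Ioo (0 : ℝ) 1 ∧ 0 < (-1 : ℝ) ^ m * iteratedDeriv m h y :=
    fun y hy => hball (hIccball y hy)
  have hjmn : jj + m ≤ n := by
    have hend : a + (m : ℝ) * t ∈ Set.Ioo (0 : ℝ) 1 :=
      (hIcc (a + m * t) (Set.right_mem_Icc.mpr (by nlinarith [ht0]))).1
    have h1 : a + (m : ℝ) * t < 1 := hend.2
    rw [ha, ht] at h1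
    field_simp at h1
    have h2 : ((jj + m : ℕ) : ℝ) < n := by push_cast; linarith
    exact_mod_cast le_of_lt h2
  refine ⟨n, jj, hnm, hjmn, ?_⟩
  exact finS_pos m (by omega) h (Set.Ioo 0 1) hsO hsm a t ht0
    (fun y hy => (hIcc y hy).1) (fun y hy => (hIcc y hy).2)

/-- Theorem 6 (necessity at the `m`-th order): if a DT decision maker always (weakly)
prefers the lottery `D`, obtained from `x` by adding the alternating-sign binomial
increments `(−1)^i·binom(m−1,i)/M` at `m` consecutive states, to `x` itself, then
`(−1)^{m−1}·h^{(m)} ≥ 0` on `(0,1)`; if the preference is always reversed, then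
`(−1)^{m−1}·h^{(m)} ≤ 0` on `(0,1)`. -/
theorem dual_apportionment_necessary
    (m : ℕ) (hm : 2 ≤ m)
    (h : ℝ → ℝ) (h_mono : Monotone h) (h_zero : h 0 = 0) (h_one : h 1 = 1)
    (h_smooth : ContDiffOn ℝ (m : ℕ∞) h (Set.Ioo 0 1)) :
    ((∀ n : ℕ, m ≤ n → ∀ x : ℕ → ℝ,
        (∀ i j, 1 ≤ i → i ≤ j → j ≤ n → x i ≤ x j) →
        (∀ i, 1 ≤ i → i ≤ n → 0 ≤ x i) →
        ∀ j : ℕ, j + m ≤ n → ∀ M : ℝ, 0 < M → ∀ D : ℕ → ℝ,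
        (∀ i, D i = x i + ∑ k ∈ Finset.range m,
            (if i = j + 1 + k then (-1 : ℝ) ^ k * ((m - 1).choose k : ℝ) / M else 0)) →
        (∀ i k, 1 ≤ i → i ≤ k → k ≤ n → D i ≤ D k) →
        (∀ i, 1 ≤ i → i ≤ n → 0 ≤ D i) →
        dtValue h n x ≤ dtValue h n D) →
      ∀ q ∈ Set.Ioo (0:ℝ) 1,
        0 ≤ (-1 : ℝ) ^ (m - 1) * iteratedDerivWithin m h (Set.Ioo 0 1) q) ∧
    ((∀ n : ℕ, m ≤ n → ∀ x : ℕ → ℝ,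
        (∀ i j, 1 ≤ i → i ≤ j → j ≤ n → x i ≤ x j) →
        (∀ i, 1 ≤ i → i ≤ n → 0 ≤ x i) →
        ∀ j : ℕ, j + m ≤ n → ∀ M : ℝ, 0 < M → ∀ D : ℕ → ℝ,
        (∀ i, D i = x i + ∑ k ∈ Finset.range m,
            (if i = j + 1 + k then (-1 : ℝ) ^ k * ((m - 1).choose k : ℝ) / M else 0)) →
        (∀ i k, 1 ≤ i → i ≤ k → k ≤ n → D i ≤ D k) →
        (∀ i, 1 ≤ i → i ≤ n → 0 ≤ D i) →
        dtValue h n D ≤ dtValue h n x) →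
      ∀ q ∈ Set.Ioo (0:ℝ) 1,
        (-1 : ℝ) ^ (m - 1) * iteratedDerivWithin m h (Set.Ioo 0 1) q ≤ 0) := by
  have hpow : (-1 : ℝ) ^ m = -(-1 : ℝ) ^ (m - 1) := by
    rw [show m = (m - 1) + 1 by omega, pow_succ]
    simp
  constructor
  · intro H q hq
    by_contra hneg
    push_neg at hneg
    have hlt : 0 < (-1 : ℝ) ^ m * iteratedDerivWithin m h (Set.Ioo 0 1) q := by
      rw [hpow]; nlinarith
    obtain ⟨n, jj, hnm, hjm, hpos⟩ := main_aux m hm h h_smooth q hq hlt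
    obtain ⟨x, D, hx1, hx2, hDdef, hD1, hD2, hdiff⟩ := dt_key m n jj (by omega) hjm h
    have hle := H n hnm x hx1 hx2 jj hjm 1 one_pos D hDdef hD1 hD2
    linarith
  · intro H q hq
    by_contra hneg
    push_neg at hneg
    have hlt : 0 < (-1 : ℝ) ^ m *
        iteratedDerivWithin m (fun y => -h y) (Set.Ioo 0 1) q := by
      rw [iteratedDerivWithin_fun_neg, hpow]
      nlinarith
    obtain ⟨n, jj, hnm, hjm, hpos⟩ := main_aux m hm (fun y => -h y) h_smooth.neg q hq hlt
    rw [finS_neg] at hpos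
    obtain ⟨x, D, hx1, hx2, hDdef, hD1, hD2, hdiff⟩ := dt_key m n jj (by omega) hjm h
    have hle := H n hnm x hx1 hx2 jj hjm 1 one_pos D hDdef hD1 hD2
    linarith
end

section
/- Let n ≥ 1 and let x : {1,…,n} → ℝ be an equiprobable n-state lottery (nondecreasing with nonnegative values). Let δ ≥ 0 and δ' ≥ 0, let a < b and c < d be indices in {1,…,n} with a < c and b < d, and define D(i) = x(i) + δ·1[i=a] − δ·1[i=b] − δ'·1[i=c] + δ'·1[i=d]. Let a' < b' and c' < d' be indices in {1,…,n} with a' < c', b' < d', b' − a' = d − c and d' − c' = b − a, and define C(i) = x(i) − δ'·1[i=a'] + δ'·1[i=b'] + δ·1[i=c'] − δ·1[i=d']. Assume that C and D are each nondecreasing with nonnegative values. Then C and D have the same first and second dual moments: Σ_{i=1}^n D(i) = Σ_{i=1}^n C(i) and Σ_{(i,j) ∈ {1,…,n}²} min(D(i), D(j)) = Σ_{(i,j) ∈ {1,…,n}²} min(C(i), C(j)). -/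
open Finset

lemma sum_min_weight (n : ℕ) (f : ℕ → ℝ) :
    ∑ i ∈ Finset.Icc 1 n, ∑ j ∈ Finset.Icc 1 n, f (min i j)
      = ∑ k ∈ Finset.Icc 1 n, ((2*(n-k)+1 : ℕ) : ℝ) * f k := by
  induction n with
  | zero => simp
  | succ n ih =>
    have h : Finset.Icc 1 (n+1) = insert (n+1) (Finset.Icc 1 n) := by
      ext k; simp [Nat.lt_succ_iff]; omega
    have hni : (n+1) ∉ Finset.Icc 1 n := by simp
    rw [h, Finset.sum_insert hni, Finset.sum_insert hni]
    have h1 : ∑ j ∈ Finset.Icc 1 n, f (min (n+1) j) = ∑ j ∈ Finset.Icc 1 n, f j := by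
      apply Finset.sum_congr rfl
      intro j hj
      simp only [Finset.mem_Icc] at hj
      rw [min_eq_right (by omega)]
    have h2 : ∑ i ∈ Finset.Icc 1 n, ∑ j ∈ insert (n+1) (Finset.Icc 1 n), f (min i j)
        = ∑ i ∈ Finset.Icc 1 n, f i + ∑ i ∈ Finset.Icc 1 n, ∑ j ∈ Finset.Icc 1 n, f (min i j) := by
      rw [← Finset.sum_add_distrib]
      apply Finset.sum_congr rfl
      intro i hi
      simp only [Finset.mem_Icc] at hi
      rw [Finset.sum_insert hni, min_eq_left (by omega)]
    have h3 : ∑ k ∈ Finset.Icc 1 n, ((2*(n+1-k)+1 : ℕ) : ℝ) * f k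
        = ∑ k ∈ Finset.Icc 1 n, (((2*(n-k)+1 : ℕ) : ℝ) * f k + 2 * f k) := by
      apply Finset.sum_congr rfl
      intro k hk
      simp only [Finset.mem_Icc] at hk
      have : (2*(n+1-k)+1 : ℕ) = (2*(n-k)+1) + 2 := by omega
      rw [this]; push_cast; ring
    rw [Finset.sum_insert hni, h1, h2, ih, h3, Finset.sum_add_distrib]
    have h4 : (2*(n+1-(n+1))+1 : ℕ) = 1 := by omega
    rw [h4, min_self, Nat.cast_one, one_mul, ← Finset.mul_sum]
    ring

lemma dual2 (n : ℕ) (y : ℕ → ℝ) (hmono : ∀ i j, 1 ≤ i → i ≤ j → j ≤ n → y i ≤ y j) :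
    ∑ p ∈ Finset.Icc 1 n ×ˢ Finset.Icc 1 n, min (y p.1) (y p.2)
      = ∑ k ∈ Finset.Icc 1 n, ((2*(n-k)+1 : ℕ) : ℝ) * y k := by
  rw [← sum_min_weight, Finset.sum_product]
  apply Finset.sum_congr rfl
  intro i hi
  apply Finset.sum_congr rfl
  intro j hj
  simp only [Finset.mem_Icc] at hi hj
  rcases le_total i j with h | h
  · rw [min_eq_left h, min_eq_left (hmono i j hi.1 h hj.2)]
  · rw [min_eq_right h, min_eq_right (hmono j i hj.1 h hi.2)]

/-- The squeeze-then-anti-squeeze lottery `D` and the anti-squeeze-then-squeeze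
lottery `C` (of the same spans) have the same first and second dual moments. -/
theorem dual_moments_equal_third_order
    (n : ℕ) (hn : 1 ≤ n)
    (x : ℕ → ℝ)
    (hx_mono : ∀ i j, 1 ≤ i → i ≤ j → j ≤ n → x i ≤ x j)
    (hx_nonneg : ∀ i, 1 ≤ i → i ≤ n → 0 ≤ x i)
    (δ δ' : ℝ) (hδ : 0 ≤ δ) (hδ' : 0 ≤ δ')
    (a b c d : ℕ) (ha1 : 1 ≤ a) (hab : a < b) (hcd : c < d)
    (hac : a < c) (hbd : b < d) (hdn : d ≤ n)
    (a' b' c' d' : ℕ) (ha'1 : 1 ≤ a') (hab' : a' < b') (hcd' : c' < d')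
    (hac' : a' < c') (hbd' : b' < d') (hd'n : d' ≤ n)
    (hspan1 : b' - a' = d - c) (hspan2 : d' - c' = b - a)
    (D : ℕ → ℝ)
    (hD : ∀ i, D i = x i + (if i = a then δ else 0) - (if i = b then δ else 0)
        - (if i = c then δ' else 0) + (if i = d then δ' else 0))
    (C : ℕ → ℝ)
    (hC : ∀ i, C i = x i - (if i = a' then δ' else 0) + (if i = b' then δ' else 0)
        + (if i = c' then δ else 0) - (if i = d' then δ else 0))
    (hD_mono : ∀ i j, 1 ≤ i → i ≤ j → j ≤ n → D i ≤ D j)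
    (hD_nonneg : ∀ i, 1 ≤ i → i ≤ n → 0 ≤ D i)
    (hC_mono : ∀ i j, 1 ≤ i → i ≤ j → j ≤ n → C i ≤ C j)
    (hC_nonneg : ∀ i, 1 ≤ i → i ≤ n → 0 ≤ C i) :
    (∑ i ∈ Finset.Icc 1 n, D i = ∑ i ∈ Finset.Icc 1 n, C i) ∧
    (∑ p ∈ Finset.Icc 1 n ×ˢ Finset.Icc 1 n, min (D p.1) (D p.2)
      = ∑ p ∈ Finset.Icc 1 n ×ˢ Finset.Icc 1 n, min (C p.1) (C p.2)) := by
  have hmem : ∀ e : ℕ, 1 ≤ e → e ≤ n → e ∈ Finset.Icc 1 n :=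
    fun e h1 h2 => Finset.mem_Icc.mpr ⟨h1, h2⟩
  have ma : a ∈ Finset.Icc 1 n := hmem a ha1 (by omega)
  have mb : b ∈ Finset.Icc 1 n := hmem b (by omega) (by omega)
  have mc : c ∈ Finset.Icc 1 n := hmem c (by omega) (by omega)
  have md : d ∈ Finset.Icc 1 n := hmem d (by omega) hdn
  have ma' : a' ∈ Finset.Icc 1 n := hmem a' ha'1 (by omega)
  have mb' : b' ∈ Finset.Icc 1 n := hmem b' (by omega) (by omega)
  have mc' : c' ∈ Finset.Icc 1 n := hmem c' (by omega) (by omega)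
  have md' : d' ∈ Finset.Icc 1 n := hmem d' (by omega) hd'n
  have hsum : ∀ (e : ℕ) (v : ℝ), e ∈ Finset.Icc 1 n →
      ∑ i ∈ Finset.Icc 1 n, (if i = e then v else 0) = v := by
    intro e v he
    rw [Finset.sum_ite_eq']
    simp [he]
  have hsum2 : ∀ (e : ℕ) (v : ℝ), e ∈ Finset.Icc 1 n →
      ∑ k ∈ Finset.Icc 1 n, ((2*(n-k)+1 : ℕ) : ℝ) * (if k = e then v else 0)
        = ((2*(n-e)+1 : ℕ) : ℝ) * v := by
    intro e v he
    simp only [mul_ite, mul_zero]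
    rw [Finset.sum_ite_eq']
    simp [he]
  have wcast : ∀ e : ℕ, e ≤ n → ((2*(n-e)+1 : ℕ) : ℝ) = 2*((n:ℝ)-e)+1 := by
    intro e he
    rw [Nat.cast_add, Nat.cast_mul, Nat.cast_sub he]
    norm_num
  have s1 : (b' : ℝ) - a' = (d : ℝ) - c := by
    have h := congrArg (fun m : ℕ => (m : ℝ)) hspan1
    simpa [Nat.cast_sub hab'.le, Nat.cast_sub hcd.le] using h
  have s2 : (d' : ℝ) - c' = (b : ℝ) - a := by
    have h := congrArg (fun m : ℕ => (m : ℝ)) hspan2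
    simpa [Nat.cast_sub hcd'.le, Nat.cast_sub hab.le] using h
  constructor
  · simp only [hD, hC]
    rw [Finset.sum_add_distrib, Finset.sum_sub_distrib, Finset.sum_sub_distrib,
      Finset.sum_add_distrib, Finset.sum_sub_distrib, Finset.sum_add_distrib,
      Finset.sum_add_distrib, Finset.sum_sub_distrib,
      hsum a δ ma, hsum b δ mb, hsum c δ' mc, hsum d δ' md,
      hsum a' δ' ma', hsum b' δ' mb', hsum c' δ mc', hsum d' δ md']
    ring
  · rw [dual2 n D hD_mono, dual2 n C hC_mono]
    simp only [hD, hC, mul_add, mul_sub]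
    rw [Finset.sum_add_distrib, Finset.sum_sub_distrib, Finset.sum_sub_distrib,
      Finset.sum_add_distrib, Finset.sum_sub_distrib, Finset.sum_add_distrib,
      Finset.sum_add_distrib, Finset.sum_sub_distrib,
      hsum2 a δ ma, hsum2 b δ mb, hsum2 c δ' mc, hsum2 d δ' md,
      hsum2 a' δ' ma', hsum2 b' δ' mb', hsum2 c' δ mc', hsum2 d' δ md',
      wcast a (by omega), wcast b (by omega), wcast c (by omega), wcast d hdn,
      wcast a' (by omega), wcast b' (by omega), wcast c' (by omega), wcast d' hd'n]
    linear_combination 2*δ'*s1 - 2*δ*s2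
end

section
/- Let n ≥ 1 and let x : {1,…,n} → ℝ be an equiprobable n-state lottery (nondecreasing with nonnegative values). Let δ ≥ 0 and δ' ≥ 0. Let s₁ < s₂ ≤ s₃ < s₄ in {1,…,n} with s₂ − s₁ = s₄ − s₃, and t₁ < t₂ ≤ t₃ < t₄ in {1,…,n} with t₂ − t₁ = t₄ − t₃, such that s₁ < t₁ and s₄ < t₄; define D(i) = x(i) + δ·(1[i=s₁] − 1[i=s₂] − 1[i=s₃] + 1[i=s₄]) + δ'·(−1[i=t₁] + 1[i=t₂] + 1[i=t₃] − 1[i=t₄]). Let r, r' be integers with uⱼ := tⱼ + r and vⱼ := sⱼ + r' all in {1,…,n}, u₁ < v₁ and u₄ < v₄; define C(i) = x(i) + δ'·(−1[i=u₁] + 1[i=u₂] + 1[i=u₃] − 1[i=u₄]) + δ·(1[i=v₁] − 1[i=v₂] − 1[i=v₃] + 1[i=v₄]). Assume that C and D are each nondecreasing with nonnegative values. Then C and D have the same first, second, and third dual moments; in particular Σ_{(i,j,k) ∈ {1,…,n}³} min(D(i), D(j), D(k)) = Σ_{(i,j,k) ∈ {1,…,n}³} min(C(i), C(j), C(k)).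 -/
open Finset

lemma sq_sum' (a m : ℕ) : ∑ k ∈ Icc a (a+m), (2*(a+m-k)+1) = (m+1)^2 := by
  induction m with
  | zero => simp
  | succ m ih =>
    have h : a ≤ a + m + 1 := by omega
    have h0 : ∑ k ∈ Icc a (a+(m+1)), (2*(a+(m+1)-k)+1)
        = ∑ k ∈ Icc a (a+m), (2*(a+(m+1)-k)+1) + (2*(a+(m+1)-(a+m+1))+1) := by
      rw [show a+(m+1) = (a+m)+1 from rfl, Finset.sum_Icc_succ_top h]
    rw [h0]
    have h2 : ∑ k ∈ Icc a (a+m), (2*(a+(m+1)-k)+1)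
        = ∑ k ∈ Icc a (a+m), ((2*(a+m-k)+1) + 2) := by
      apply Finset.sum_congr rfl
      intro k hk
      simp only [mem_Icc] at hk
      omega
    rw [h2, Finset.sum_add_distrib, ih, Finset.sum_const, Nat.card_Icc, smul_eq_mul]
    have e1 : (m+1)^2 = m^2+2*m+1 := by ring
    have e2 : (m+1+1)^2 = m^2+4*m+4 := by ring
    omega

lemma sq_sum (a n : ℕ) : ∑ k ∈ Icc a n, (2*(n-k)+1) = (n+1-a)^2 := by
  rcases le_or_gt a n with h | h
  · have := sq_sum' a (n - a)
    rw [show a + (n-a) = n by omega] at this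
    rw [this]; congr 1; omega
  · rw [Finset.Icc_eq_empty (by omega)]
    simp [show n+1-a = 0 by omega]

lemma inner_split (n i : ℕ) (h1 : 1 ≤ i) (h2 : i ≤ n) (g : ℕ → ℝ) :
    ∑ j ∈ Icc 1 n, g (min i j) = (∑ j ∈ Icc 1 i, g j) + (n - i : ℕ) * g i := by
  have h : ∀ j ∈ Icc 1 n, g (min i j) = if j ≤ i then g j else g i := by
    intro j hj
    rcases le_or_gt j i with h | h
    · rw [if_pos h, min_eq_right h]
    · rw [if_neg (by omega), min_eq_left h.le]
  rw [Finset.sum_congr rfl h, Finset.sum_ite]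
  have e1 : Finset.filter (fun j => j ≤ i) (Icc 1 n) = Icc 1 i := by
    ext j; simp only [mem_filter, mem_Icc]; omega
  have e2 : Finset.filter (fun j => ¬ j ≤ i) (Icc 1 n) = Ioc i n := by
    ext j; simp only [mem_filter, mem_Icc, mem_Ioc]; omega
  rw [e1, e2, Finset.sum_const, Nat.card_Ioc, nsmul_eq_mul]

lemma swap_tri (n : ℕ) (g : ℕ → ℕ → ℝ) :
    ∑ i ∈ Icc 1 n, ∑ j ∈ Icc 1 i, g i j = ∑ j ∈ Icc 1 n, ∑ i ∈ Icc j n, g i j := by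
  apply Finset.sum_comm'
  intro i j
  simp only [mem_Icc]
  omega

lemma pair_sum (n : ℕ) (g : ℕ → ℝ) :
    ∑ p ∈ Icc 1 n ×ˢ Icc 1 n, g (min p.1 p.2)
      = ∑ k ∈ Icc 1 n, ((2*(n-k)+1 : ℕ) : ℝ) * g k := by
  rw [Finset.sum_product]
  have h : ∀ i ∈ Icc 1 n, ∑ j ∈ Icc 1 n, g (min i j)
      = (∑ j ∈ Icc 1 i, g j) + (n - i : ℕ) * g i := by
    intro i hi
    simp only [mem_Icc] at hi
    exact inner_split n i hi.1 hi.2 g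
  rw [Finset.sum_congr rfl h, Finset.sum_add_distrib,
    swap_tri n (fun i j => g j)]
  have h2 : ∀ j ∈ Icc 1 n, ∑ _i ∈ Icc j n, g j = ((n+1-j : ℕ) : ℝ) * g j := by
    intro j hj
    rw [Finset.sum_const, Nat.card_Icc, nsmul_eq_mul]
  rw [Finset.sum_congr rfl h2, ← Finset.sum_add_distrib]
  apply Finset.sum_congr rfl
  intro k hk
  simp only [mem_Icc] at hk
  rw [← add_mul]
  congr 1
  push_cast [show n+1-k = (n-k)+1 by omega]
  ring

lemma triple_sum (n : ℕ) (g : ℕ → ℝ) :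
    ∑ p ∈ Icc 1 n ×ˢ (Icc 1 n ×ˢ Icc 1 n), g (min p.1 (min p.2.1 p.2.2))
      = ∑ k ∈ Icc 1 n, (((n+1-k)^2 + (2*(n-k)+1)*(n-k) : ℕ) : ℝ) * g k := by
  rw [Finset.sum_product]
  have step1 : ∀ i ∈ Icc 1 n, ∑ q ∈ Icc 1 n ×ˢ Icc 1 n, g (min i (min q.1 q.2))
      = ∑ k ∈ Icc 1 n, ((2*(n-k)+1 : ℕ) : ℝ) * g (min i k) := by
    intro i _
    exact pair_sum n (fun m => g (min i m))
  rw [Finset.sum_congr rfl step1, Finset.sum_comm]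
  have step2 : ∀ k ∈ Icc 1 n, ∑ i ∈ Icc 1 n, ((2*(n-k)+1 : ℕ) : ℝ) * g (min i k)
      = ((2*(n-k)+1 : ℕ) : ℝ) * ((∑ i ∈ Icc 1 k, g i) + (n - k : ℕ) * g k) := by
    intro k hk
    simp only [mem_Icc] at hk
    rw [← Finset.mul_sum]
    congr 1
    rw [← inner_split n k hk.1 hk.2 g]
    exact Finset.sum_congr rfl fun i _ => by rw [min_comm]
  rw [Finset.sum_congr rfl step2]
  have step3 : ∀ k ∈ Icc 1 n, ((2*(n-k)+1 : ℕ) : ℝ) * ((∑ i ∈ Icc 1 k, g i) + (n - k : ℕ) * g k)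
      = (∑ i ∈ Icc 1 k, ((2*(n-k)+1 : ℕ) : ℝ) * g i) + ((2*(n-k)+1 : ℕ) : ℝ) * ((n - k : ℕ) * g k) := by
    intro k _
    rw [mul_add, Finset.mul_sum]
  rw [Finset.sum_congr rfl step3, Finset.sum_add_distrib,
    swap_tri n (fun k i => ((2*(n-k)+1 : ℕ) : ℝ) * g i)]
  have step4 : ∀ i ∈ Icc 1 n, ∑ k ∈ Icc i n, ((2*(n-k)+1 : ℕ) : ℝ) * g i
      = (((n+1-i)^2 : ℕ) : ℝ) * g i := by
    intro i _
    rw [← Finset.sum_mul]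
    congr 1
    rw [← Nat.cast_sum, sq_sum i n]
  rw [Finset.sum_congr rfl step4, ← Finset.sum_add_distrib]
  apply Finset.sum_congr rfl
  intro k _
  push_cast
  ring

lemma min_eq_fmin (n : ℕ) (f : ℕ → ℝ) (hm : ∀ i j, 1 ≤ i → i ≤ j → j ≤ n → f i ≤ f j)
    (i j : ℕ) (hi1 : 1 ≤ i) (hin : i ≤ n) (hj1 : 1 ≤ j) (hjn : j ≤ n) :
    min (f i) (f j) = f (min i j) := by
  rcases le_total i j with h | h
  · rw [min_eq_left (hm i j hi1 h hjn), min_eq_left h]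
  · rw [min_eq_right (hm j i hj1 h hin), min_eq_right h]

lemma sum_w_pat (n a b c d : ℕ) (w : ℕ → ℝ)
    (ha1 : 1 ≤ a) (han : a ≤ n) (hb1 : 1 ≤ b) (hbn : b ≤ n)
    (hc1 : 1 ≤ c) (hcn : c ≤ n) (hd1 : 1 ≤ d) (hdn : d ≤ n) :
    ∑ k ∈ Icc 1 n, w k * ((if k = a then (1:ℝ) else 0) - (if k = b then 1 else 0)
        - (if k = c then 1 else 0) + (if k = d then 1 else 0))
      = w a - w b - w c + w d := by
  have h : ∀ k ∈ Icc 1 n, w k * ((if k = a then (1:ℝ) else 0) - (if k = b then 1 else 0)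
        - (if k = c then 1 else 0) + (if k = d then 1 else 0))
      = ((if k = a then w k else 0) - (if k = b then w k else 0))
        - (if k = c then w k else 0) + (if k = d then w k else 0) := by
    intro k _
    split_ifs <;> ring
  rw [Finset.sum_congr rfl h]
  simp only [Finset.sum_add_distrib, Finset.sum_sub_distrib, Finset.sum_ite_eq']
  rw [if_pos (mem_Icc.mpr ⟨ha1, han⟩), if_pos (mem_Icc.mpr ⟨hb1, hbn⟩),
    if_pos (mem_Icc.mpr ⟨hc1, hcn⟩), if_pos (mem_Icc.mpr ⟨hd1, hdn⟩)]

/-- The good-pattern-then-bad-pattern lottery `D` and the bad-pattern-then-good-pattern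
lottery `C` at the fourth order have the same first, second and third dual moments. -/
theorem dual_moments_equal_fourth_order
    (n : ℕ) (hn : 1 ≤ n)
    (x : ℕ → ℝ)
    (hx_mono : ∀ i j, 1 ≤ i → i ≤ j → j ≤ n → x i ≤ x j)
    (hx_nonneg : ∀ i, 1 ≤ i → i ≤ n → 0 ≤ x i)
    (δ δ' : ℝ) (hδ : 0 ≤ δ) (hδ' : 0 ≤ δ')
    (s₁ s₂ s₃ s₄ t₁ t₂ t₃ t₄ : ℕ)
    (hs1 : 1 ≤ s₁) (hs12 : s₁ < s₂) (hs23 : s₂ ≤ s₃) (hs34 : s₃ < s₄)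
    (hssym : s₂ - s₁ = s₄ - s₃) (hs4n : s₄ ≤ n)
    (ht12 : t₁ < t₂) (ht23 : t₂ ≤ t₃) (ht34 : t₃ < t₄)
    (htsym : t₂ - t₁ = t₄ - t₃) (ht4n : t₄ ≤ n)
    (hst1 : s₁ < t₁) (hst4 : s₄ < t₄)
    (D : ℕ → ℝ)
    (hD : ∀ i, D i = x i
        + δ * ((if i = s₁ then 1 else 0) - (if i = s₂ then 1 else 0)
            - (if i = s₃ then 1 else 0) + (if i = s₄ then 1 else 0))
        + δ' * (-(if i = t₁ then 1 else 0) + (if i = t₂ then 1 else 0)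
            + (if i = t₃ then 1 else 0) - (if i = t₄ then 1 else 0)))
    (r r' : ℤ) (u₁ u₂ u₃ u₄ v₁ v₂ v₃ v₄ : ℕ)
    (hu1 : (u₁ : ℤ) = t₁ + r) (hu2 : (u₂ : ℤ) = t₂ + r)
    (hu3 : (u₃ : ℤ) = t₃ + r) (hu4 : (u₄ : ℤ) = t₄ + r)
    (hv1 : (v₁ : ℤ) = s₁ + r') (hv2 : (v₂ : ℤ) = s₂ + r')
    (hv3 : (v₃ : ℤ) = s₃ + r') (hv4 : (v₄ : ℤ) = s₄ + r')
    (hu1ge : 1 ≤ u₁) (hv4n : v₄ ≤ n) (hu4n : u₄ ≤ n) (hv1ge : 1 ≤ v₁)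
    (huv1 : u₁ < v₁) (huv4 : u₄ < v₄)
    (C : ℕ → ℝ)
    (hC : ∀ i, C i = x i
        + δ' * (-(if i = u₁ then 1 else 0) + (if i = u₂ then 1 else 0)
            + (if i = u₃ then 1 else 0) - (if i = u₄ then 1 else 0))
        + δ * ((if i = v₁ then 1 else 0) - (if i = v₂ then 1 else 0)
            - (if i = v₃ then 1 else 0) + (if i = v₄ then 1 else 0)))
    (hD_mono : ∀ i j, 1 ≤ i → i ≤ j → j ≤ n → D i ≤ D j)
    (hD_nonneg : ∀ i, 1 ≤ i → i ≤ n → 0 ≤ D i)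
    (hC_mono : ∀ i j, 1 ≤ i → i ≤ j → j ≤ n → C i ≤ C j)
    (hC_nonneg : ∀ i, 1 ≤ i → i ≤ n → 0 ≤ C i) :
    (∑ i ∈ Finset.Icc 1 n, D i = ∑ i ∈ Finset.Icc 1 n, C i) ∧
    (∑ p ∈ Finset.Icc 1 n ×ˢ Finset.Icc 1 n, min (D p.1) (D p.2)
      = ∑ p ∈ Finset.Icc 1 n ×ˢ Finset.Icc 1 n, min (C p.1) (C p.2)) ∧
    (∑ p ∈ Finset.Icc 1 n ×ˢ Finset.Icc 1 n ×ˢ Finset.Icc 1 n,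
        min (D p.1) (min (D p.2.1) (D p.2.2))
      = ∑ p ∈ Finset.Icc 1 n ×ˢ Finset.Icc 1 n ×ˢ Finset.Icc 1 n,
          min (C p.1) (min (C p.2.1) (C p.2.2))) := by
  -- memberships of all 16 points
  have hm_s1 : 1 ≤ s₁ ∧ s₁ ≤ n := by omega
  have hm_s2 : 1 ≤ s₂ ∧ s₂ ≤ n := by omega
  have hm_s3 : 1 ≤ s₃ ∧ s₃ ≤ n := by omega
  have hm_s4 : 1 ≤ s₄ ∧ s₄ ≤ n := by omega
  have hm_t1 : 1 ≤ t₁ ∧ t₁ ≤ n := by omega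
  have hm_t2 : 1 ≤ t₂ ∧ t₂ ≤ n := by omega
  have hm_t3 : 1 ≤ t₃ ∧ t₃ ≤ n := by omega
  have hm_t4 : 1 ≤ t₄ ∧ t₄ ≤ n := by omega
  have hm_u1 : 1 ≤ u₁ ∧ u₁ ≤ n := by omega
  have hm_u2 : 1 ≤ u₂ ∧ u₂ ≤ n := by omega
  have hm_u3 : 1 ≤ u₃ ∧ u₃ ≤ n := by omega
  have hm_u4 : 1 ≤ u₄ ∧ u₄ ≤ n := by omega
  have hm_v1 : 1 ≤ v₁ ∧ v₁ ≤ n := by omega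
  have hm_v2 : 1 ≤ v₂ ∧ v₂ ≤ n := by omega
  have hm_v3 : 1 ≤ v₃ ∧ v₃ ≤ n := by omega
  have hm_v4 : 1 ≤ v₄ ∧ v₄ ≤ n := by omega
  -- weighted sums of D and C
  have hwD : ∀ w : ℕ → ℝ, ∑ k ∈ Icc 1 n, w k * D k
      = (∑ k ∈ Icc 1 n, w k * x k)
        + δ * (w s₁ - w s₂ - w s₃ + w s₄) - δ' * (w t₁ - w t₂ - w t₃ + w t₄) := by
    intro w
    have h : ∀ k ∈ Icc 1 n, w k * D k = w k * x k
        + δ * (w k * ((if k = s₁ then (1:ℝ) else 0) - (if k = s₂ then 1 else 0)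
            - (if k = s₃ then 1 else 0) + (if k = s₄ then 1 else 0)))
        - δ' * (w k * ((if k = t₁ then (1:ℝ) else 0) - (if k = t₂ then 1 else 0)
            - (if k = t₃ then 1 else 0) + (if k = t₄ then 1 else 0))) := by
      intro k _
      rw [hD k]; ring
    rw [Finset.sum_congr rfl h, Finset.sum_sub_distrib, Finset.sum_add_distrib,
      ← Finset.mul_sum, ← Finset.mul_sum,
      sum_w_pat n s₁ s₂ s₃ s₄ w hm_s1.1 hm_s1.2 hm_s2.1 hm_s2.2 hm_s3.1 hm_s3.2 hm_s4.1 hm_s4.2,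
      sum_w_pat n t₁ t₂ t₃ t₄ w hm_t1.1 hm_t1.2 hm_t2.1 hm_t2.2 hm_t3.1 hm_t3.2 hm_t4.1 hm_t4.2]
  have hwC : ∀ w : ℕ → ℝ, ∑ k ∈ Icc 1 n, w k * C k
      = (∑ k ∈ Icc 1 n, w k * x k)
        + δ * (w v₁ - w v₂ - w v₃ + w v₄) - δ' * (w u₁ - w u₂ - w u₃ + w u₄) := by
    intro w
    have h : ∀ k ∈ Icc 1 n, w k * C k = w k * x k
        + δ * (w k * ((if k = v₁ then (1:ℝ) else 0) - (if k = v₂ then 1 else 0)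
            - (if k = v₃ then 1 else 0) + (if k = v₄ then 1 else 0)))
        - δ' * (w k * ((if k = u₁ then (1:ℝ) else 0) - (if k = u₂ then 1 else 0)
            - (if k = u₃ then 1 else 0) + (if k = u₄ then 1 else 0))) := by
      intro k _
      rw [hC k]; ring
    rw [Finset.sum_congr rfl h, Finset.sum_sub_distrib, Finset.sum_add_distrib,
      ← Finset.mul_sum, ← Finset.mul_sum,
      sum_w_pat n v₁ v₂ v₃ v₄ w hm_v1.1 hm_v1.2 hm_v2.1 hm_v2.2 hm_v3.1 hm_v3.2 hm_v4.1 hm_v4.2,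
      sum_w_pat n u₁ u₂ u₃ u₄ w hm_u1.1 hm_u1.2 hm_u2.1 hm_u2.2 hm_u3.1 hm_u3.2 hm_u4.1 hm_u4.2]
  have key : ∀ w : ℕ → ℝ,
      (w s₁ - w s₂ - w s₃ + w s₄ = w v₁ - w v₂ - w v₃ + w v₄) →
      (w t₁ - w t₂ - w t₃ + w t₄ = w u₁ - w u₂ - w u₃ + w u₄) →
      ∑ k ∈ Icc 1 n, w k * D k = ∑ k ∈ Icc 1 n, w k * C k := by
    intro w h1 h2
    rw [hwD w, hwC w, h1, h2]
  -- real cast relations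
  have hv1R : (v₁ : ℝ) = (s₁ : ℝ) + (r' : ℤ) := by exact_mod_cast hv1
  have hv2R : (v₂ : ℝ) = (s₂ : ℝ) + (r' : ℤ) := by exact_mod_cast hv2
  have hv3R : (v₃ : ℝ) = (s₃ : ℝ) + (r' : ℤ) := by exact_mod_cast hv3
  have hv4R : (v₄ : ℝ) = (s₄ : ℝ) + (r' : ℤ) := by exact_mod_cast hv4
  have hu1R : (u₁ : ℝ) = (t₁ : ℝ) + (r : ℤ) := by exact_mod_cast hu1
  have hu2R : (u₂ : ℝ) = (t₂ : ℝ) + (r : ℤ) := by exact_mod_cast hu2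
  have hu3R : (u₃ : ℝ) = (t₃ : ℝ) + (r : ℤ) := by exact_mod_cast hu3
  have hu4R : (u₄ : ℝ) = (t₄ : ℝ) + (r : ℤ) := by exact_mod_cast hu4
  have hs4R : (s₄ : ℝ) = (s₂ : ℝ) + (s₃ : ℝ) - (s₁ : ℝ) := by
    have h0 : s₁ + s₄ = s₂ + s₃ := by omega
    have h1 : (s₁ : ℝ) + (s₄ : ℝ) = (s₂ : ℝ) + (s₃ : ℝ) := by exact_mod_cast h0
    linarith
  have ht4R : (t₄ : ℝ) = (t₂ : ℝ) + (t₃ : ℝ) - (t₁ : ℝ) := by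
    have h0 : t₁ + t₄ = t₂ + t₃ := by omega
    have h1 : (t₁ : ℝ) + (t₄ : ℝ) = (t₂ : ℝ) + (t₃ : ℝ) := by exact_mod_cast h0
    linarith
  -- cast lemmas for the coefficient polynomials
  have cast2 : ∀ a : ℕ, a ≤ n → ((2*(n-a)+1 : ℕ) : ℝ) = 2*((n:ℝ) - a) + 1 := by
    intro a h
    have e1 : ((n - a : ℕ) : ℝ) = (n : ℝ) - a := by
      rw [Nat.cast_sub h]
    push_cast [e1]
    ring
  have cast3 : ∀ a : ℕ, a ≤ n →
      (((n+1-a)^2 + (2*(n-a)+1)*(n-a) : ℕ) : ℝ)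
        = ((n:ℝ)+1-a)^2 + (2*((n:ℝ)-a)+1)*((n:ℝ)-a) := by
    intro a h
    have e1 : ((n - a : ℕ) : ℝ) = (n : ℝ) - a := by
      rw [Nat.cast_sub h]
    have e2 : ((n + 1 - a : ℕ) : ℝ) = (n : ℝ) + 1 - a := by
      rw [Nat.cast_sub (by omega)]
      push_cast
      ring
    push_cast [e1, e2]
    ring
  refine ⟨?_, ?_, ?_⟩
  · -- first moment
    have eD : ∑ i ∈ Icc 1 n, D i = ∑ k ∈ Icc 1 n, (fun _ : ℕ => (1:ℝ)) k * D k := by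
      simp
    have eC : ∑ i ∈ Icc 1 n, C i = ∑ k ∈ Icc 1 n, (fun _ : ℕ => (1:ℝ)) k * C k := by
      simp
    rw [eD, eC]
    exact key _ (by norm_num) (by norm_num)
  · -- second moment
    have eD : ∀ p ∈ Icc 1 n ×ˢ Icc 1 n, min (D p.1) (D p.2) = D (min p.1 p.2) := by
      intro p hp
      simp only [mem_product, mem_Icc] at hp
      exact min_eq_fmin n D hD_mono p.1 p.2 hp.1.1 hp.1.2 hp.2.1 hp.2.2
    have eC : ∀ p ∈ Icc 1 n ×ˢ Icc 1 n, min (C p.1) (C p.2) = C (min p.1 p.2) := by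
      intro p hp
      simp only [mem_product, mem_Icc] at hp
      exact min_eq_fmin n C hC_mono p.1 p.2 hp.1.1 hp.1.2 hp.2.1 hp.2.2
    rw [Finset.sum_congr rfl eD, Finset.sum_congr rfl eC, pair_sum n D, pair_sum n C]
    apply key (fun k => ((2*(n-k)+1 : ℕ) : ℝ))
    · rw [cast2 s₁ hm_s1.2, cast2 s₂ hm_s2.2, cast2 s₃ hm_s3.2, cast2 s₄ hm_s4.2,
        cast2 v₁ hm_v1.2, cast2 v₂ hm_v2.2, cast2 v₃ hm_v3.2, cast2 v₄ hm_v4.2,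
        hv1R, hv2R, hv3R, hv4R, hs4R]
      ring
    · rw [cast2 t₁ hm_t1.2, cast2 t₂ hm_t2.2, cast2 t₃ hm_t3.2, cast2 t₄ hm_t4.2,
        cast2 u₁ hm_u1.2, cast2 u₂ hm_u2.2, cast2 u₃ hm_u3.2, cast2 u₄ hm_u4.2,
        hu1R, hu2R, hu3R, hu4R, ht4R]
      ring
  · -- third moment
    have eD : ∀ p ∈ Icc 1 n ×ˢ (Icc 1 n ×ˢ Icc 1 n),
        min (D p.1) (min (D p.2.1) (D p.2.2)) = D (min p.1 (min p.2.1 p.2.2)) := by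
      intro p hp
      simp only [mem_product, mem_Icc] at hp
      rw [min_eq_fmin n D hD_mono p.2.1 p.2.2 hp.2.1.1 hp.2.1.2 hp.2.2.1 hp.2.2.2,
        min_eq_fmin n D hD_mono p.1 (min p.2.1 p.2.2) hp.1.1 hp.1.2
          (le_min hp.2.1.1 hp.2.2.1) ((min_le_left _ _).trans hp.2.1.2)]
    have eC : ∀ p ∈ Icc 1 n ×ˢ (Icc 1 n ×ˢ Icc 1 n),
        min (C p.1) (min (C p.2.1) (C p.2.2)) = C (min p.1 (min p.2.1 p.2.2)) := by
      intro p hp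
      simp only [mem_product, mem_Icc] at hp
      rw [min_eq_fmin n C hC_mono p.2.1 p.2.2 hp.2.1.1 hp.2.1.2 hp.2.2.1 hp.2.2.2,
        min_eq_fmin n C hC_mono p.1 (min p.2.1 p.2.2) hp.1.1 hp.1.2
          (le_min hp.2.1.1 hp.2.2.1) ((min_le_left _ _).trans hp.2.1.2)]
    rw [Finset.sum_congr rfl eD, Finset.sum_congr rfl eC, triple_sum n D, triple_sum n C]
    apply key (fun k => (((n+1-k)^2 + (2*(n-k)+1)*(n-k) : ℕ) : ℝ))
    · rw [cast3 s₁ hm_s1.2, cast3 s₂ hm_s2.2, cast3 s₃ hm_s3.2, cast3 s₄ hm_s4.2,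
        cast3 v₁ hm_v1.2, cast3 v₂ hm_v2.2, cast3 v₃ hm_v3.2, cast3 v₄ hm_v4.2,
        hv1R, hv2R, hv3R, hv4R, hs4R]
      ring
    · rw [cast3 t₁ hm_t1.2, cast3 t₂ hm_t2.2, cast3 t₃ hm_t3.2, cast3 t₄ hm_t4.2,
        cast3 u₁ hm_u1.2, cast3 u₂ hm_u2.2, cast3 u₃ hm_u3.2, cast3 u₄ hm_u4.2,
        hu1R, hu2R, hu3R, hu4R, ht4R]
      ring
end

section
/- Let m ≥ 2, n ≥ 1, and let x : {1,…,n} → ℝ be an equiprobable n-state lottery (nondecreasing with nonnegative values). Let g and g' be nonzero elements of 𝒫_m with supports contained in {1,…,n} such that min supp g < min supp g' and max supp g < max supp g', and define D(i) = x(i) + g(i) − g'(i). Let r and r' be integers such that the translates i ↦ g'(i − r) and i ↦ g(i − r') have supports contained in {1,…,n} with min supp g' + r < min supp g + r' and max supp g' + r < max supp g + r', and define C(i) = x(i) − g'(i − r) + g(i − r'). Assume that C and D are each nondecreasing with nonnegative values. Then for every integer s with 1 ≤ s ≤ m − 1, the s-th dual moments of C and D coincide: Σ_{t : {1,…,s}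 → {1,…,n}} min_{1≤j≤s} D(t(j)) = Σ_{t : {1,…,s} → {1,…,n}} min_{1≤j≤s} C(t(j)). -/
open Finset Polynomial

/-- The recursively defined family `𝒫_m` of `m`-th order good increment patterns:
`𝒫₂` consists of the functions `i ↦ δ·1[i = a]` with `δ ≥ 0`, and `𝒫_m` (for `m ≥ 3`)
consists of the functions `i ↦ p(i) − p(i − k)` with `p ∈ 𝒫_{m−1}` and `k ≥ 1`. -/
inductive IsGoodPattern : ℕ → (ℤ → ℝ) → Prop where
  | base (δ : ℝ) (hδ : 0 ≤ δ) (a : ℤ) :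
      IsGoodPattern 2 (fun i => if i = a then δ else 0)
  | step (m : ℕ) (hm : 2 ≤ m) (p : ℤ → ℝ) (k : ℤ) (hk : 1 ≤ k) :
      IsGoodPattern m p → IsGoodPattern (m + 1) (fun i => p i - p (i - k))

lemma goodPattern_support_finite {m : ℕ} {g : ℤ → ℝ} (h : IsGoodPattern m g) :
    (Function.support g).Finite := by
  induction h with
  | base δ hδ a =>
    refine (Set.finite_singleton a).subset ?_
    intro i hi
    simp only [Function.mem_support, ne_eq] at hi
    by_contra hne
    simp only [Set.mem_singleton_iff] at hne
    simp [hne] at hi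
  | step m hm p k hk hp ih =>
    refine (ih.union (ih.image (· + k))).subset ?_
    intro i hi
    simp only [Function.mem_support, ne_eq] at hi
    by_contra hne
    simp only [Set.mem_union, Set.mem_image, Function.mem_support, not_or, not_exists,
      not_and, not_not] at hne
    obtain ⟨h1, h2⟩ := hne
    have h3 : p (i - k) = 0 := by
      by_contra h3
      exact h2 (i - k) h3 (by ring)
    simp [h1, h3] at hi

lemma degree_sub_comp_lt (Q : Polynomial ℝ) (c : ℝ) (h0 : Q.natDegree ≠ 0) :
    (Q - Q.comp (X + C c)).degree < Q.degree := by
  have hQ0 : Q ≠ 0 := fun h => h0 (by simp [h])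
  have hnd : (Q.comp (X + C c)).natDegree = Q.natDegree := by
    rw [natDegree_comp, natDegree_X_add_C, mul_one]
  have hlc : (Q.comp (X + C c)).leadingCoeff = Q.leadingCoeff := by
    rw [leadingCoeff_comp (by rw [natDegree_X_add_C]; exact one_ne_zero),
      leadingCoeff_X_add_C, one_pow, mul_one]
  have hcomp0 : Q.comp (X + C c) ≠ 0 := by
    intro h
    rw [h] at hlc
    exact hQ0 (leadingCoeff_eq_zero.mp hlc.symm)
  have hdeg : Q.degree = (Q.comp (X + C c)).degree := by
    rw [degree_eq_natDegree hQ0, degree_eq_natDegree hcomp0, hnd]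
  exact degree_sub_lt hdeg hQ0 hlc.symm

lemma finsum_shift_sub (p : ℤ → ℝ) (hp : (Function.support p).Finite)
    (Q : Polynomial ℝ) (c : ℤ) :
    ∑ᶠ j : ℤ, (p j - p (j - c)) * Q.eval (j : ℝ)
      = ∑ᶠ j : ℤ, p j * (Q - Q.comp (X + C (c : ℝ))).eval (j : ℝ) := by
  have h1 : (Function.support fun j : ℤ => p j * Q.eval (j : ℝ)).Finite :=
    hp.subset (Function.support_mul_subset_left _ _)
  have h2 : (Function.support fun j : ℤ => p (j - c) * Q.eval (j : ℝ)).Finite := by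
    refine (hp.image (· + c)).subset ?_
    intro j hj
    simp only [Function.mem_support, ne_eq] at hj
    exact ⟨j - c, fun h => hj (by simp [h]), by ring⟩
  have h3 : (Function.support fun j : ℤ => p j * Q.eval ((j : ℝ) + (c : ℝ))).Finite :=
    hp.subset (Function.support_mul_subset_left _ _)
  calc ∑ᶠ j : ℤ, (p j - p (j - c)) * Q.eval (j : ℝ)
      = ∑ᶠ j : ℤ, (p j * Q.eval (j : ℝ) - p (j - c) * Q.eval (j : ℝ)) := by
        apply finsum_congr; intro j; ring
    _ = (∑ᶠ j : ℤ, p j * Q.eval (j : ℝ)) - ∑ᶠ j : ℤ, p (j - c) * Q.eval (j : ℝ) :=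
        finsum_sub_distrib h1 h2
    _ = (∑ᶠ j : ℤ, p j * Q.eval (j : ℝ)) - ∑ᶠ j : ℤ, p j * Q.eval ((j : ℝ) + (c : ℝ)) := by
        congr 1
        rw [← finsum_comp_equiv (Equiv.addRight c)
          (f := fun j : ℤ => p (j - c) * Q.eval (j : ℝ))]
        apply finsum_congr; intro j
        simp only [Equiv.coe_addRight, add_sub_cancel_right]
        push_cast
        ring
    _ = ∑ᶠ j : ℤ, p j * (Q.eval (j : ℝ) - Q.eval ((j : ℝ) + (c : ℝ))) := by
        rw [← finsum_sub_distrib h1 h3]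
        apply finsum_congr; intro j; ring
    _ = ∑ᶠ j : ℤ, p j * (Q - Q.comp (X + C (c : ℝ))).eval (j : ℝ) := by
        apply finsum_congr; intro j
        simp [eval_comp]

lemma goodPattern_finsum_eq_zero {m : ℕ} {g : ℤ → ℝ} (h : IsGoodPattern m g) :
    ∀ q : Polynomial ℝ, (q = 0 ∨ q.natDegree + 3 ≤ m) →
      ∑ᶠ i : ℤ, g i * q.eval (i : ℝ) = 0 := by
  induction h with
  | base δ hδ a =>
    intro q hq
    have hq0 : q = 0 := by
      rcases hq with h | h
      · exact h
      · omega
    simp [hq0]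
  | step m hm p k hk hp ih =>
    intro q hq
    rw [finsum_shift_sub p (goodPattern_support_finite hp) q k]
    apply ih
    by_cases h0 : q.natDegree = 0
    · left
      obtain ⟨a, ha⟩ := natDegree_eq_zero.mp h0
      rw [← ha]; simp
    · rcases hq with rfl | hq
      · simp at h0
      by_cases h1 : q - q.comp (X + C (k : ℝ)) = 0
      · left; exact h1
      · right
        have := natDegree_lt_natDegree h1 (degree_sub_comp_lt q (k : ℝ) h0)
        omega

lemma key_vanish {m : ℕ} {g : ℤ → ℝ} (hg : IsGoodPattern m g)
    (Q : Polynomial ℝ) (hQ : Q.natDegree + 2 ≤ m) (c : ℤ) :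
    ∑ᶠ j : ℤ, (g j - g (j - c)) * Q.eval (j : ℝ) = 0 := by
  rw [finsum_shift_sub g (goodPattern_support_finite hg) Q c]
  apply goodPattern_finsum_eq_zero hg
  by_cases h0 : Q.natDegree = 0
  · left
    obtain ⟨a, ha⟩ := natDegree_eq_zero.mp h0
    rw [← ha]; simp
  by_cases h1 : Q - Q.comp (X + C (c : ℝ)) = 0
  · left; exact h1
  · right
    have := natDegree_lt_natDegree h1 (degree_sub_comp_lt Q (c : ℝ) h0)
    omega

lemma card_filter_le_val (n k : ℕ) :
    #(univ.filter fun x : Fin n => k ≤ (x : ℕ)) = n - k := by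
  rw [← Finset.card_map Fin.valEmbedding]
  have h : (univ.filter fun x : Fin n => k ≤ (x : ℕ)).map Fin.valEmbedding = Ico k n := by
    ext y
    simp only [Finset.mem_map, Finset.mem_filter, Finset.mem_univ, true_and, Finset.mem_Ico,
      Fin.valEmbedding_apply]
    constructor
    · rintro ⟨x, hx, rfl⟩; exact ⟨hx, x.isLt⟩
    · rintro ⟨h1, h2⟩; exact ⟨⟨y, h2⟩, h1, rfl⟩
  rw [h, Nat.card_Ico]

lemma sum_inf_eq (n s : ℕ) (hs : 1 ≤ s) (H : (univ : Finset (Fin s)).Nonempty)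
    (a : Fin n → ℝ) (ha : ∀ i j : Fin n, i ≤ j → a i ≤ a j) :
    ∑ t : Fin s → Fin n, univ.inf' H (fun j => a (t j))
      = ∑ i : Fin n, (((n - (i : ℕ)) ^ s - (n - (i : ℕ) - 1) ^ s : ℕ) : ℝ) * a i := by
  have hinf : ∀ t : Fin s → Fin n, univ.inf' H (fun j => a (t j)) = a (univ.inf' H t) := by
    intro t
    apply le_antisymm
    · obtain ⟨j, hj, hje⟩ := Finset.exists_mem_eq_inf' H t
      rw [hje]
      exact Finset.inf'_le _ (Finset.mem_univ j)
    · apply Finset.le_inf'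
      intro j hj
      exact ha _ _ (Finset.inf'_le _ (Finset.mem_univ j))
  have hF : ∀ k : ℕ,
      #(univ.filter fun t : Fin s → Fin n => ∀ j, k ≤ (t j : ℕ)) = (n - k) ^ s := by
    intro k
    have he : (univ.filter fun t : Fin s → Fin n => ∀ j, k ≤ (t j : ℕ))
        = Fintype.piFinset (fun _ : Fin s => univ.filter fun x : Fin n => k ≤ (x : ℕ)) := by
      ext t
      simp [Fintype.mem_piFinset]
    rw [he, Fintype.card_piFinset]
    simp [card_filter_le_val n k]
  have hcard : ∀ i : Fin n,
      #(univ.filter fun t : Fin s → Fin n => univ.inf' H t = i)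
        = (n - (i : ℕ)) ^ s - (n - (i : ℕ) - 1) ^ s := by
    intro i
    have hsub : (univ.filter fun t : Fin s → Fin n => ∀ j, (i : ℕ) + 1 ≤ (t j : ℕ))
        ⊆ univ.filter fun t : Fin s → Fin n => ∀ j, (i : ℕ) ≤ (t j : ℕ) := by
      intro t ht
      simp only [Finset.mem_filter, Finset.mem_univ, true_and] at *
      intro j
      exact le_trans (Nat.le_succ _) (ht j)
    have heq : (univ.filter fun t : Fin s → Fin n => univ.inf' H t = i)
        = (univ.filter fun t : Fin s → Fin n => ∀ j, (i : ℕ) ≤ (t j : ℕ))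
          \ (univ.filter fun t : Fin s → Fin n => ∀ j, (i : ℕ) + 1 ≤ (t j : ℕ)) := by
      ext t
      simp only [Finset.mem_filter, Finset.mem_univ, true_and, Finset.mem_sdiff,
        not_forall, not_le]
      constructor
      · intro h
        refine ⟨fun j => ?_, ?_⟩
        · have h2 : univ.inf' H t ≤ t j := Finset.inf'_le _ (Finset.mem_univ j)
          rw [h] at h2
          exact h2
        · obtain ⟨j, hj, hje⟩ := Finset.exists_mem_eq_inf' H t
          exact ⟨j, by rw [← hje, h]; omega⟩
      · rintro ⟨h1, j, hj⟩
        have h2 : (t j : ℕ) = (i : ℕ) := by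
          have := h1 j
          omega
        apply le_antisymm
        · have : univ.inf' H t ≤ t j := Finset.inf'_le _ (Finset.mem_univ j)
          refine le_trans this ?_
          rw [Fin.le_def, h2]
        · apply Finset.le_inf'
          intro b hb
          rw [Fin.le_def]
          exact h1 b
    rw [heq, Finset.card_sdiff_of_subset hsub, hF, hF, Nat.sub_sub]
  simp_rw [hinf]
  rw [← Finset.sum_fiberwise_of_maps_to (t := (univ : Finset (Fin n)))
      (g := fun t : Fin s → Fin n => univ.inf' H t)
      (fun t _ => Finset.mem_univ _) (fun t => a (univ.inf' H t))]
  apply Finset.sum_congr rfl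
  intro i _
  have hconst : ∀ t ∈ univ.filter fun t : Fin s → Fin n => univ.inf' H t = i,
      a (univ.inf' H t) = a i := by
    intro t ht
    simp only [Finset.mem_filter] at ht
    rw [ht.2]
  rw [Finset.sum_congr rfl hconst, Finset.sum_const, hcard i, nsmul_eq_mul]

/-- The good-pattern-then-bad-pattern lottery `D` and the bad-pattern-then-good-pattern
lottery `C` at the `m`-th order have the same `s`-th dual moments for `1 ≤ s ≤ m−1`. -/
theorem dual_moments_equal_mth_order
    (m n : ℕ) (hm : 2 ≤ m) (hn : 1 ≤ n)
    (x : ℕ → ℝ)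
    (hx_mono : ∀ i j, 1 ≤ i → i ≤ j → j ≤ n → x i ≤ x j)
    (hx_nonneg : ∀ i, 1 ≤ i → i ≤ n → 0 ≤ x i)
    (g g' : ℤ → ℝ)
    (hg : IsGoodPattern m g) (hg' : IsGoodPattern m g')
    (hg_ne : g ≠ 0) (hg'_ne : g' ≠ 0)
    (hg_supp : Function.support g ⊆ Set.Icc 1 (n : ℤ))
    (hg'_supp : Function.support g' ⊆ Set.Icc 1 (n : ℤ))
    (lg Hg lg' Hg' : ℤ)
    (hlg : IsLeast (Function.support g) lg)
    (hHg : IsGreatest (Function.support g) Hg)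
    (hlg' : IsLeast (Function.support g') lg')
    (hHg' : IsGreatest (Function.support g') Hg')
    (hmin : lg < lg') (hmax : Hg < Hg')
    (D : ℕ → ℝ)
    (hD : ∀ i, D i = x i + g (i : ℤ) - g' (i : ℤ))
    (r r' : ℤ)
    (hg'_tr_supp : Function.support (fun i : ℤ => g' (i - r)) ⊆ Set.Icc 1 (n : ℤ))
    (hg_tr_supp : Function.support (fun i : ℤ => g (i - r')) ⊆ Set.Icc 1 (n : ℤ))
    (hmin' : lg' + r < lg + r') (hmax' : Hg' + r < Hg + r')
    (C : ℕ → ℝ)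
    (hC : ∀ i, C i = x i - g' ((i : ℤ) - r) + g ((i : ℤ) - r'))
    (hD_mono : ∀ i j, 1 ≤ i → i ≤ j → j ≤ n → D i ≤ D j)
    (hD_nonneg : ∀ i, 1 ≤ i → i ≤ n → 0 ≤ D i)
    (hC_mono : ∀ i j, 1 ≤ i → i ≤ j → j ≤ n → C i ≤ C j)
    (hC_nonneg : ∀ i, 1 ≤ i → i ≤ n → 0 ≤ C i) :
    ∀ s : ℕ, ∀ hs : 1 ≤ s, s ≤ m - 1 →
      (∑ t : Fin s → Fin n,
          (Finset.univ.inf' (Finset.univ_nonempty_iff.mpr ⟨⟨0, hs⟩⟩)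
            fun j => D ((t j : ℕ) + 1)))
        = ∑ t : Fin s → Fin n,
            (Finset.univ.inf' (Finset.univ_nonempty_iff.mpr ⟨⟨0, hs⟩⟩)
              fun j => C ((t j : ℕ) + 1)) := by
  intro s hs hsm
  have hDmono : ∀ i j : Fin n, i ≤ j → D ((i : ℕ) + 1) ≤ D ((j : ℕ) + 1) :=
    fun i j hij => hD_mono _ _ (by omega) (by rw [Fin.le_def] at hij; omega)
      (by have := j.isLt; omega)
  have hCmono : ∀ i j : Fin n, i ≤ j → C ((i : ℕ) + 1) ≤ C ((j : ℕ) + 1) :=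
    fun i j hij => hC_mono _ _ (by omega) (by rw [Fin.le_def] at hij; omega)
      (by have := j.isLt; omega)
  rw [sum_inf_eq n s hs (Finset.univ_nonempty_iff.mpr ⟨⟨0, hs⟩⟩)
      (fun i : Fin n => D ((i : ℕ) + 1)) hDmono,
    sum_inf_eq n s hs (Finset.univ_nonempty_iff.mpr ⟨⟨0, hs⟩⟩)
      (fun i : Fin n => C ((i : ℕ) + 1)) hCmono]
  rw [← sub_eq_zero, ← Finset.sum_sub_distrib]
  -- the polynomial Q
  set Q : Polynomial ℝ := (Polynomial.C ((n : ℝ) + 1) - X) ^ s - (Polynomial.C (n : ℝ) - X) ^ s with hQdef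
  -- degree of Q
  have hndA : ∀ b : ℝ, ((Polynomial.C b - X : Polynomial ℝ) ^ s).natDegree = s := by
    intro b
    have h1 : (Polynomial.C b - X : Polynomial ℝ) = -(X - Polynomial.C b) := by ring
    rw [h1]
    rw [natDegree_pow, natDegree_neg, natDegree_X_sub_C, mul_one]
  have hlcA : ∀ b : ℝ, ((Polynomial.C b - X : Polynomial ℝ) ^ s).leadingCoeff = (-1) ^ s := by
    intro b
    have h1 : (Polynomial.C b - X : Polynomial ℝ) = -(X - Polynomial.C b) := by ring
    rw [h1, leadingCoeff_pow, leadingCoeff_neg, (monic_X_sub_C b).leadingCoeff]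
  have hA0 : ∀ b : ℝ, ((Polynomial.C b - X : Polynomial ℝ) ^ s) ≠ 0 := by
    intro b h
    have := hlcA b
    rw [h] at this
    simp at this
    exact absurd this.symm (by positivity)
  have hQlt : Q.natDegree < s := by
    have hd : ((Polynomial.C ((n : ℝ) + 1) - X) ^ s).degree = ((Polynomial.C (n : ℝ) - X) ^ s).degree := by
      rw [degree_eq_natDegree (hA0 _), degree_eq_natDegree (hA0 _), hndA, hndA]
    have hlt : Q.degree < ((Polynomial.C ((n : ℝ) + 1) - X) ^ s).degree :=
      degree_sub_lt hd (hA0 _) (by rw [hlcA, hlcA])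
    by_cases hQ0 : Q = 0
    · rw [hQ0]; simpa using (show 0 < s by omega)
    · have := natDegree_lt_natDegree hQ0 hlt
      rwa [hndA] at this
  -- rewrite weights as evaluations of Q
  have hw : ∀ i : Fin n, (((n - (i : ℕ)) ^ s - (n - (i : ℕ) - 1) ^ s : ℕ) : ℝ)
      = Q.eval ((((i : ℕ) : ℤ) + 1 : ℤ) : ℝ) := by
    intro i
    have hin : (i : ℕ) < n := i.isLt
    have hle : (n - (i : ℕ) - 1) ^ s ≤ (n - (i : ℕ)) ^ s :=
      Nat.pow_le_pow_left (by omega) s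
    rw [Nat.cast_sub hle, Nat.cast_pow, Nat.cast_pow,
      Nat.cast_sub (by omega : (i : ℕ) ≤ n),
      show n - (i : ℕ) - 1 = n - ((i : ℕ) + 1) from by omega,
      Nat.cast_sub (by omega : (i : ℕ) + 1 ≤ n)]
    simp only [hQdef, eval_sub, eval_pow, eval_C, eval_X]
    push_cast
    ring
  -- the increment function
  set hfun : ℤ → ℝ := fun j => (g j - g (j - r')) - (g' j - g' (j - r)) with hfundef
  have hDC : ∀ i : Fin n, D ((i : ℕ) + 1) - C ((i : ℕ) + 1)
      = hfun (((i : ℕ) : ℤ) + 1) := by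
    intro i
    rw [hD, hC, hfundef]
    push_cast
    ring
  set F : ℤ → ℝ := fun j => hfun j * Q.eval (j : ℝ) with hFdef
  have hstep : ∀ i : Fin n,
      (((n - (i : ℕ)) ^ s - (n - (i : ℕ) - 1) ^ s : ℕ) : ℝ) * D ((i : ℕ) + 1)
        - (((n - (i : ℕ)) ^ s - (n - (i : ℕ) - 1) ^ s : ℕ) : ℝ) * C ((i : ℕ) + 1)
      = F (((i : ℕ) : ℤ) + 1) := by
    intro i
    rw [← mul_sub, hDC i, hw i, hFdef]
    push_cast
    ring
  rw [Finset.sum_congr rfl (fun i _ => hstep i)]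
  -- convert to a finsum over ℤ
  have h1 : ∑ i : Fin n, F (((i : ℕ) : ℤ) + 1) = ∑ i ∈ Finset.range n, F ((i : ℤ) + 1) :=
    Fin.sum_univ_eq_sum_range (fun i => F ((i : ℤ) + 1)) n
  have h2 : ∑ i ∈ Finset.range n, F ((i : ℤ) + 1)
      = ∑ j ∈ Finset.Icc (1 : ℤ) (n : ℤ), F j := by
    apply Finset.sum_nbij' (i := fun i : ℕ => (i : ℤ) + 1) (j := fun j : ℤ => (j - 1).toNat)
    · intro a ha
      simp only [Finset.mem_range] at ha
      simp only [Finset.mem_Icc]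
      omega
    · intro a ha
      simp only [Finset.mem_Icc] at ha
      simp only [Finset.mem_range]
      omega
    · intro a ha
      omega
    · intro a ha
      simp only [Finset.mem_Icc] at ha
      omega
    · intro a ha
      rfl
  have hsupp : Function.support F ⊆ ↑(Finset.Icc (1 : ℤ) (n : ℤ)) := by
    intro j hj
    rw [Finset.coe_Icc]
    simp only [Function.mem_support, ne_eq, hFdef] at hj
    have hfj : hfun j ≠ 0 := fun h => hj (by rw [h]; ring)
    by_contra hout
    have hz : ∀ f : ℤ → ℝ, Function.support f ⊆ Set.Icc 1 (n : ℤ) → f j = 0 := by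
      intro f hf
      by_contra hfz
      exact hout (hf hfz)
    have e1 := hz g hg_supp
    have e2 := hz g' hg'_supp
    have e3 := hz _ hg_tr_supp
    have e4 := hz _ hg'_tr_supp
    apply hfj
    rw [hfundef]
    simp only [e1, e2]
    rw [e3, e4]
    ring
  have h3 : ∑ j ∈ Finset.Icc (1 : ℤ) (n : ℤ), F j = ∑ᶠ j : ℤ, F j :=
    (finsum_eq_finset_sum_of_support_subset F hsupp).symm
  have hfing := goodPattern_support_finite hg
  have hfing' := goodPattern_support_finite hg'
  have hfs1 : (Function.support fun j : ℤ => (g j - g (j - r')) * Q.eval (j : ℝ)).Finite := by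
    refine ((hfing.union (hfing.image (· + r'))).subset ?_)
    intro j hj
    simp only [Function.mem_support, ne_eq] at hj
    by_contra hne
    simp only [Set.mem_union, Set.mem_image, Function.mem_support, not_or, not_exists,
      not_and, not_not] at hne
    obtain ⟨e1, e2⟩ := hne
    have e3 : g (j - r') = 0 := by
      by_contra h3
      exact e2 (j - r') h3 (by ring)
    rw [e1, e3] at hj
    simp at hj
  have hfs2 : (Function.support fun j : ℤ => (g' j - g' (j - r)) * Q.eval (j : ℝ)).Finite := by
    refine ((hfing'.union (hfing'.image (· + r))).subset ?_)
    intro j hj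
    simp only [Function.mem_support, ne_eq] at hj
    by_contra hne
    simp only [Set.mem_union, Set.mem_image, Function.mem_support, not_or, not_exists,
      not_and, not_not] at hne
    obtain ⟨e1, e2⟩ := hne
    have e3 : g' (j - r) = 0 := by
      by_contra h3
      exact e2 (j - r) h3 (by ring)
    rw [e1, e3] at hj
    simp at hj
  have h4 : ∑ᶠ j : ℤ, F j
      = (∑ᶠ j : ℤ, (g j - g (j - r')) * Q.eval (j : ℝ))
        - ∑ᶠ j : ℤ, (g' j - g' (j - r)) * Q.eval (j : ℝ) := by
    rw [← finsum_sub_distrib hfs1 hfs2]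
    apply finsum_congr
    intro j
    rw [hFdef, hfundef]
    ring
  have hQm : Q.natDegree + 2 ≤ m := by omega
  rw [h1, h2, h3, h4, key_vanish hg Q hQm r', key_vanish hg' Q hQm r, sub_zero]
end

section
/- Let m ≥ 1 and let h : ℝ → ℝ be continuous on [0,1] and m times continuously differentiable on (0,1). Then the m-th derivative h^{(m)} is nonnegative on (0,1) if and only if for all real p ≥ 0 and d > 0 with p + m·d ≤ 1, the m-th forward finite difference is nonnegative: Σ_{i=0}^m (−1)^{m−i}·binom(m, i)·h(p + i·d) ≥ 0. -/
open Finset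

open scoped fwdDiff

private lemma itdw_open {n : ℕ} {f : ℝ → ℝ} {s : Set ℝ} (hs : IsOpen s) {x : ℝ} (hx : x ∈ s) :
    iteratedDerivWithin n f s x = iteratedDeriv n f x := by
  rw [iteratedDerivWithin_eq_iteratedFDerivWithin, iteratedDeriv_eq_iteratedFDeriv,
    iteratedFDerivWithin_of_isOpen n hs hx]

private lemma diff_at_itd {n : ℕ} {f : ℝ → ℝ} {s : Set ℝ} (hs : IsOpen s)
    (hf : ContDiffOn ℝ ((n + 1 : ℕ) : ℕ∞) f s) {x : ℝ} (hx : x ∈ s) :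
    DifferentiableAt ℝ (iteratedDeriv n f) x := by
  have h1 : DifferentiableOn ℝ (iteratedDerivWithin n f s) s :=
    hf.differentiableOn_iteratedDerivWithin (by exact_mod_cast Nat.lt_succ_self n)
      hs.uniqueDiffOn
  have h2 : DifferentiableOn ℝ (iteratedDeriv n f) s :=
    h1.congr (fun y hy => (itdw_open hs hy).symm)
  exact (h2 x hx).differentiableAt (hs.mem_nhds hx)

private lemma sum_eq_fwdDiff (m : ℕ) (f : ℝ → ℝ) (p d : ℝ) :
    ∑ i ∈ Finset.range (m + 1), (-1 : ℝ) ^ (m - i) * (m.choose i : ℝ) * f (p + i * d)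
      = (fwdDiff d)^[m] f p := by
  rw [fwdDiff_iter_eq_sum_shift]
  refine Finset.sum_congr rfl fun i _ => ?_
  push_cast [zsmul_eq_mul, nsmul_eq_mul]
  ring

private lemma fwdDiff_iter_mvt :
    ∀ (n : ℕ) (f : ℝ → ℝ) (u : Set ℝ), IsOpen u → ContDiffOn ℝ ((n : ℕ) : ℕ∞) f u →
      ∀ (p d : ℝ), 0 < d → Set.Icc p (p + n * d) ⊆ u →
    ∃ ξ ∈ Set.Icc p (p + n * d), (fwdDiff d)^[n] f p = d ^ n * iteratedDeriv n f ξ := by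
  intro n
  induction n with
  | zero =>
    intro f u _ _ p d _ _
    exact ⟨p, by simp, by simp⟩
  | succ n IH =>
    intro f u hu hf p d hd hsub
    have hcd : (n : ℝ) * d ≤ (n + 1 : ℕ) * d := by push_cast; nlinarith
    set u' : Set ℝ := u ∩ (fun x => x + d) ⁻¹' u with hu'def
    have hu' : IsOpen u' := hu.inter (hu.preimage (continuous_id.add continuous_const))
    have hsub' : Set.Icc p (p + n * d) ⊆ u' := by
      intro x hx
      obtain ⟨hx1, hx2⟩ := hx
      refine ⟨hsub ⟨hx1, by linarith⟩, ?_⟩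
      have : x + d ∈ Set.Icc p (p + (n + 1 : ℕ) * d) := ⟨by linarith, by push_cast; nlinarith⟩
      exact hsub this
    have hle : ((n : ℕ) : ℕ∞) ≤ (((n + 1 : ℕ)) : ℕ∞) := by exact_mod_cast Nat.le_succ n
    have hshift : ContDiffOn ℝ ((n : ℕ) : ℕ∞) (fun x => f (x + d)) u' := by
      have : ContDiffOn ℝ (((n + 1 : ℕ)) : ℕ∞) (fun x => f (x + d)) u' :=
        hf.comp ((contDiff_id.add contDiff_const).contDiffOn) (fun x hx => hx.2)
      exact this.of_le (by exact_mod_cast hle)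
    have hfu' : ContDiffOn ℝ ((n : ℕ) : ℕ∞) f u' :=
      (hf.mono Set.inter_subset_left).of_le (by exact_mod_cast hle)
    have hgdef : fwdDiff d f = (fun x => f (x + d)) - f := rfl
    have hg : ContDiffOn ℝ ((n : ℕ) : ℕ∞) (fwdDiff d f) u' := by
      rw [hgdef]; exact hshift.sub hfu'
    obtain ⟨ξ, hξ, heq⟩ := IH (fwdDiff d f) u' hu' hg p d hd hsub'
    set F := iteratedDeriv n f with hF
    have hξu' : ξ ∈ u' := hsub' hξ
    have hder : iteratedDeriv n (fwdDiff d f) ξ = F (ξ + d) - F ξ := by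
      have h1 : iteratedDerivWithin n (fwdDiff d f) u' ξ
          = iteratedDerivWithin n (fun x => f (x + d)) u' ξ - iteratedDerivWithin n f u' ξ := by
        rw [hgdef]
        exact iteratedDerivWithin_sub hξu' hu'.uniqueDiffOn (hshift ξ hξu') (hfu' ξ hξu')
      have h2 : iteratedDeriv n (fun x => f (x + d)) ξ = F (ξ + d) := by
        rw [iteratedDeriv_comp_add_const]
      rw [← itdw_open hu' hξu', h1, itdw_open hu' hξu', itdw_open hu' hξu', h2]
    have hIccu : Set.Icc ξ (ξ + d) ⊆ u := by
      intro x hx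
      refine hsub ⟨le_trans hξ.1 hx.1, ?_⟩
      have := hξ.2
      have := hx.2
      push_cast
      push_cast at this ⊢
      nlinarith [hξ.2, hx.2]
    have hFdiff : ∀ x ∈ Set.Icc ξ (ξ + d), DifferentiableAt ℝ F x := fun x hx =>
      diff_at_itd hu hf (hIccu hx)
    have hlt : ξ < ξ + d := by linarith
    obtain ⟨η, hη, hslope⟩ := exists_deriv_eq_slope F hlt
      (fun x hx => (hFdiff x hx).continuousAt.continuousWithinAt)
      (fun x hx => (hFdiff x (Set.Ioo_subset_Icc_self hx)).differentiableWithinAt)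
    refine ⟨η, ⟨?_, ?_⟩, ?_⟩
    · have := hξ.1; have := hη.1; linarith
    · have h1 := hξ.2; have h2 := hη.2; push_cast at h1 ⊢; nlinarith
    · have hdF : deriv F η = iteratedDeriv (n + 1) f η := by
        rw [iteratedDeriv_succ]
      have hdd : ξ + d - ξ = d := by ring
      rw [hdd] at hslope
      have hstep : F (ξ + d) - F ξ = d * iteratedDeriv (n + 1) f η := by
        rw [← hdF]
        field_simp at hslope
        linarith [hslope]
      rw [Function.iterate_succ_apply, heq, hder, hstep]
      ring

open Filter Topology

/-- The `m`-th derivative of `h` is nonnegative on `(0,1)` if and only if all `m`-th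
forward finite differences of `h` with base point `p ≥ 0`, step `d > 0` and
`p + m·d ≤ 1` are nonnegative. -/
theorem deriv_nonneg_iff_finite_differences_nonneg
    (m : ℕ) (hm : 1 ≤ m)
    (h : ℝ → ℝ)
    (h_cont : ContinuousOn h (Set.Icc 0 1))
    (h_smooth : ContDiffOn ℝ (m : ℕ∞) h (Set.Ioo 0 1)) :
    (∀ q ∈ Set.Ioo (0:ℝ) 1, 0 ≤ iteratedDerivWithin m h (Set.Ioo 0 1) q) ↔
    (∀ p d : ℝ, 0 ≤ p → 0 < d → p + m * d ≤ 1 →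
      0 ≤ ∑ i ∈ Finset.range (m + 1),
          (-1 : ℝ) ^ (m - i) * (m.choose i : ℝ) * h (p + i * d)) := by
  constructor
  · intro hpos p d hp hd hpd
    have hint : ∀ p' d' : ℝ, 0 < p' → 0 < d' → p' + m * d' < 1 →
        0 ≤ ∑ i ∈ Finset.range (m + 1),
          (-1 : ℝ) ^ (m - i) * (m.choose i : ℝ) * h (p' + i * d') := by
      intro p' d' hp' hd' hpd'
      have hsub : Set.Icc p' (p' + m * d') ⊆ Set.Ioo (0:ℝ) 1 := fun x hx =>
        ⟨lt_of_lt_of_le hp' hx.1, lt_of_le_of_lt hx.2 hpd'⟩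
      obtain ⟨ξ, hξ, heq⟩ := fwdDiff_iter_mvt m h _ isOpen_Ioo h_smooth p' d' hd' hsub
      rw [sum_eq_fwdDiff, heq, ← itdw_open isOpen_Ioo (hsub hξ)]
      exact mul_nonneg (pow_nonneg hd'.le m) (hpos ξ (hsub hξ))
    have hIoo : Set.Ioo (0:ℝ) 1 ∈ nhdsWithin (0:ℝ) (Set.Ioi 0) :=
      Ioo_mem_nhdsGT_of_mem (Set.mem_Ico.2 ⟨le_refl 0, zero_lt_one⟩)
    have key : Tendsto (fun t : ℝ => ∑ i ∈ Finset.range (m+1),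
        (-1 : ℝ) ^ (m - i) * (m.choose i : ℝ) * h (((1-t)*p + t/2) + i * ((1-t)*d)))
        (nhdsWithin 0 (Set.Ioi (0:ℝ)))
        (nhds (∑ i ∈ Finset.range (m+1),
          (-1 : ℝ) ^ (m - i) * (m.choose i : ℝ) * h (p + i * d))) := by
      apply tendsto_finset_sum
      intro i hi
      simp only [Finset.mem_range] at hi
      have hi' : (i:ℝ) ≤ m := by exact_mod_cast Nat.lt_succ_iff.mp hi
      apply Filter.Tendsto.const_mul
      have hpath : Tendsto (fun t : ℝ => ((1-t)*p + t/2) + i * ((1-t)*d))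
          (nhdsWithin 0 (Set.Ioi (0:ℝ))) (nhds (p + i*d)) := by
        have hcont : Continuous fun t : ℝ => ((1-t)*p + t/2) + i * ((1-t)*d) := by
          continuity
        have h0 := hcont.tendsto 0
        norm_num at h0
        exact h0.mono_left nhdsWithin_le_nhds
      have hmem : ∀ᶠ t in nhdsWithin (0:ℝ) (Set.Ioi 0),
          ((1-t)*p + t/2) + i*((1-t)*d) ∈ Set.Icc (0:ℝ) 1 := by
        filter_upwards [hIoo] with t ht
        obtain ⟨ht0, ht1⟩ := ht
        have h1t : (0:ℝ) ≤ 1 - t := by linarith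
        constructor
        · nlinarith [mul_nonneg h1t hp, mul_nonneg (mul_nonneg (Nat.cast_nonneg (α := ℝ) i) h1t) hd.le]
        · nlinarith [mul_nonneg (sub_nonneg.2 hi') (mul_nonneg h1t hd.le),
            mul_le_mul_of_nonneg_left hpd h1t]
      have hx01 : p + i * d ∈ Set.Icc (0:ℝ) 1 :=
        ⟨by nlinarith [mul_nonneg (Nat.cast_nonneg (α := ℝ) i) hd.le],
         by nlinarith [mul_nonneg (sub_nonneg.2 hi') hd.le]⟩
      have htend : Tendsto (fun t : ℝ => ((1-t)*p + t/2) + i * ((1-t)*d))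
          (nhdsWithin 0 (Set.Ioi (0:ℝ))) (nhdsWithin (p + i*d) (Set.Icc (0:ℝ) 1)) :=
        tendsto_nhdsWithin_iff.2 ⟨hpath, hmem⟩
      exact (h_cont _ hx01).tendsto.comp htend
    have hev : ∀ᶠ t in nhdsWithin (0:ℝ) (Set.Ioi 0),
        0 ≤ ∑ i ∈ Finset.range (m+1),
          (-1 : ℝ) ^ (m - i) * (m.choose i : ℝ) * h (((1-t)*p + t/2) + i * ((1-t)*d)) := by
      filter_upwards [hIoo] with t ht
      obtain ⟨ht0, ht1⟩ := ht
      have h1t : (0:ℝ) ≤ 1 - t := by linarith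
      exact hint ((1-t)*p + t/2) ((1-t)*d) (by nlinarith [mul_nonneg h1t hp])
        (by nlinarith) (by nlinarith [mul_le_mul_of_nonneg_left hpd h1t])
    exact ge_of_tendsto key hev
  · intro hsum q hq
    rw [itdw_open isOpen_Ioo hq]
    by_contra hneg
    push_neg at hneg
    have hFc : ContinuousOn (iteratedDeriv m h) (Set.Ioo (0:ℝ) 1) := by
      have h1 := h_smooth.continuousOn_iteratedDerivWithin (le_refl _) isOpen_Ioo.uniqueDiffOn
      exact h1.congr fun y hy => (itdw_open isOpen_Ioo hy).symm
    have hCq : ContinuousAt (iteratedDeriv m h) q :=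
      hFc.continuousAt (isOpen_Ioo.mem_nhds hq)
    have hV : (iteratedDeriv m h) ⁻¹' Set.Iio 0 ∩ Set.Ioo 0 1 ∈ nhds q :=
      Filter.inter_mem (hCq.preimage_mem_nhds (Iio_mem_nhds hneg)) (isOpen_Ioo.mem_nhds hq)
    obtain ⟨ε, hε, hball⟩ := Metric.mem_nhds_iff.1 hV
    set d := ε / (2 * (m + 1)) with hdd
    have hd : 0 < d := by positivity
    have hmd : (m:ℝ) * d < ε := by
      have h1 : ((m:ℝ) + 1) * d = ε / 2 := by
        rw [hdd]; field_simp
      nlinarith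
    have hsubball : Set.Icc q (q + m * d) ⊆ Metric.ball q ε := by
      intro x hx
      rw [Metric.mem_ball, Real.dist_eq, abs_lt]
      constructor
      · nlinarith [hx.1]
      · nlinarith [hx.2]
    have hsubS : Set.Icc q (q + m*d) ⊆ Set.Ioo (0:ℝ) 1 := fun x hx => (hball (hsubball hx)).2
    obtain ⟨ξ, hξ, heq⟩ := fwdDiff_iter_mvt m h _ isOpen_Ioo h_smooth q d hd hsubS
    have hξneg : iteratedDeriv m h ξ < 0 := (hball (hsubball hξ)).1
    have hend : q + m * d ≤ 1 := by
      have : q + m*d ∈ Set.Ioo (0:ℝ) 1 :=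
        hsubS ⟨by nlinarith [Nat.cast_nonneg (α := ℝ) m], le_refl _⟩
      exact this.2.le
    have h2 := hsum q d hq.1.le hd hend
    rw [sum_eq_fwdDiff, heq] at h2
    nlinarith [pow_pos hd m]
end

section
/- Let n ≥ 1 and let C, D : {1,…,n} → ℝ be equiprobable n-state lotteries (nondecreasing with nonnegative values). Define the (left-continuous step) quantile function F_C^{-1}(q) = C(i) for q ∈ ((i−1)/n, i/n] with F_C^{-1}(0) = C(1), and similarly F_D^{-1}; define the iterated integrals ²F^{-1}(q) = ∫₀^q F^{-1}(p) dp and ³F^{-1}(q) = ∫₀^q ²F^{-1}(p) dp for each lottery. Assume ²F_C^{-1}(1) = ²F_D^{-1}(1) (equal means), ³F_C^{-1}(1) = ³F_D^{-1}(1) (equal second dual moments), and ³F_C^{-1}(q) ≤ ³F_D^{-1}(q) for all q ∈ [0,1] (third-degree dual stochastic dominance of D over C). Then for every probability weighting function h that is three times continuously differentiable on [0,1] with h''' ≥ 0 on [0,1], V_h(C) ≤ V_h(D). -/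
open Finset

/-- The (left-continuous step) quantile function of an equiprobable `n`-state lottery
`x`: it equals `x i` on `((i−1)/n, i/n]`, with value `x 1` at `0`. -/
noncomputable def quant (n : ℕ) (x : ℕ → ℝ) (q : ℝ) : ℝ :=
  x (max 1 ⌈q * n⌉₊)

/-- The once-iterated integral `²F⁻¹(q) = ∫₀^q F⁻¹(p) dp` of the quantile function. -/
noncomputable def quant2 (n : ℕ) (x : ℕ → ℝ) (q : ℝ) : ℝ :=
  ∫ p in (0:ℝ)..q, quant n x p

/-- The twice-iterated integral `³F⁻¹(q) = ∫₀^q ²F⁻¹(p) dp` of the quantile function. -/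
noncomputable def quant3 (n : ℕ) (x : ℕ → ℝ) (q : ℝ) : ℝ :=
  ∫ p in (0:ℝ)..q, quant2 n x p

section Aux

open Set MeasureTheory intervalIntegral

variable {n : ℕ} {x : ℕ → ℝ}

private lemma npos (hn : 1 ≤ n) : (0:ℝ) < n := by
  exact_mod_cast Nat.pos_of_ne_zero (by omega)

private lemma quant_eq_on (hn : 1 ≤ n) {i : ℕ} (hi1 : 1 ≤ i) {q : ℝ}
    (hq1 : ((i:ℝ) - 1)/n < q) (hq2 : q ≤ (i:ℝ)/n) : quant n x q = x i := by
  have hn0 : (0:ℝ) < n := npos hn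
  have h1 : ((i:ℝ) - 1) < q * n := by
    rw [div_lt_iff₀ hn0] at hq1; linarith
  have h2 : q * n ≤ (i:ℝ) := (le_div_iff₀ hn0).1 hq2
  have hceil : ⌈q * n⌉₊ = i := by
    rw [Nat.ceil_eq_iff (by omega : i ≠ 0)]
    refine ⟨?_, h2⟩
    rw [Nat.cast_sub hi1]
    simpa using h1
  unfold quant
  rw [hceil, max_eq_right hi1]

private lemma quant_eq_on' (hn : 1 ≤ n) {k : ℕ} {q : ℝ}
    (hq1 : (k:ℝ)/n < q) (hq2 : q ≤ ((k:ℝ)+1)/n) : quant n x q = x (k+1) := by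
  have e1 : (((k+1:ℕ):ℝ) - 1)/n = (k:ℝ)/n := by push_cast; ring
  have e2 : ((k+1:ℕ):ℝ)/n = ((k:ℝ)+1)/n := by push_cast; ring
  exact quant_eq_on hn (Nat.le_add_left 1 k) (by rw [e1]; exact hq1) (by rw [e2]; exact hq2)

private lemma quant_monoOn (hn : 1 ≤ n)
    (hx : ∀ i j, 1 ≤ i → i ≤ j → j ≤ n → x i ≤ x j) :
    MonotoneOn (quant n x) (Set.Icc (0:ℝ) 1) := by
  intro p hp q hq hpq
  have hn0 : (0:ℝ) < n := npos hn
  have hle : ⌈p * n⌉₊ ≤ ⌈q * n⌉₊ :=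
    Nat.ceil_le_ceil (by nlinarith [hp.1, hq.1])
  have hub : ⌈q * n⌉₊ ≤ n := Nat.ceil_le.2 (by nlinarith [hq.2])
  exact hx _ _ (le_max_left _ _) (max_le_max le_rfl hle) (max_le hn hub)

private lemma quant_intble (hn : 1 ≤ n)
    (hx : ∀ i j, 1 ≤ i → i ≤ j → j ≤ n → x i ≤ x j)
    {a b : ℝ} (ha : a ∈ Set.Icc (0:ℝ) 1) (hb : b ∈ Set.Icc (0:ℝ) 1) :
    IntervalIntegrable (quant n x) volume a b := by
  have hsub : Set.uIcc a b ⊆ Set.Icc (0:ℝ) 1 := by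
    rw [← Set.uIcc_of_le (zero_le_one (α := ℝ))]
    exact Set.uIcc_subset_uIcc (by rwa [Set.uIcc_of_le zero_le_one])
      (by rwa [Set.uIcc_of_le zero_le_one])
  exact ((quant_monoOn hn hx).mono hsub).intervalIntegrable

private lemma quant2_contOn (hn : 1 ≤ n)
    (hx : ∀ i j, 1 ≤ i → i ≤ j → j ≤ n → x i ≤ x j) :
    ContinuousOn (quant2 n x) (Set.Icc (0:ℝ) 1) := by
  have := intervalIntegral.continuousOn_primitive_interval' (μ := volume)
    (quant_intble hn hx ⟨le_rfl, zero_le_one⟩ ⟨zero_le_one, le_rfl⟩)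
    (Set.left_mem_uIcc (a := (0:ℝ)) (b := 1))
  rwa [Set.uIcc_of_le (zero_le_one (α := ℝ))] at this

private lemma quant2_intble (hn : 1 ≤ n)
    (hx : ∀ i j, 1 ≤ i → i ≤ j → j ≤ n → x i ≤ x j)
    {a b : ℝ} (ha : a ∈ Set.Icc (0:ℝ) 1) (hb : b ∈ Set.Icc (0:ℝ) 1) :
    IntervalIntegrable (quant2 n x) volume a b := by
  apply ContinuousOn.intervalIntegrable
  apply (quant2_contOn hn hx).mono
  rw [← Set.uIcc_of_le (zero_le_one (α := ℝ))]
  exact Set.uIcc_subset_uIcc (by rwa [Set.uIcc_of_le zero_le_one])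
    (by rwa [Set.uIcc_of_le zero_le_one])

private lemma quant3_contOn (hn : 1 ≤ n)
    (hx : ∀ i j, 1 ≤ i → i ≤ j → j ≤ n → x i ≤ x j) :
    ContinuousOn (quant3 n x) (Set.Icc (0:ℝ) 1) := by
  have := intervalIntegral.continuousOn_primitive_interval' (μ := volume)
    (quant2_intble hn hx ⟨le_rfl, zero_le_one⟩ ⟨zero_le_one, le_rfl⟩)
    (Set.left_mem_uIcc (a := (0:ℝ)) (b := 1))
  rwa [Set.uIcc_of_le (zero_le_one (α := ℝ))] at this

private lemma quant2_hasDerivAt (hn : 1 ≤ n)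
    (hx : ∀ i j, 1 ≤ i → i ≤ j → j ≤ n → x i ≤ x j)
    {k : ℕ} (hk : k < n) {t : ℝ}
    (ht : t ∈ Set.Ioo ((k:ℝ)/n) (((k:ℝ)+1)/n)) :
    HasDerivAt (quant2 n x) (x (k+1)) t := by
  have hn0 : (0:ℝ) < n := npos hn
  set U := Set.Ioo ((k:ℝ)/n) (((k:ℝ)+1)/n) with hUdef
  have hU : U ∈ nhds t := isOpen_Ioo.mem_nhds ht
  have hU01 : U ⊆ Set.Icc (0:ℝ) 1 := by
    intro y hy
    have h1 : (0:ℝ) ≤ (k:ℝ)/n := by positivity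
    have h2 : ((k:ℝ)+1)/n ≤ 1 := by
      rw [div_le_one hn0]
      exact_mod_cast hk
    exact ⟨by linarith [hy.1], by linarith [hy.2]⟩
  have key : ∀ q ∈ U, quant2 n x q = quant2 n x t + x (k+1) * (q - t) := by
    intro q hq
    have hqt : Set.uIcc t q ⊆ U := Set.ordConnected_Ioo.uIcc_subset ht hq
    have h1 : (∫ p in t..q, quant n x p) = ∫ p in t..q, (x (k+1) : ℝ) := by
      apply intervalIntegral.integral_congr
      intro p hp
      have hp' := hqt hp
      exact quant_eq_on' hn hp'.1 hp'.2.le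
    have h2 : quant2 n x q - quant2 n x t = ∫ p in t..q, quant n x p := by
      unfold quant2
      exact intervalIntegral.integral_interval_sub_left
        (quant_intble hn hx ⟨le_rfl, zero_le_one⟩ (hU01 hq))
        (quant_intble hn hx ⟨le_rfl, zero_le_one⟩ (hU01 ht))
    have h3 : (∫ p in t..q, (x (k+1) : ℝ)) = (q - t) * x (k+1) := by
      simp [intervalIntegral.integral_const, smul_eq_mul]
    have h4 : quant2 n x q - quant2 n x t = (q - t) * x (k+1) := by
      rw [h2, h1, h3]
    linear_combination h4
  have hg : HasDerivAt (fun q => quant2 n x t + x (k+1) * (q - t)) (x (k+1)) t := by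
    simpa using (((hasDerivAt_id t).sub_const t).const_mul (x (k+1))).const_add (quant2 n x t)
  exact hg.congr_of_eventuallyEq (Filter.eventuallyEq_of_mem hU key)

private lemma quant3_hasDerivAt (hn : 1 ≤ n)
    (hx : ∀ i j, 1 ≤ i → i ≤ j → j ≤ n → x i ≤ x j)
    {t : ℝ} (ht : t ∈ Set.Ioo (0:ℝ) 1) :
    HasDerivAt (quant3 n x) (quant2 n x t) t := by
  have hcont : ContinuousOn (quant2 n x) (Set.Ioo (0:ℝ) 1) :=
    (quant2_contOn hn hx).mono Set.Ioo_subset_Icc_self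
  have h1 : IntervalIntegrable (quant2 n x) volume 0 t :=
    quant2_intble hn hx ⟨le_rfl, zero_le_one⟩ ⟨ht.1.le, ht.2.le⟩
  exact intervalIntegral.integral_hasDerivAt_right h1
    (hcont.stronglyMeasurableAtFilter isOpen_Ioo t ht)
    (hcont.continuousAt (isOpen_Ioo.mem_nhds ht))

end Aux

section Main

open Set MeasureTheory intervalIntegral

private lemma dtValue_eq {n : ℕ} {x : ℕ → ℝ} (hn : 1 ≤ n)
    (hx : ∀ i j, 1 ≤ i → i ≤ j → j ≤ n → x i ≤ x j)
    {h : ℝ → ℝ} (h_smooth : ContDiffOn ℝ 3 h (Set.Icc 0 1)) :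
    dtValue h n x = quant2 n x 1 * iteratedDerivWithin 1 h (Set.Icc 0 1) 1
      - quant3 n x 1 * iteratedDerivWithin 2 h (Set.Icc 0 1) 1
      + ∫ q in (0:ℝ)..1, quant3 n x q * iteratedDerivWithin 3 h (Set.Icc 0 1) q := by
  have hn0 : (0:ℝ) < n := npos hn
  set S := Set.Icc (0:ℝ) 1 with hSdef
  have hUD : UniqueDiffOn ℝ S := uniqueDiffOn_Icc one_pos
  set f1 := iteratedDerivWithin 1 h S with hf1def
  set f2 := iteratedDerivWithin 2 h S with hf2def
  set f3 := iteratedDerivWithin 3 h S with hf3def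
  have hf1c : ContinuousOn f1 S :=
    h_smooth.continuousOn_iteratedDerivWithin (by norm_num) hUD
  have hf2c : ContinuousOn f2 S :=
    h_smooth.continuousOn_iteratedDerivWithin (by norm_num) hUD
  have hf3c : ContinuousOn f3 S :=
    h_smooth.continuousOn_iteratedDerivWithin (by norm_num) hUD
  have hderS : ∀ k : ℕ, k < 3 → ∀ t ∈ S, HasDerivWithinAt (iteratedDerivWithin k h S)
      (iteratedDerivWithin (k+1) h S t) S t := by
    intro k hk t ht
    have hd := (h_smooth.differentiableOn_iteratedDerivWithin
      (by exact_mod_cast hk) hUD t ht).hasDerivWithinAt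
    rwa [← iteratedDerivWithin_succ] at hd
  have hderIoo : ∀ k : ℕ, k < 3 → ∀ t ∈ Set.Ioo (0:ℝ) 1,
      HasDerivAt (iteratedDerivWithin k h S) (iteratedDerivWithin (k+1) h S t) t :=
    fun k hk t ht =>
      (hderS k hk t (Set.Ioo_subset_Icc_self ht)).hasDerivAt (Icc_mem_nhds ht.1 ht.2)
  have hzero : iteratedDerivWithin 0 h S = h := iteratedDerivWithin_zero
  have hh' : ∀ t ∈ Set.Ioo (0:ℝ) 1, HasDerivAt h (f1 t) t := by
    intro t ht
    have := hderIoo 0 (by norm_num) t ht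
    rwa [hzero] at this
  have hf1' : ∀ t ∈ Set.Ioo (0:ℝ) 1, HasDerivAt f1 (f2 t) t :=
    fun t ht => hderIoo 1 (by norm_num) t ht
  have hf2' : ∀ t ∈ Set.Ioo (0:ℝ) 1, HasDerivAt f2 (f3 t) t :=
    fun t ht => hderIoo 2 (by norm_num) t ht
  set a : ℕ → ℝ := fun k => (k:ℝ)/n with hadef
  have ha0 : a 0 = 0 := by simp [hadef]
  have han : a n = 1 := by rw [hadef]; exact div_self hn0.ne'
  have hacast : ∀ k : ℕ, a (k+1) = ((k:ℝ)+1)/n := by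
    intro k; simp only [hadef]; push_cast; ring
  have haIcc : ∀ k, k ≤ n → a k ∈ S := by
    intro k hk
    constructor
    · positivity
    · rw [div_le_one hn0]; exact_mod_cast hk
  have hamono : ∀ k, a k ≤ a (k+1) := by
    intro k
    simp only [hadef]
    gcongr
    push_cast; linarith
  have hIccSub : ∀ k, k < n → Set.Icc (a k) (a (k+1)) ⊆ S := by
    intro k hk
    exact Set.Icc_subset_Icc (haIcc k (by omega)).1 (haIcc (k+1) (by omega)).2
  have hIooSub : ∀ k, k < n → Set.Ioo (a k) (a (k+1)) ⊆ Set.Ioo (0:ℝ) 1 := by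
    intro k hk
    exact Set.Ioo_subset_Ioo (haIcc k (by omega)).1 (haIcc (k+1) (by omega)).2
  have huIccS : ∀ k, k < n → Set.uIcc (a k) (a (k+1)) ⊆ S := by
    intro k hk
    rw [Set.uIcc_of_le (hamono k)]
    exact hIccSub k hk
  have huIcc01 : Set.uIcc (0:ℝ) 1 ⊆ S := by
    rw [Set.uIcc_of_le (zero_le_one (α := ℝ))]
  -- integrability facts
  have hf1int : ∀ k, k < n → IntervalIntegrable f1 volume (a k) (a (k+1)) :=
    fun k hk => (hf1c.mono (huIccS k hk)).intervalIntegrable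
  have hqint : ∀ k, k < n → IntervalIntegrable (quant n x) volume (a k) (a (k+1)) :=
    fun k hk => quant_intble hn hx (haIcc k (by omega)) (haIcc (k+1) (by omega))
  have hqf1int : ∀ k, k < n →
      IntervalIntegrable (fun q => quant n x q * f1 q) volume (a k) (a (k+1)) :=
    fun k hk => (hqint k hk).mul_continuousOn (hf1c.mono (huIccS k hk))
  have hq2f2int : ∀ k, k < n →
      IntervalIntegrable (fun q => quant2 n x q * f2 q) volume (a k) (a (k+1)) :=
    fun k hk => ContinuousOn.intervalIntegrable
      (((quant2_contOn hn hx).mono (huIccS k hk)).mul (hf2c.mono (huIccS k hk)))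
  -- piece FTC for h
  have hQ : ∀ k, k < n → (∫ q in (a k)..(a (k+1)), quant n x q * f1 q)
      = x (k+1) * (h (a (k+1)) - h (a k)) := by
    intro k hk
    have hab := hamono k
    have hftc : (∫ q in (a k)..(a (k+1)), f1 q) = h (a (k+1)) - h (a k) :=
      intervalIntegral.integral_eq_sub_of_hasDerivAt_of_le hab
        (h_smooth.continuousOn.mono (hIccSub k hk))
        (fun t ht => hh' t (hIooSub k hk ht))
        (hf1int k hk)
    have hcongr : (∫ q in Set.Ioc (a k) (a (k+1)), quant n x q * f1 q)
        = ∫ q in Set.Ioc (a k) (a (k+1)), x (k+1) * f1 q := by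
      apply MeasureTheory.setIntegral_congr_fun measurableSet_Ioc
      intro q hq
      have h1 : (k:ℝ)/n < q := hq.1
      have h2 : q ≤ ((k:ℝ)+1)/n := by rw [← hacast k]; exact hq.2
      simp only
      rw [quant_eq_on' hn h1 h2]
    rw [intervalIntegral.integral_of_le hab, hcongr, ← intervalIntegral.integral_of_le hab,
      intervalIntegral.integral_const_mul, hftc]
  -- piece integration by parts (level 1)
  have hP : ∀ k, k < n →
      (∫ q in (a k)..(a (k+1)), (quant n x q * f1 q + quant2 n x q * f2 q))
      = quant2 n x (a (k+1)) * f1 (a (k+1)) - quant2 n x (a k) * f1 (a k) := by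
    intro k hk
    refine intervalIntegral.integral_eq_sub_of_hasDerivAt_of_le
      (f := fun q => quant2 n x q * f1 q)
      (f' := fun q => quant n x q * f1 q + quant2 n x q * f2 q) (hamono k) ?_ ?_ ?_
    · exact ((quant2_contOn hn hx).mono (hIccSub k hk)).mul (hf1c.mono (hIccSub k hk))
    · intro t ht
      have ht' : t ∈ Set.Ioo ((k:ℝ)/n) (((k:ℝ)+1)/n) := by
        refine ⟨ht.1, ?_⟩
        rw [← hacast k]; exact ht.2
      have hq2 : HasDerivAt (quant2 n x) (x (k+1)) t := quant2_hasDerivAt hn hx hk ht'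
      have hd := hq2.mul (hf1' t (hIooSub k hk ht))
      have hqt : quant n x t = x (k+1) := quant_eq_on' hn ht'.1 ht'.2.le
      have heq : (fun q => quant n x q * f1 q + quant2 n x q * f2 q) t
          = x (k+1) * f1 t + quant2 n x t * f2 t := by simp only []; rw [hqt]
      rw [hqt]
      exact hd
    · exact (hqf1int k hk).add (hq2f2int k hk)
  -- summation over pieces
  have hsum1 : (∫ q in (0:ℝ)..1, quant n x q * f1 q)
      = ∑ k ∈ Finset.range n, x (k+1) * (h (a (k+1)) - h (a k)) := by
    rw [← ha0, ← han,
      ← intervalIntegral.sum_integral_adjacent_intervals (fun k hk => hqf1int k hk)]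
    exact Finset.sum_congr rfl fun k hk => hQ k (Finset.mem_range.1 hk)
  have hsum2 : (∫ q in (0:ℝ)..1, (quant n x q * f1 q + quant2 n x q * f2 q))
      = quant2 n x 1 * f1 1 := by
    rw [← ha0, ← han,
      ← intervalIntegral.sum_integral_adjacent_intervals
        (fun k hk => (hqf1int k hk).add (hq2f2int k hk))]
    rw [Finset.sum_congr rfl fun k hk => hP k (Finset.mem_range.1 hk)]
    rw [Finset.sum_range_sub (f := fun k => quant2 n x (a k) * f1 (a k))]
    have : quant2 n x (a 0) = 0 := by rw [ha0]; exact intervalIntegral.integral_same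
    rw [this, han]
    ring
  -- global integrability on [0,1]
  have hqf1int01 : IntervalIntegrable (fun q => quant n x q * f1 q) volume 0 1 :=
    (quant_intble hn hx ⟨le_rfl, zero_le_one⟩ ⟨zero_le_one, le_rfl⟩).mul_continuousOn
      (hf1c.mono huIcc01)
  have hq2f2int01 : IntervalIntegrable (fun q => quant2 n x q * f2 q) volume 0 1 :=
    ContinuousOn.intervalIntegrable
      (((quant2_contOn hn hx).mono huIcc01).mul (hf2c.mono huIcc01))
  have hq3f3int01 : IntervalIntegrable (fun q => quant3 n x q * f3 q) volume 0 1 :=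
    ContinuousOn.intervalIntegrable
      (((quant3_contOn hn hx).mono huIcc01).mul (hf3c.mono huIcc01))
  have hsplit1 : (∫ q in (0:ℝ)..1, quant n x q * f1 q)
      + (∫ q in (0:ℝ)..1, quant2 n x q * f2 q) = quant2 n x 1 * f1 1 := by
    rw [← intervalIntegral.integral_add hqf1int01 hq2f2int01]
    exact hsum2
  -- global integration by parts (level 2)
  have hC2 : (∫ q in (0:ℝ)..1, (quant2 n x q * f2 q + quant3 n x q * f3 q))
      = quant3 n x 1 * f2 1 - quant3 n x 0 * f2 0 := by
    refine intervalIntegral.integral_eq_sub_of_hasDerivAt_of_le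
      (f := fun q => quant3 n x q * f2 q)
      (f' := fun q => quant2 n x q * f2 q + quant3 n x q * f3 q) zero_le_one ?_ ?_ ?_
    · exact ((quant3_contOn hn hx).mul hf2c)
    · intro t ht
      exact (quant3_hasDerivAt hn hx ht).mul (hf2' t ht)
    · exact hq2f2int01.add hq3f3int01
  have hq30 : quant3 n x 0 = 0 := intervalIntegral.integral_same
  have hsplit2 : (∫ q in (0:ℝ)..1, quant2 n x q * f2 q)
      = quant3 n x 1 * f2 1 - ∫ q in (0:ℝ)..1, quant3 n x q * f3 q := by
    rw [intervalIntegral.integral_add hq2f2int01 hq3f3int01, hq30] at hC2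
    linarith [hC2]
  -- dtValue as a sum over range n
  have hdt : dtValue h n x = ∑ k ∈ Finset.range n, x (k+1) * (h (a (k+1)) - h (a k)) := by
    unfold dtValue
    have hmap : Finset.Icc 1 n = Finset.map ⟨fun k => k+1, add_left_injective 1⟩
        (Finset.range n) := by
      ext i
      simp only [Finset.mem_Icc, Finset.mem_map, Finset.mem_range, Function.Embedding.coeFn_mk]
      constructor
      · rintro ⟨h1, h2⟩; exact ⟨i - 1, by omega, by omega⟩
      · rintro ⟨k, hk, rfl⟩; omega
    rw [hmap, Finset.sum_map]
    apply Finset.sum_congr rfl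
    intro k hk
    simp only [Function.Embedding.coeFn_mk]
    have e1 : ((k+1:ℕ):ℝ)/(n:ℝ) = a (k+1) := by rw [hacast k]; push_cast; ring
    have e2 : (((k+1:ℕ):ℝ)-1)/(n:ℝ) = a k := by simp only [hadef]; push_cast; ring
    rw [e1, e2]
  rw [hdt, ← hsum1]
  have := hsplit1
  linarith [hsplit1, hsplit2]

end Main

/-- Third-degree dual stochastic dominance of `D` over `C` (with equal means and equal
second dual moments) implies that every DT decision maker with `h''' ≥ 0` on `[0,1]`
weakly prefers `D` to `C`. -/
theorem third_degree_dual_dominance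
    (n : ℕ) (hn : 1 ≤ n)
    (C D : ℕ → ℝ)
    (hC_mono : ∀ i j, 1 ≤ i → i ≤ j → j ≤ n → C i ≤ C j)
    (hC_nonneg : ∀ i, 1 ≤ i → i ≤ n → 0 ≤ C i)
    (hD_mono : ∀ i j, 1 ≤ i → i ≤ j → j ≤ n → D i ≤ D j)
    (hD_nonneg : ∀ i, 1 ≤ i → i ≤ n → 0 ≤ D i)
    (hmean : quant2 n C 1 = quant2 n D 1)
    (hsecond : quant3 n C 1 = quant3 n D 1)
    (hdom : ∀ q ∈ Set.Icc (0:ℝ) 1, quant3 n C q ≤ quant3 n D q)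
    (h : ℝ → ℝ) (h_mono : Monotone h) (h_zero : h 0 = 0) (h_one : h 1 = 1)
    (h_smooth : ContDiffOn ℝ 3 h (Set.Icc 0 1))
    (h_prudent : ∀ q ∈ Set.Icc (0:ℝ) 1, 0 ≤ iteratedDerivWithin 3 h (Set.Icc 0 1) q) :
    dtValue h n C ≤ dtValue h n D := by
  classical
  have hCeq := dtValue_eq hn hC_mono h_smooth
  have hDeq := dtValue_eq hn hD_mono h_smooth
  set S := Set.Icc (0:ℝ) 1 with hSdef
  have hUD : UniqueDiffOn ℝ S := uniqueDiffOn_Icc one_pos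
  have hf3c : ContinuousOn (iteratedDerivWithin 3 h S) S :=
    h_smooth.continuousOn_iteratedDerivWithin (by norm_num) hUD
  have huIcc01 : Set.uIcc (0:ℝ) 1 ⊆ S := by
    rw [Set.uIcc_of_le (zero_le_one (α := ℝ))]
  have hintC : IntervalIntegrable
      (fun q => quant3 n C q * iteratedDerivWithin 3 h S q) MeasureTheory.volume 0 1 :=
    ContinuousOn.intervalIntegrable
      (((quant3_contOn hn hC_mono).mono huIcc01).mul (hf3c.mono huIcc01))
  have hintD : IntervalIntegrable
      (fun q => quant3 n D q * iteratedDerivWithin 3 h S q) MeasureTheory.volume 0 1 :=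
    ContinuousOn.intervalIntegrable
      (((quant3_contOn hn hD_mono).mono huIcc01).mul (hf3c.mono huIcc01))
  have hint : (∫ q in (0:ℝ)..1, quant3 n C q * iteratedDerivWithin 3 h S q)
      ≤ ∫ q in (0:ℝ)..1, quant3 n D q * iteratedDerivWithin 3 h S q := by
    apply intervalIntegral.integral_mono_on zero_le_one hintC hintD
    intro q hq
    exact mul_le_mul_of_nonneg_right (hdom q hq) (h_prudent q hq)
  rw [hCeq, hDeq, hmean, hsecond]
  linarith [hint]
end

section
/- Let w₀ ∈ ℝ, ℓ > 0 and ε > 0 with 2ε < ℓ. Let p : ℝ → (0,1) be differentiable with p'(e) < 0 for all e, and let h be a probability weighting function that is three times continuously differentiable on (0,1) with h''' ≥ 0 on (0,1). Define the dual-theory value of self-protection effort e in the presence of the background risk ±ε by V_ε(e) = (w₀ − ℓ − ε − e)·h(p(e)/2) + (w₀ − ℓ + ε − e)·(h(p(e)) − h(p(e)/2)) + (w₀ − ε − e)·(h((1+p(e))/2) − h(p(e))) + (w₀ + ε − e)·(1 − h((1+p(e))/2)). Suppose e₀ satisfies p(e₀) = 1/2 and −p'(e₀)·h'(p(e₀))·ℓ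 − 1 = 0 (the first-order condition of the problem without background risk). Then V_ε is differentiable at e₀ and V_ε'(e₀) ≥ 0; consequently, if V_ε is strictly concave and attains a maximum at e*, then e* ≥ e₀. -/
/-- Auxiliary: if `V` has nonnegative derivative at `e₀`, is strictly concave on `ℝ`,
and attains its maximum at `estar`, then `e₀ ≤ estar`. -/
theorem aux_strictConcave_max_ge {V : ℝ → ℝ} {e₀ D estar : ℝ}
    (HV : HasDerivAt V D e₀) (hD : 0 ≤ D)
    (scon : StrictConcaveOn ℝ Set.univ V) (hmax : ∀ e, V e ≤ V estar) :
    e₀ ≤ estar := by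
  by_contra hlt
  push_neg at hlt
  have hx₁lt : (estar + e₀) / 2 < e₀ := by linarith
  have hx₁ne : (estar + e₀) / 2 ≠ e₀ := ne_of_lt hx₁lt
  have hVx₁ : V e₀ < V ((estar + e₀) / 2) := by
    have hc := scon.2 (Set.mem_univ estar) (Set.mem_univ e₀) (ne_of_lt hlt)
      (by norm_num : (0:ℝ) < 1/2) (by norm_num : (0:ℝ) < 1/2)
      (by norm_num : (1:ℝ)/2 + 1/2 = 1)
    simp only [smul_eq_mul] at hc
    rw [show (1:ℝ)/2 * estar + 1/2 * e₀ = (estar + e₀)/2 by ring] at hc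
    linarith [hmax e₀]
  obtain ⟨m, hm, hmmul⟩ : ∃ m : ℝ, 0 < m ∧
      m * (e₀ - (estar + e₀)/2) = V ((estar + e₀)/2) - V e₀ := by
    refine ⟨(V ((estar + e₀)/2) - V e₀) / (e₀ - (estar + e₀)/2),
      div_pos (by linarith) (by linarith), ?_⟩
    exact div_mul_cancel₀ _ (by linarith)
  have key : ∀ x ∈ Set.Ioo ((estar + e₀)/2) e₀, slope V e₀ x ≤ -m := by
    intro x hx
    obtain ⟨hxl, hxr⟩ := hx
    obtain ⟨t, ht0, ht1, htmul⟩ : ∃ t : ℝ, 0 < t ∧ t < 1 ∧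
        t * (e₀ - (estar + e₀)/2) = e₀ - x := by
      refine ⟨(e₀ - x) / (e₀ - (estar + e₀)/2), div_pos (by linarith) (by linarith),
        (div_lt_one (by linarith)).2 (by linarith), ?_⟩
      exact div_mul_cancel₀ _ (by linarith)
    have hxcomb : t • ((estar + e₀)/2) + (1 - t) • e₀ = x := by
      simp only [smul_eq_mul]
      linear_combination (-1 : ℝ) * htmul
    have hc := scon.2 (Set.mem_univ ((estar + e₀)/2)) (Set.mem_univ e₀) hx₁ne ht0
      (by linarith : (0:ℝ) < 1 - t) (by ring : t + (1 - t) = 1)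
    rw [hxcomb] at hc
    simp only [smul_eq_mul] at hc
    rw [slope_def_field, div_le_iff_of_neg (by linarith : x - e₀ < 0)]
    have heq : -m * (x - e₀) = t * (V ((estar + e₀)/2)) - t * (V e₀) := by
      linear_combination (-m) * htmul + t * hmmul
    nlinarith [hc, heq]
  have htends : Filter.Tendsto (slope V e₀) (nhdsWithin e₀ (Set.Iio e₀)) (nhds D) :=
    (hasDerivAt_iff_tendsto_slope.mp HV).mono_left
      (nhdsWithin_mono _ (fun x hx => ne_of_lt hx))
  have hmem : Set.Ioo ((estar + e₀)/2) e₀ ∈ nhdsWithin e₀ (Set.Iio e₀) :=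
    Ioo_mem_nhdsLT_of_mem ⟨hx₁lt, le_refl e₀⟩
  have hle : D ≤ -m := le_of_tendsto htends (Filter.eventually_of_mem hmem key)
  linarith

/-- Self-protection with background risk, case `2ε < ℓ`: under dual prudence
(`h''' ≥ 0`), at an effort level `e₀` satisfying the first-order condition of the
problem without background risk (with `p(e₀) = 1/2`), the marginal dual-theory value
of effort with background risk is nonnegative; hence, if `V_ε` is strictly concave
and attains a maximum at `e*`, then `e* ≥ e₀`. -/
theorem self_protection_background_risk_small_eps
    (w₀ ℓ ε : ℝ) (hℓ : 0 < ℓ) (hε : 0 < ε) (hεℓ : 2 * ε < ℓ)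
    (p : ℝ → ℝ) (hp_range : ∀ e, p e ∈ Set.Ioo (0:ℝ) 1)
    (hp_diff : Differentiable ℝ p) (hp_deriv_neg : ∀ e, deriv p e < 0)
    (h : ℝ → ℝ) (h_mono : Monotone h) (h_zero : h 0 = 0) (h_one : h 1 = 1)
    (h_smooth : ContDiffOn ℝ 3 h (Set.Ioo 0 1))
    (h_prudent : ∀ q ∈ Set.Ioo (0:ℝ) 1, 0 ≤ iteratedDerivWithin 3 h (Set.Ioo 0 1) q)
    (V : ℝ → ℝ)
    (hV : ∀ e, V e = (w₀ - ℓ - ε - e) * h (p e / 2)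
        + (w₀ - ℓ + ε - e) * (h (p e) - h (p e / 2))
        + (w₀ - ε - e) * (h ((1 + p e) / 2) - h (p e))
        + (w₀ + ε - e) * (1 - h ((1 + p e) / 2)))
    (e₀ : ℝ) (he₀ : p e₀ = 1 / 2)
    (hfoc : -(deriv p e₀) * derivWithin h (Set.Ioo 0 1) (p e₀) * ℓ - 1 = 0) :
    DifferentiableAt ℝ V e₀ ∧ 0 ≤ deriv V e₀ ∧
      ∀ estar : ℝ, StrictConcaveOn ℝ Set.univ V → (∀ e, V e ≤ V estar) →
        e₀ ≤ estar := by
  have hVeq : V = fun e => (w₀ - ℓ - ε - e) * h (p e / 2)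
        + (w₀ - ℓ + ε - e) * (h (p e) - h (p e / 2))
        + (w₀ - ε - e) * (h ((1 + p e) / 2) - h (p e))
        + (w₀ + ε - e) * (1 - h ((1 + p e) / 2)) := funext hV
  subst hVeq
  set S : Set ℝ := Set.Ioo (0:ℝ) 1 with hSdef
  have hS : IsOpen S := isOpen_Ioo
  -- membership facts
  have hm1 : p e₀ / 2 ∈ S := by rw [he₀]; constructor <;> norm_num
  have hm2 : p e₀ ∈ S := hp_range e₀
  have hm3 : (1 + p e₀) / 2 ∈ S := by rw [he₀]; constructor <;> norm_num
  -- differentiability of h at the three points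
  have hdiffOn : DifferentiableOn ℝ h S := h_smooth.differentiableOn (by norm_num)
  have hder : ∀ q ∈ S, HasDerivAt h (deriv h q) q := fun q hq =>
    ((hdiffOn q hq).differentiableAt (hS.mem_nhds hq)).hasDerivAt
  set d1 := deriv h (p e₀ / 2) with hd1
  set d2 := deriv h (p e₀) with hd2
  set d3 := deriv h ((1 + p e₀) / 2) with hd3
  set x' := deriv p e₀ with hx'
  have hx'neg : x' < 0 := hp_deriv_neg e₀
  have hasp : HasDerivAt p x' e₀ := (hp_diff e₀).hasDerivAt
  -- the three composed derivatives
  have H1 : HasDerivAt (fun e => h (p e / 2)) (d1 * (x' / 2)) e₀ :=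
    (hder _ hm1).comp e₀ (hasp.div_const 2)
  have H2 : HasDerivAt (fun e => h (p e)) (d2 * x') e₀ :=
    (hder _ hm2).comp e₀ hasp
  have H3 : HasDerivAt (fun e => h ((1 + p e) / 2)) (d3 * (x' / 2)) e₀ :=
    (hder _ hm3).comp e₀ ((hasp.const_add 1).div_const 2)
  have A1 : HasDerivAt (fun e : ℝ => w₀ - ℓ - ε - e) (-1) e₀ := by
    simpa using (hasDerivAt_id e₀).const_sub (w₀ - ℓ - ε)
  have A2 : HasDerivAt (fun e : ℝ => w₀ - ℓ + ε - e) (-1) e₀ := by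
    simpa using (hasDerivAt_id e₀).const_sub (w₀ - ℓ + ε)
  have A3 : HasDerivAt (fun e : ℝ => w₀ - ε - e) (-1) e₀ := by
    simpa using (hasDerivAt_id e₀).const_sub (w₀ - ε)
  have A4 : HasDerivAt (fun e : ℝ => w₀ + ε - e) (-1) e₀ := by
    simpa using (hasDerivAt_id e₀).const_sub (w₀ + ε)
  have HV := (((A1.mul H1).add (A2.mul (H2.sub H1))).add
      (A3.mul (H3.sub H2))).add (A4.mul ((hasDerivAt_const e₀ (1:ℝ)).sub H3))
  -- convexity of deriv h on S
  have hd1c : ContDiffOn ℝ 2 (deriv h) S := h_smooth.deriv_of_isOpen hS (by norm_num)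
  have hd2c : ContDiffOn ℝ 1 (deriv (deriv h)) S := hd1c.deriv_of_isOpen hS (by norm_num)
  have hpr : ∀ x ∈ S, 0 ≤ deriv^[2] (deriv h) x := by
    intro x hx
    have h0 := h_prudent x hx
    rw [iteratedDerivWithin_eq_iteratedFDerivWithin,
      iteratedFDerivWithin_of_isOpen 3 hS hx] at h0
    have h1 : iteratedDeriv 3 h x = iteratedFDeriv ℝ 3 h x fun _ => 1 :=
      iteratedDeriv_eq_iteratedFDeriv
    rw [← h1, iteratedDeriv_eq_iterate] at h0
    exact h0
  have hcx : ConvexOn ℝ S (deriv h) := by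
    apply convexOn_of_deriv2_nonneg (convex_Ioo 0 1) hd1c.continuousOn
    · rw [hS.interior_eq]; exact hd1c.differentiableOn (by norm_num)
    · rw [hS.interior_eq]; exact hd2c.differentiableOn (by norm_num)
    · rw [hS.interior_eq]; exact hpr
  have hconv : 2 * d2 ≤ d1 + d3 := by
    have hq1 : ((1:ℝ)/4) ∈ S := by constructor <;> norm_num
    have hq3 : ((3:ℝ)/4) ∈ S := by constructor <;> norm_num
    have hmid := hcx.2 hq1 hq3 (by norm_num : (0:ℝ) ≤ 1/2) (by norm_num : (0:ℝ) ≤ 1/2)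
      (by norm_num : (1:ℝ)/2 + 1/2 = 1)
    simp only [smul_eq_mul] at hmid
    rw [show (1:ℝ)/2 * (1/4) + 1/2 * (3/4) = 1/2 by norm_num] at hmid
    have e1 : p e₀ / 2 = (1:ℝ)/4 := by rw [he₀]; norm_num
    have e2 : (1 + p e₀) / 2 = (3:ℝ)/4 := by rw [he₀]; norm_num
    rw [hd1, hd2, hd3, e1, e2, he₀]
    linarith
  -- first order condition in terms of deriv
  have hfoc' : -x' * d2 * ℓ - 1 = 0 := by
    rwa [derivWithin_of_isOpen hS hm2] at hfoc
  -- nonnegativity of the marginal value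
  have hD0 : 0 ≤ -1 * h (p e₀ / 2) + (w₀ - ℓ - ε - e₀) * (d1 * (x' / 2)) +
      (-1 * (h (p e₀) - h (p e₀ / 2)) + (w₀ - ℓ + ε - e₀) * (d2 * x' - d1 * (x' / 2))) +
      (-1 * (h ((1 + p e₀) / 2) - h (p e₀)) +
        (w₀ - ε - e₀) * (d3 * (x' / 2) - d2 * x')) +
      (-1 * (1 - h ((1 + p e₀) / 2)) + (w₀ + ε - e₀) * (0 - d3 * (x' / 2))) := by
    have hprod : 0 ≤ (-x') * ε * (d1 + d3 - 2 * d2) :=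
      mul_nonneg (mul_nonneg (by linarith) hε.le) (by linarith)
    nlinarith [hprod, hfoc']
  refine ⟨HV.differentiableAt, ?_, ?_⟩
  · exact hD0.trans_eq HV.deriv.symm
  · intro estar scon hmax
    exact aux_strictConcave_max_ge HV hD0 scon hmax
end

section
/- Let w₀ ∈ ℝ, ℓ > 0 and ε > 0 with 2ε > ℓ. Let p : ℝ → (0,1) be differentiable with p'(e) < 0 for all e, and let h be a probability weighting function that is three times continuously differentiable on (0,1) with h''' ≥ 0 on (0,1). Define the dual-theory value of self-protection effort e in the presence of the background risk ±ε by V_ε(e) = (w₀ − ℓ − ε − e)·h(p(e)/2) + (w₀ − ε − e)·(h(1/2) − h(p(e)/2)) + (w₀ − ℓ + ε − e)·(h((1+p(e))/2) − h(1/2)) + (w₀ + ε − e)·(1 − h((1+p(e))/2)). Suppose e₀ satisfies p(e₀) = 1/2 and −p'(e₀)·h'(p(e₀))·ℓ − 1 = 0 (the first-order condition of the problem without background risk). Then V_ε is differentiable at e₀ and V_ε'(e₀) ≥ 0; consequently, if V_ε is strictly concave and attains a maximum at e*, then e* ≥ e₀. -/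
/-- Self-protection with background risk, case `2ε > ℓ`: under dual prudence
(`h''' ≥ 0`), at an effort level `e₀` satisfying the first-order condition of the
problem without background risk (with `p(e₀) = 1/2`), the marginal dual-theory value
of effort with background risk is nonnegative; hence, if `V_ε` is strictly concave
and attains a maximum at `e*`, then `e* ≥ e₀`. -/
theorem self_protection_background_risk_large_eps
    (w₀ ℓ ε : ℝ) (hℓ : 0 < ℓ) (hε : 0 < ε) (hεℓ : 2 * ε > ℓ)
    (p : ℝ → ℝ) (hp_range : ∀ e, p e ∈ Set.Ioo (0:ℝ) 1)
    (hp_diff : Differentiable ℝ p) (hp_deriv_neg : ∀ e, deriv p e < 0)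
    (h : ℝ → ℝ) (h_mono : Monotone h) (h_zero : h 0 = 0) (h_one : h 1 = 1)
    (h_smooth : ContDiffOn ℝ 3 h (Set.Ioo 0 1))
    (h_prudent : ∀ q ∈ Set.Ioo (0:ℝ) 1, 0 ≤ iteratedDerivWithin 3 h (Set.Ioo 0 1) q)
    (V : ℝ → ℝ)
    (hV : ∀ e, V e = (w₀ - ℓ - ε - e) * h (p e / 2)
        + (w₀ - ε - e) * (h (1 / 2) - h (p e / 2))
        + (w₀ - ℓ + ε - e) * (h ((1 + p e) / 2) - h (1 / 2))
        + (w₀ + ε - e) * (1 - h ((1 + p e) / 2)))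
    (e₀ : ℝ) (he₀ : p e₀ = 1 / 2)
    (hfoc : -(deriv p e₀) * derivWithin h (Set.Ioo 0 1) (p e₀) * ℓ - 1 = 0) :
    DifferentiableAt ℝ V e₀ ∧ 0 ≤ deriv V e₀ ∧
      ∀ estar : ℝ, StrictConcaveOn ℝ Set.univ V → (∀ e, V e ≤ V estar) →
        e₀ ≤ estar := by
  have hIoo : IsOpen (Set.Ioo (0:ℝ) 1) := isOpen_Ioo
  have h14 : (1/4:ℝ) ∈ Set.Ioo (0:ℝ) 1 := by norm_num
  have h12 : (1/2:ℝ) ∈ Set.Ioo (0:ℝ) 1 := by norm_num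
  have h34 : (3/4:ℝ) ∈ Set.Ioo (0:ℝ) 1 := by norm_num
  have q1 : p e₀ / 2 = 1/4 := by rw [he₀]; norm_num
  have q2 : (1 + p e₀) / 2 = 3/4 := by rw [he₀]; norm_num
  have hdOn : DifferentiableOn ℝ h (Set.Ioo 0 1) := h_smooth.differentiableOn (by norm_num)
  have hdiffAt : ∀ q ∈ Set.Ioo (0:ℝ) 1, DifferentiableAt ℝ h q := fun q hq =>
    (hdOn q hq).differentiableAt (hIoo.mem_nhds hq)
  -- convexity of deriv h on (0,1)
  have hC2 : ContDiffOn ℝ 2 (deriv h) (Set.Ioo 0 1) := by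
    have := h_smooth.deriv_of_isOpen hIoo (m := 2) (by norm_num)
    exact this
  have hC1 : ContDiffOn ℝ 1 (deriv (deriv h)) (Set.Ioo 0 1) := by
    have := hC2.deriv_of_isOpen hIoo (m := 1) (by norm_num)
    exact this
  have hconv : ConvexOn ℝ (Set.Ioo 0 1) (deriv h) := by
    apply convexOn_of_deriv2_nonneg (convex_Ioo 0 1) hC2.continuousOn
    · rw [interior_Ioo]; exact hC2.differentiableOn (by norm_num)
    · rw [interior_Ioo]; exact hC1.differentiableOn (by norm_num)
    · intro x hx
      rw [interior_Ioo] at hx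
      have hp3 := h_prudent x hx
      have heq : iteratedDerivWithin 3 h (Set.Ioo 0 1) x = iteratedDeriv 3 h x := by
        rw [iteratedDerivWithin_eq_iteratedFDerivWithin, iteratedDeriv_eq_iteratedFDeriv,
            iteratedFDerivWithin_of_isOpen 3 hIoo hx]
      rw [heq, iteratedDeriv_eq_iterate] at hp3
      have h32 : deriv^[3] h x = deriv^[2] (deriv h) x := by
        rw [show (3:ℕ) = 2 + 1 from rfl, Function.iterate_succ_apply]
      show 0 ≤ deriv^[2] (deriv h) x
      rw [← h32]; exact hp3
  -- midpoint convexity inequality for deriv h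
  have key : deriv h (1/2) ≤ (deriv h (1/4) + deriv h (3/4)) / 2 := by
    have := hconv.2 h14 h34 (by norm_num : (0:ℝ) ≤ 1/2) (by norm_num : (0:ℝ) ≤ 1/2)
      (by norm_num : (1:ℝ)/2 + 1/2 = 1)
    simp only [smul_eq_mul] at this
    norm_num at this
    linarith
  -- derivative of V at e₀
  have hVfun : V = fun e => (w₀ - ℓ - ε - e) * h (p e / 2)
        + (w₀ - ε - e) * (h (1 / 2) - h (p e / 2))
        + (w₀ - ℓ + ε - e) * (h ((1 + p e) / 2) - h (1 / 2))
        + (w₀ + ε - e) * (1 - h ((1 + p e) / 2)) := funext hV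
  set P' := deriv p e₀ with hP'
  have hp0 : HasDerivAt p P' e₀ := (hp_diff e₀).hasDerivAt
  have hh1 : HasDerivAt h (deriv h (p e₀ / 2)) (p e₀ / 2) := by
    rw [q1]; exact (hdiffAt _ h14).hasDerivAt
  have hh3 : HasDerivAt h (deriv h ((1 + p e₀) / 2)) ((1 + p e₀) / 2) := by
    rw [q2]; exact (hdiffAt _ h34).hasDerivAt
  have hA : HasDerivAt (fun e => h (p e / 2)) (deriv h (p e₀ / 2) * (P' / 2)) e₀ := by
    have inner : HasDerivAt (fun e => p e / 2) (P' / 2) e₀ := hp0.div_const 2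
    exact HasDerivAt.comp e₀ hh1 inner
  have hB : HasDerivAt (fun e => h ((1 + p e) / 2)) (deriv h ((1 + p e₀) / 2) * (P' / 2)) e₀ := by
    have inner : HasDerivAt (fun e => (1 + p e) / 2) (P' / 2) e₀ := by
      have : HasDerivAt (fun e => 1 + p e) P' e₀ := hp0.const_add 1
      simpa using this.div_const 2
    exact HasDerivAt.comp e₀ hh3 inner
  have hid : HasDerivAt (fun e : ℝ => e) 1 e₀ := hasDerivAt_id e₀
  have T1 := (((hasDerivAt_const e₀ (w₀ - ℓ - ε)).sub hid).mul hA)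
  have T2 := (((hasDerivAt_const e₀ (w₀ - ε)).sub hid).mul
      ((hasDerivAt_const e₀ (h (1/2))).sub hA))
  have T3 := (((hasDerivAt_const e₀ (w₀ - ℓ + ε)).sub hid).mul
      (hB.sub (hasDerivAt_const e₀ (h (1/2)))))
  have T4 := (((hasDerivAt_const e₀ (w₀ + ε)).sub hid).mul
      ((hasDerivAt_const e₀ (1:ℝ)).sub hB))
  have hVd : HasDerivAt V
      (((0 - 1) * h (p e₀ / 2) + (w₀ - ℓ - ε - e₀) * (deriv h (p e₀ / 2) * (P' / 2))
        + ((0 - 1) * (h (1/2) - h (p e₀ / 2)) + (w₀ - ε - e₀) * (0 - deriv h (p e₀ / 2) * (P' / 2)))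
        + ((0 - 1) * (h ((1 + p e₀) / 2) - h (1/2))
            + (w₀ - ℓ + ε - e₀) * (deriv h ((1 + p e₀) / 2) * (P' / 2) - 0)))
        + ((0 - 1) * (1 - h ((1 + p e₀) / 2))
            + (w₀ + ε - e₀) * (0 - deriv h ((1 + p e₀) / 2) * (P' / 2)))) e₀ := by
    rw [hVfun]
    exact ((T1.add T2).add T3).add T4
  have hdiff : DifferentiableAt ℝ V e₀ := hVd.differentiableAt
  have hderiv := hVd.deriv
  have hfoc' : -P' * deriv h (1/2) * ℓ - 1 = 0 := by
    rw [he₀] at hfoc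
    rwa [derivWithin_of_mem_nhds (hIoo.mem_nhds h12)] at hfoc
  have hP'neg : P' < 0 := hp_deriv_neg e₀
  have hpos : 0 ≤ deriv V e₀ := by
    rw [hderiv, q1, q2]
    nlinarith [mul_le_mul_of_nonpos_left key (mul_nonpos_of_nonpos_of_nonneg hP'neg.le hℓ.le)]
  refine ⟨hdiff, hpos, ?_⟩
  intro estar hconc hmax
  by_contra hlt
  push_neg at hlt
  have hslope := hconc.deriv_lt_slope (Set.mem_univ estar) (Set.mem_univ e₀) hlt hdiff
  have hsle : slope V estar e₀ ≤ 0 := by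
    rw [slope_def_field]
    have : V e₀ - V estar ≤ 0 := sub_nonpos.mpr (hmax e₀)
    exact div_nonpos_of_nonpos_of_nonneg this (by linarith)
  linarith
end
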